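/- arXiv:2509.15534 — 14 statements merged into one kernel-verified Lean document; each statement's English description precedes it below -/
import Mathlib

section
/- Let 0 ≤ α ≤ 1 and let f be in the class BS(α) with Taylor expansion f(z) = z + Σ_{n≥2} a_n z^n about 0. Then |a_2| ≤ 1. -/
open Metric Filter Topology

private theorem aux_series (f : ℂ → ℂ) (a : ℕ → ℂ)
    (ha : ∀ z ∈ ball (0 : ℂ) 1, HasSum (fun n : ℕ => a n * z ^ n) (f z)) :
    HasFPowerSeriesAt f (FormalMultilinearSeries.ofScalars ℂ a) 0 := by
  have hcoeff : ∀ n, (FormalMultilinearSeries.ofScalars ℂ a).coeff n = a n := by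
    intro n
    simp [FormalMultilinearSeries.coeff, FormalMultilinearSeries.ofScalars,
      List.ofFn_const, Pi.one_def]
  rw [hasFPowerSeriesAt_iff]
  filter_upwards [ball_mem_nhds (0:ℂ) one_pos] with z hz
  have h := ha z hz
  have hc : (fun n : ℕ => z ^ n • (FormalMultilinearSeries.ofScalars ℂ a).coeff n)
      = fun n => a n * z ^ n := by
    funext n; rw [hcoeff]; simp [mul_comm]
  rw [zero_add, hc]
  exact h

private theorem aux_slope (g : ℂ → ℂ) (hg : DifferentiableAt ℂ g 0) (hg0 : g 0 = 0) :
    Tendsto (fun z => g z / z) (𝓝[≠] (0:ℂ)) (𝓝 (deriv g 0)) := by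
  have h := hg.hasDerivAt
  rw [hasDerivAt_iff_tendsto_slope] at h
  refine h.congr' ?_
  filter_upwards [] with z
  simp [slope, hg0, div_eq_inv_mul]

private theorem aux_quad (f : ℂ → ℂ) (q : FormalMultilinearSeries ℂ ℂ ℂ)
    (hq : HasFPowerSeriesAt f q 0)
    (h0 : q.coeff 0 = 0) (h1 : q.coeff 1 = 1) :
    Tendsto (fun z => (f z - z) / z ^ 2) (𝓝[≠] (0:ℂ)) (𝓝 (q.coeff 2)) := by
  have hO := hq.isBigO_sub_partialSum_pow 3
  have hps : ∀ y : ℂ, q.partialSum 3 y = y + q.coeff 2 * y ^ 2 := by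
    intro y
    simp [FormalMultilinearSeries.partialSum, Finset.sum_range_succ,
      FormalMultilinearSeries.apply_eq_pow_smul_coeff, h0, h1, smul_eq_mul]
    ring
  simp only [zero_add, hps] at hO
  obtain ⟨C, hC⟩ := hO.bound
  rw [show 𝓝 (q.coeff 2) = 𝓝 (q.coeff 2 + 0) by rw [add_zero]]
  have key : Tendsto (fun z : ℂ => (f z - (z + q.coeff 2 * z ^ 2)) / z ^ 2) (𝓝[≠] (0:ℂ)) (𝓝 0) := by
    apply squeeze_zero_norm' (a := fun z : ℂ => C * ‖z‖)
    · filter_upwards [hC.filter_mono nhdsWithin_le_nhds, self_mem_nhdsWithin] with z hz hz0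
      have hz0' : z ≠ 0 := hz0
      rw [norm_div]
      have hzpos : (0:ℝ) < ‖z ^ 2‖ := by
        rw [norm_pow]; exact pow_pos (norm_pos_iff.mpr hz0') 2
      rw [div_le_iff₀ hzpos]
      calc ‖f z - (z + q.coeff 2 * z ^ 2)‖ ≤ C * ‖z‖ ^ 3 := by simpa using hz
        _ = C * ‖z‖ * ‖z ^ 2‖ := by rw [norm_pow]; ring
    · have : Tendsto (fun z : ℂ => C * ‖z‖) (𝓝 (0:ℂ)) (𝓝 (C * ‖(0:ℂ)‖)) :=
        (tendsto_norm.comp tendsto_id).const_mul C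
      simpa using this.mono_left nhdsWithin_le_nhds
  have := key.const_add (q.coeff 2)
  refine this.congr' ?_
  filter_upwards [self_mem_nhdsWithin] with z hz0
  have hz : (z:ℂ) ≠ 0 := hz0
  field_simp
  ring

/-- |a₂| ≤ 1 for f ∈ BS(α), 0 ≤ α ≤ 1 -/
theorem stmt_0 (α : ℝ) (hα0 : 0 ≤ α) (hα1 : α ≤ 1)
    (f ω : ℂ → ℂ) (a : ℕ → ℂ)
    -- f is analytic on the unit disk with f(0) = 0, f'(0) = 1, f(z) ≠ 0 for z ≠ 0
    (hf : AnalyticOnNhd ℂ f (ball 0 1))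
    (hf0 : f 0 = 0) (hf1 : deriv f 0 = 1)
    (hfz : ∀ z ∈ ball (0 : ℂ) 1, z ≠ 0 → f z ≠ 0)
    -- ω is a Schwarz function
    (hω : AnalyticOnNhd ℂ ω (ball 0 1))
    (hω0 : ω 0 = 0)
    (hωb : ∀ z ∈ ball (0 : ℂ) 1, ω z ∈ ball (0 : ℂ) 1)
    -- f ∈ BS(α): z f'(z)/f(z) - 1 = ω(z)/(1 - α ω(z)²)
    (heq : ∀ z ∈ ball (0 : ℂ) 1, z ≠ 0 →
      z * deriv f z / f z - 1 = ω z / (1 - (α : ℂ) * ω z ^ 2))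
    -- Taylor expansion f(z) = z + Σ_{n ≥ 2} aₙ zⁿ on the unit disk
    (ha : ∀ z ∈ ball (0 : ℂ) 1, HasSum (fun n : ℕ => a n * z ^ n) (f z))
    (ha0 : a 0 = 0) (ha1 : a 1 = 1) :
    ‖a 2‖ ≤ 1 := by
  have h01 : (0:ℂ) ∈ ball (0:ℂ) 1 := by simp
  have hcoeff : ∀ n, (FormalMultilinearSeries.ofScalars ℂ a).coeff n = a n := by
    intro n
    simp [FormalMultilinearSeries.coeff, FormalMultilinearSeries.ofScalars,
      List.ofFn_const, Pi.one_def]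
  have hq := aux_series f a ha
  set q := FormalMultilinearSeries.ofScalars ℂ a with hqdef
  -- second derivative
  have hdd : deriv (deriv f) 0 = 2 * a 2 := by
    obtain ⟨r, hqr⟩ := hq
    have h2 := hqr.factorial_smul (1:ℂ) 2
    have happ : q 2 (fun _ => (1:ℂ)) = a 2 := by
      rw [FormalMultilinearSeries.ofScalars_apply_eq]; simp
    rw [happ] at h2
    have : iteratedDeriv 2 f 0 = 2 * a 2 := by
      rw [iteratedDeriv_eq_iteratedFDeriv, ← h2]
      simp
    rw [← this, iteratedDeriv_succ, iteratedDeriv_one]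
  -- limits
  have hdf : AnalyticOnNhd ℂ (deriv f) (ball 0 1) := hf.deriv
  have t1 : Tendsto (fun z => f z / z) (𝓝[≠] (0:ℂ)) (𝓝 1) := by
    have := aux_slope f (hf 0 h01).differentiableAt hf0
    rwa [hf1] at this
  have t2 : Tendsto (fun z => (deriv f z - 1) / z) (𝓝[≠] (0:ℂ)) (𝓝 (2 * a 2)) := by
    have := aux_slope (fun z => deriv f z - 1)
      ((hdf 0 h01).differentiableAt.sub_const 1) (by simp [hf1])
    have hder : deriv (fun z => deriv f z - 1) 0 = 2 * a 2 := by
      rw [deriv_sub_const, hdd]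
    rwa [hder] at this
  have t3 : Tendsto (fun z => (f z - z) / z ^ 2) (𝓝[≠] (0:ℂ)) (𝓝 (a 2)) := by
    have := aux_quad f q hq (by rw [hcoeff 0, ha0]) (by rw [hcoeff 1, ha1])
    rwa [hcoeff 2] at this
  have t4 : Tendsto (fun z => (z * deriv f z - f z) / z ^ 2) (𝓝[≠] (0:ℂ)) (𝓝 (a 2)) := by
    have h := t2.sub t3
    rw [show 2 * a 2 - a 2 = a 2 by ring] at h
    refine h.congr' ?_
    filter_upwards [self_mem_nhdsWithin] with z hz0
    have hz : (z:ℂ) ≠ 0 := hz0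
    field_simp
    ring
  have t5 : Tendsto (fun z => (z * deriv f z / f z - 1) / z) (𝓝[≠] (0:ℂ)) (𝓝 (a 2)) := by
    have hinv : Tendsto (fun z => z / f z) (𝓝[≠] (0:ℂ)) (𝓝 1) := by
      have := t1.inv₀ one_ne_zero
      rw [inv_one] at this
      refine this.congr' ?_
      filter_upwards [] with z
      rw [inv_div]
    have h := t4.mul hinv
    rw [mul_one] at h
    refine h.congr' ?_
    filter_upwards [self_mem_nhdsWithin,
      eventually_nhdsWithin_of_eventually_nhds (ball_mem_nhds (0:ℂ) one_pos)] with z hz0 hzb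
    have hz : (z:ℂ) ≠ 0 := hz0
    have hfz' : f z ≠ 0 := hfz z hzb hz
    field_simp
  have t6 : Tendsto (fun z => (ω z / (1 - (α:ℂ) * ω z ^ 2)) / z) (𝓝[≠] (0:ℂ)) (𝓝 (deriv ω 0)) := by
    have hωt : Tendsto (fun z => ω z / z) (𝓝[≠] (0:ℂ)) (𝓝 (deriv ω 0)) :=
      aux_slope ω (hω 0 h01).differentiableAt hω0
    have hden : Tendsto (fun z => 1 - (α:ℂ) * ω z ^ 2) (𝓝[≠] (0:ℂ)) (𝓝 1) := by
      have hc : ContinuousAt (fun z => 1 - (α:ℂ) * ω z ^ 2) 0 := by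
        have := (hω 0 h01).continuousAt
        fun_prop
      have h2 : Tendsto (fun z => 1 - (α:ℂ) * ω z ^ 2) (𝓝[≠] (0:ℂ))
          (𝓝 (1 - (α:ℂ) * ω 0 ^ 2)) := hc.tendsto.mono_left nhdsWithin_le_nhds
      simpa [hω0] using h2
    have h := hωt.div hden one_ne_zero
    rw [div_one] at h
    refine h.congr' ?_
    filter_upwards [] with z
    simp only [Pi.div_apply, div_div, mul_comm]
  -- the two limits agree
  have hkey : a 2 = deriv ω 0 := by
    refine tendsto_nhds_unique ?_ t6
    refine t5.congr' ?_
    filter_upwards [self_mem_nhdsWithin,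
      eventually_nhdsWithin_of_eventually_nhds (ball_mem_nhds (0:ℂ) one_pos)] with z hz0 hzb
    rw [heq z hzb hz0]
  -- Schwarz lemma
  rw [hkey]
  have hmaps : Set.MapsTo ω (ball (0:ℂ) 1) (ball (0:ℂ) 1) := fun z hz => hωb z hz
  exact Complex.norm_deriv_le_one_of_mapsTo_ball hω.differentiableOn
    (fun z hz => by rw [hω0]; exact ball_subset_closedBall (hmaps hz)) one_pos
end

section
/- Let 0 ≤ α ≤ 1 and let f be in the class BS(α) with Taylor expansion f(z) = z + Σ_{n≥2} a_n z^n about 0. Then |a_3| ≤ 1/2. -/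
open Metric

lemma mobius_lt_one {c u : ℂ} (hc : ‖c‖ < 1) (hu : ‖u‖ < 1) :
    ‖(u - c) / (1 - (starRingEnd ℂ) c * u)‖ < 1 := by
  have hcn : Complex.normSq c < 1 := by
    rw [← Complex.sq_norm]; nlinarith [norm_nonneg c]
  have hun : Complex.normSq u < 1 := by
    rw [← Complex.sq_norm]; nlinarith [norm_nonneg u]
  have hden : Complex.normSq (u - c) < Complex.normSq (1 - (starRingEnd ℂ) c * u) := by
    simp only [Complex.normSq_apply, Complex.sub_re, Complex.sub_im, Complex.mul_re,
      Complex.mul_im, Complex.one_re, Complex.one_im, Complex.conj_re, Complex.conj_im]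
    simp only [Complex.normSq_apply] at hcn hun
    nlinarith [mul_pos (sub_pos.2 hcn) (sub_pos.2 hun)]
  have hd0 : (1 - (starRingEnd ℂ) c * u) ≠ 0 := by
    intro h
    rw [h] at hden
    simp [Complex.normSq_nonneg] at hden
    exact absurd hden (not_lt.2 (Complex.normSq_nonneg _))
  rw [norm_div, div_lt_one (norm_pos_iff.mpr hd0)]
  rw [← Real.sqrt_lt_sqrt_iff (Complex.normSq_nonneg _)] at hden
  simpa [Complex.norm_def] using hden

lemma schwarz_pick_zero {h : ℂ → ℂ} (hd : DifferentiableOn ℂ h (ball 0 1))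
    (hb : ∀ z ∈ ball (0:ℂ) 1, ‖h z‖ ≤ 1) :
    ‖deriv h 0‖ ≤ 1 - ‖h 0‖ ^ 2 := by
  have h0m : (0:ℂ) ∈ ball (0:ℂ) 1 := mem_ball_self one_pos
  have key : ∀ t : ℝ, 0 < t → t < 1 →
      t * ‖deriv h 0‖ ≤ 1 - t^2 * ‖h 0‖ ^ 2 := by
    intro t ht0 ht1
    set c : ℂ := (t:ℂ) * h 0 with hc_def
    have habs_th : ∀ z ∈ ball (0:ℂ) 1, ‖(t:ℂ) * h z‖ < 1 := by
      intro z hz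
      have := hb z hz
      have : ‖(t:ℂ) * h z‖ = t * ‖h z‖ := by
        simp [map_mul, Complex.norm_real, Real.norm_eq_abs, abs_of_pos ht0]
      rw [this]
      nlinarith [hb z hz, norm_nonneg (h z)]
    have hcabs : ‖c‖ < 1 := habs_th 0 h0m
    have hden : ∀ z ∈ ball (0:ℂ) 1, (1 - (starRingEnd ℂ) c * ((t:ℂ) * h z)) ≠ 0 := by
      intro z hz hcon
      have h1 : ‖(starRingEnd ℂ) c * ((t:ℂ) * h z)‖ < 1 := by
        rw [norm_mul, Complex.norm_conj]
        nlinarith [habs_th z hz, norm_nonneg c, norm_nonneg ((t:ℂ) * h z)]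
      have : (starRingEnd ℂ) c * ((t:ℂ) * h z) = 1 := by linear_combination -hcon
      rw [this] at h1; simp at h1
    set g : ℂ → ℂ := fun z => ((t:ℂ) * h z - c) / (1 - (starRingEnd ℂ) c * ((t:ℂ) * h z))
      with hg_def
    have hg0 : g 0 = 0 := by simp [hg_def, hc_def]
    have hgd : DifferentiableOn ℂ g (ball 0 1) := by
      apply DifferentiableOn.div
      · exact (hd.const_mul _).sub_const c
      · exact (differentiableOn_const _).sub ((differentiableOn_const _).mul (hd.const_mul _))
      · exact hden
    have hgm : Set.MapsTo g (ball 0 1) (ball (g 0) 1) := by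
      intro z hz
      rw [hg0, mem_ball_zero_iff]
      exact mobius_lt_one hcabs (habs_th z hz)
    have hsch := Complex.norm_deriv_le_div_of_mapsTo_ball hgd (hgm.mono_right ball_subset_closedBall) one_pos
    -- compute deriv g 0
    have hh0 : HasDerivAt h (deriv h 0) 0 :=
      (hd.differentiableAt (ball_mem_nhds _ one_pos)).hasDerivAt
    have hnum : HasDerivAt (fun z => (t:ℂ) * h z - c) ((t:ℂ) * deriv h 0) 0 :=
      (hh0.const_mul _).sub_const c
    have hdenD : HasDerivAt (fun z => 1 - (starRingEnd ℂ) c * ((t:ℂ) * h z))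
        (-((starRingEnd ℂ) c * ((t:ℂ) * deriv h 0))) 0 := by
      simpa using (((hh0.const_mul ((t:ℂ))).const_mul ((starRingEnd ℂ) c)).const_sub 1)
    have hgderiv : HasDerivAt g
        (((t:ℂ) * deriv h 0 * (1 - (starRingEnd ℂ) c * ((t:ℂ) * h 0)) -
          ((t:ℂ) * h 0 - c) * -((starRingEnd ℂ) c * ((t:ℂ) * deriv h 0))) /
          (1 - (starRingEnd ℂ) c * ((t:ℂ) * h 0)) ^ 2) 0 :=
      hnum.div hdenD (hden 0 h0m)
    have hgval : deriv g 0 = (t:ℂ) * deriv h 0 / (1 - (starRingEnd ℂ) c * c) := by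
      rw [hgderiv.deriv]
      rw [← hc_def]
      have hne := hden 0 h0m
      rw [← hc_def] at hne
      rw [div_eq_div_iff (pow_ne_zero 2 hne) hne]
      ring
    rw [hgval] at hsch
    have hcc : (1 : ℂ) - (starRingEnd ℂ) c * c = ((1 - Complex.normSq c : ℝ) : ℂ) := by
      push_cast
      rw [← Complex.normSq_eq_conj_mul_self]
    have hnpos : (0:ℝ) < 1 - Complex.normSq c := by
      rw [← Complex.sq_norm]; nlinarith [norm_nonneg c]
    rw [norm_div, hcc, Complex.norm_real, Real.norm_eq_abs, abs_of_pos hnpos, div_le_div_iff₀ hnpos one_pos] at hsch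
    have habsth : ‖(t:ℂ) * deriv h 0‖ = t * ‖deriv h 0‖ := by
      simp [map_mul, Complex.norm_real, Real.norm_eq_abs, abs_of_pos ht0]
    have hnsq : Complex.normSq c = t^2 * ‖h 0‖^2 := by
      rw [← Complex.sq_norm, hc_def, norm_mul, Complex.norm_real, Real.norm_eq_abs, abs_of_pos ht0]
      ring
    rw [habsth, hnsq] at hsch
    linarith
  -- limit as t → 1⁻
  have htend : Filter.Tendsto
      (fun t : ℝ => 1 - t^2 * ‖h 0‖ ^ 2 - t * ‖deriv h 0‖)
      (nhdsWithin 1 (Set.Iio 1)) (nhds (1 - ‖h 0‖ ^ 2 - ‖deriv h 0‖)) := by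
    have : Filter.Tendsto
        (fun t : ℝ => 1 - t^2 * ‖h 0‖ ^ 2 - t * ‖deriv h 0‖)
        (nhds 1) (nhds (1 - 1^2 * ‖h 0‖ ^ 2 - 1 * ‖deriv h 0‖)) := by
      apply Filter.Tendsto.sub
      apply Filter.Tendsto.sub tendsto_const_nhds
      exact (((continuous_pow 2).tendsto 1).mul_const _)
      exact (continuous_id.tendsto 1).mul_const _
    simpa using this.mono_left nhdsWithin_le_nhds
  have hev : ∀ᶠ t in nhdsWithin (1:ℝ) (Set.Iio 1),
      0 ≤ 1 - t^2 * ‖h 0‖ ^ 2 - t * ‖deriv h 0‖ := by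
    filter_upwards [self_mem_nhdsWithin,
      eventually_nhdsWithin_of_eventually_nhds (eventually_gt_nhds (by norm_num : (0:ℝ) < 1))]
      with t ht1 ht0
    have := key t ht0 ht1
    linarith
  have hlim := ge_of_tendsto htend hev
  linarith

lemma schwarz_coeff {ω : ℂ → ℂ} (hω : AnalyticOnNhd ℂ ω (ball 0 1)) (hω0 : ω 0 = 0)
    (hωb : ∀ z ∈ ball (0:ℂ) 1, ω z ∈ ball (0:ℂ) 1) :
    ‖deriv (deriv ω) 0‖ ≤ 2 * (1 - ‖deriv ω 0‖ ^ 2) := by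
  have h0m : (0:ℂ) ∈ ball (0:ℂ) 1 := mem_ball_self one_pos
  set h : ℂ → ℂ := dslope ω 0 with hh_def
  have hωdiff : DifferentiableOn ℂ ω (ball 0 1) := hω.differentiableOn
  have hdiff : DifferentiableOn ℂ h (ball 0 1) :=
    (Complex.differentiableOn_dslope (ball_mem_nhds _ one_pos)).mpr hωdiff
  have hmaps : Set.MapsTo ω (ball 0 1) (ball (ω 0) 1) := by
    rw [hω0]; exact fun z hz => hωb z hz
  have hb : ∀ z ∈ ball (0:ℂ) 1, ‖h z‖ ≤ 1 := by
    intro z hz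
    have := Complex.norm_dslope_le_div_of_mapsTo_ball hωdiff (hmaps.mono_right ball_subset_closedBall) hz
    simpa using this
  have hSP := schwarz_pick_zero hdiff hb
  have hh0 : h 0 = deriv ω 0 := dslope_same ω 0
  -- h analytic at 0
  have hωan : AnalyticAt ℂ ω 0 := hω 0 h0m
  obtain ⟨p, hp⟩ := hωan
  have hhan : AnalyticAt ℂ h 0 := ⟨_, hp.has_fpower_series_dslope_fslope⟩
  -- ω z = z * h z
  have hωh : ∀ z : ℂ, ω z = z * h z := by
    intro z
    have := sub_smul_dslope ω 0 z
    simp only [sub_zero, hω0, smul_eq_mul] at this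
    rw [← this]
  -- deriv ω near 0
  have hev : ∀ᶠ z in nhds (0:ℂ), AnalyticAt ℂ h z := hhan.eventually_analyticAt
  have hderivω : ∀ᶠ z in nhds (0:ℂ), deriv ω z = h z + z * deriv h z := by
    filter_upwards [hev] with z hz
    have h1 : HasDerivAt (fun w => w * h w) (1 * h z + z * deriv h z) z :=
      (hasDerivAt_id z).mul hz.differentiableAt.hasDerivAt
    have h2 : HasDerivAt ω (1 * h z + z * deriv h z) z := by
      apply h1.congr_of_eventuallyEq
      filter_upwards with w using (hωh w)
    rw [h2.deriv]; ring
  have hd2 : deriv (deriv ω) 0 = 2 * deriv h 0 := by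
    have e1 : deriv (deriv ω) 0 = deriv (fun z => h z + z * deriv h z) 0 :=
      Filter.EventuallyEq.deriv_eq hderivω
    rw [e1]
    have hh' : HasDerivAt h (deriv h 0) 0 := hhan.differentiableAt.hasDerivAt
    have hAON : AnalyticOnNhd ℂ h {z | AnalyticAt ℂ h z} := fun z hz => hz
    have hdh : AnalyticAt ℂ (deriv h) 0 := hAON.deriv 0 hhan
    have hdh' : HasDerivAt (deriv h) (deriv (deriv h) 0) 0 := hdh.differentiableAt.hasDerivAt
    have : HasDerivAt (fun z => h z + z * deriv h z)
        (deriv h 0 + (1 * deriv h 0 + 0 * deriv (deriv h) 0)) 0 :=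
      hh'.add ((hasDerivAt_id 0).mul hdh')
    rw [this.deriv]; ring
  rw [hd2, ← hh0]
  rw [norm_mul]
  simp only [Complex.norm_two]
  nlinarith [hSP, norm_nonneg (deriv h 0)]

lemma coeff_three {f : ℂ → ℂ} {a : ℕ → ℂ}
    (ha : ∀ z ∈ ball (0:ℂ) 1, HasSum (fun n : ℕ => a n * z ^ n) (f z)) :
    (6:ℂ) * a 3 = deriv (deriv (deriv f)) 0 := by
  set q := FormalMultilinearSeries.ofScalars ℂ a with hq_def
  have h12 : (1/2 : ℂ) ∈ ball (0:ℂ) 1 := by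
    rw [mem_ball_zero_iff]; norm_num
  have hsum : Summable fun n : ℕ => ‖q n‖ * ((1/2 : NNReal) : ℝ) ^ n := by
    have h1 : Summable fun n : ℕ => ‖a n * (1/2 : ℂ) ^ n‖ :=
      summable_norm_iff.mpr (ha _ h12).summable
    have h2 : ∀ n : ℕ, ‖a n * (1/2 : ℂ) ^ n‖ = ‖q n‖ * ((1/2 : NNReal) : ℝ) ^ n := by
      intro n
      rw [norm_mul, norm_pow, hq_def, FormalMultilinearSeries.ofScalars_norm]
      norm_num
    exact h1.congr h2
  have hq : HasFPowerSeriesOnBall f q 0 ((1/2 : NNReal) : ENNReal) := by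
    constructor
    · exact q.le_radius_of_summable hsum
    · norm_num
    · intro y hy
      have hy1 : y ∈ ball (0:ℂ) 1 := by
        rw [mem_emetric_ball_zero_iff, enorm_eq_nnnorm, ENNReal.coe_lt_coe] at hy
        rw [mem_ball_zero_iff]
        calc ‖y‖ = ((‖y‖₊ : NNReal) : ℝ) := rfl
          _ < ((1/2 : NNReal) : ℝ) := by exact_mod_cast hy
          _ < 1 := by norm_num
      have := ha y hy1
      rw [zero_add]
      refine this.congr_fun fun n => ?_
      rw [hq_def, FormalMultilinearSeries.ofScalars_apply_eq, smul_eq_mul]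
  have hfact := hq.factorial_smul (1:ℂ) 3
  have hL : (Nat.factorial 3) • q 3 (fun _ => (1:ℂ)) = (6:ℂ) * a 3 := by
    rw [hq_def, FormalMultilinearSeries.ofScalars_apply_eq]
    simp [Nat.factorial]
  have hR : iteratedFDeriv ℂ 3 f 0 (fun _ => (1:ℂ)) = deriv (deriv (deriv f)) 0 := by
    rw [← iteratedDeriv_eq_iteratedFDeriv]
    simp [iteratedDeriv_succ, iteratedDeriv_zero]
  rw [hL, hR] at hfact
  exact hfact

/-- |a₃| ≤ 1/2 for f ∈ BS(α), 0 ≤ α ≤ 1 -/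
theorem stmt_1 (α : ℝ) (hα0 : 0 ≤ α) (hα1 : α ≤ 1)
    (f ω : ℂ → ℂ) (a : ℕ → ℂ)
    -- f is analytic on the unit disk with f(0) = 0, f'(0) = 1, f(z) ≠ 0 for z ≠ 0
    (hf : AnalyticOnNhd ℂ f (ball 0 1))
    (hf0 : f 0 = 0) (hf1 : deriv f 0 = 1)
    (hfz : ∀ z ∈ ball (0 : ℂ) 1, z ≠ 0 → f z ≠ 0)
    -- ω is a Schwarz function
    (hω : AnalyticOnNhd ℂ ω (ball 0 1))
    (hω0 : ω 0 = 0)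
    (hωb : ∀ z ∈ ball (0 : ℂ) 1, ω z ∈ ball (0 : ℂ) 1)
    -- f ∈ BS(α): z f'(z)/f(z) - 1 = ω(z)/(1 - α ω(z)²)
    (heq : ∀ z ∈ ball (0 : ℂ) 1, z ≠ 0 →
      z * deriv f z / f z - 1 = ω z / (1 - (α : ℂ) * ω z ^ 2))
    -- Taylor expansion f(z) = z + Σ_{n ≥ 2} aₙ zⁿ on the unit disk
    (ha : ∀ z ∈ ball (0 : ℂ) 1, HasSum (fun n : ℕ => a n * z ^ n) (f z))
    (ha0 : a 0 = 0) (ha1 : a 1 = 1) :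
    ‖a 3‖ ≤ 1 / 2 := by
  have h0B : (0:ℂ) ∈ ball (0:ℂ) 1 := mem_ball_self one_pos
  have hBo : IsOpen (ball (0:ℂ) 1) := isOpen_ball
  have hBn : ball (0:ℂ) 1 ∈ nhds (0:ℂ) := hBo.mem_nhds h0B
  set c1 := deriv ω 0 with hc1_def
  set c2 := deriv (deriv ω) 0 with hc2_def
  set D : ℂ → ℂ := fun z => 1 - (α:ℂ) * ω z ^ 2 with hD_def
  set G : ℂ → ℂ := fun z => ω z / D z with hG_def
  -- analyticity
  have hD : AnalyticOnNhd ℂ D (ball 0 1) :=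
    analyticOnNhd_const.sub (analyticOnNhd_const.mul (hω.pow 2))
  have hDne : ∀ z ∈ ball (0:ℂ) 1, D z ≠ 0 := by
    intro z hz hcon
    have hωz : ‖ω z‖ < 1 := mem_ball_zero_iff.1 (hωb z hz)
    have h1 : (α:ℂ) * ω z ^ 2 = 1 := by
      have : (1:ℂ) - (α:ℂ) * ω z ^ 2 = 0 := hcon
      linear_combination -this
    have h2 : ‖(α:ℂ) * ω z ^ 2‖ = α * ‖ω z‖ ^ 2 := by
      rw [norm_mul, norm_pow, Complex.norm_real, Real.norm_eq_abs, abs_of_nonneg hα0]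
    rw [h1] at h2
    simp at h2
    nlinarith [norm_nonneg (ω z)]
  have hG : AnalyticOnNhd ℂ G (ball 0 1) := hω.div hD hDne
  have hω1 : AnalyticOnNhd ℂ (deriv ω) (ball 0 1) := hω.deriv
  have hff1 : AnalyticOnNhd ℂ (deriv f) (ball 0 1) := hf.deriv
  have hff2 : AnalyticOnNhd ℂ (deriv (deriv f)) (ball 0 1) := hff1.deriv
  have hff3 : AnalyticOnNhd ℂ (deriv (deriv (deriv f))) (ball 0 1) := hff2.deriv
  have hG1 : AnalyticOnNhd ℂ (deriv G) (ball 0 1) := hG.deriv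
  have hG2 : AnalyticOnNhd ℂ (deriv (deriv G)) (ball 0 1) := hG1.deriv
  -- values of G
  have hD0 : D 0 = 1 := by simp [hD_def, hω0]
  have hG0 : G 0 = 0 := by simp [hG_def, hω0]
  -- first derivative of G : formula on the ball
  have hGform : ∀ z ∈ ball (0:ℂ) 1, deriv G z =
      (deriv ω z * D z + ω z * ((α:ℂ) * (2 * ω z * deriv ω z))) / D z ^ 2 := by
    intro z hz
    have hwz : HasDerivAt ω (deriv ω z) z := (hω z hz).differentiableAt.hasDerivAt
    have hDz : HasDerivAt D (-((α:ℂ) * (2 * ω z ^ 1 * deriv ω z))) z :=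
      ((hwz.pow 2).const_mul ((α:ℂ))).const_sub 1
    have hGz := hwz.div hDz (hDne z hz)
    rw [(show HasDerivAt G _ z from hGz).deriv]
    ring
  have hG1_0 : deriv G 0 = c1 := by
    rw [hGform 0 h0B]
    simp [hω0, hD0, hc1_def]
  -- second derivative of G at 0
  have hG2_0 : deriv (deriv G) 0 = c2 := by
    have hev : deriv G =ᶠ[nhds (0:ℂ)]
        (fun z => (deriv ω z * D z + ω z * ((α:ℂ) * (2 * ω z * deriv ω z))) / D z ^ 2) := by
      filter_upwards [hBn] with z hz using hGform z hz
    rw [hev.deriv_eq]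
    have hw0 : HasDerivAt ω c1 0 := (hω 0 h0B).differentiableAt.hasDerivAt
    have hw1 : HasDerivAt (deriv ω) c2 0 := (hω1 0 h0B).differentiableAt.hasDerivAt
    have hD0' : HasDerivAt D (-((α:ℂ) * (2 * ω 0 ^ 1 * c1))) 0 :=
      ((hw0.pow 2).const_mul ((α:ℂ))).const_sub 1
    have hnum : HasDerivAt
        (fun z => deriv ω z * D z + ω z * ((α:ℂ) * (2 * ω z * deriv ω z)))
        ((c2 * D 0 + deriv ω 0 * -((α:ℂ) * (2 * ω 0 ^ 1 * c1))) +
          (c1 * ((α:ℂ) * (2 * ω 0 * deriv ω 0)) +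
            ω 0 * ((α:ℂ) * ((2 * c1) * deriv ω 0 + (2 * ω 0) * c2)))) 0 := by
      refine HasDerivAt.add (hw1.mul hD0') (hw0.mul ?_)
      exact (((hw0.const_mul (2:ℂ)).mul hw1).const_mul ((α:ℂ)))
    have hden : HasDerivAt (fun z => D z ^ 2) (2 * D 0 ^ 1 * -((α:ℂ) * (2 * ω 0 ^ 1 * c1))) 0 :=
      hD0'.pow 2
    have hdenne : D 0 ^ 2 ≠ 0 := by rw [hD0]; norm_num
    have htot := hnum.div hden hdenne
    rw [(show HasDerivAt (fun z => (deriv ω z * D z + ω z * ((α:ℂ) * (2 * ω z * deriv ω z))) / D z ^ 2) _ 0 from htot).deriv]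
    simp [hω0, hD0]
  -- the key identity
  have hLR : ∀ z ∈ ball (0:ℂ) 1, z * deriv f z - f z = f z * G z := by
    intro z hz
    rcases eq_or_ne z 0 with rfl | hne
    · simp [hf0]
    · have h := heq z hz hne
      have hfne := hfz z hz hne
      have h2 : z * deriv f z - f z = (z * deriv f z / f z - 1) * f z := by
        field_simp
      rw [h2, h]
      rw [hG_def]
      ring
  have hLRev : (fun z => z * deriv f z - f z) =ᶠ[nhds (0:ℂ)] (fun z => f z * G z) := by
    filter_upwards [hBn] with z hz using hLR z hz
  -- first derivatives of both sides
  have hL1 : ∀ z ∈ ball (0:ℂ) 1,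
      deriv (fun w => w * deriv f w - f w) z = z * deriv (deriv f) z := by
    intro z hz
    have h1 : HasDerivAt (fun w => w * deriv f w - f w)
        (1 * deriv f z + z * deriv (deriv f) z - deriv f z) z :=
      ((hasDerivAt_id z).mul (hff1 z hz).differentiableAt.hasDerivAt).sub
        (hf z hz).differentiableAt.hasDerivAt
    rw [h1.deriv]; ring
  have hR1 : ∀ z ∈ ball (0:ℂ) 1,
      deriv (fun w => f w * G w) z = deriv f z * G z + f z * deriv G z := by
    intro z hz
    exact ((hf z hz).differentiableAt.hasDerivAt.mul
      (hG z hz).differentiableAt.hasDerivAt).deriv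
  have E1 : (fun z => z * deriv (deriv f) z) =ᶠ[nhds (0:ℂ)]
      (fun z => deriv f z * G z + f z * deriv G z) := by
    have e1 : (fun z => z * deriv (deriv f) z) =ᶠ[nhds (0:ℂ)]
        deriv (fun w => w * deriv f w - f w) := by
      filter_upwards [hBn] with z hz using (hL1 z hz).symm
    have e2 : deriv (fun w => f w * G w) =ᶠ[nhds (0:ℂ)]
        (fun z => deriv f z * G z + f z * deriv G z) := by
      filter_upwards [hBn] with z hz using hR1 z hz
    exact e1.trans (hLRev.deriv.trans e2)
  -- second derivatives of both sides
  have hL2 : ∀ z ∈ ball (0:ℂ) 1,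
      deriv (fun w => w * deriv (deriv f) w) z =
        deriv (deriv f) z + z * deriv (deriv (deriv f)) z := by
    intro z hz
    have h1 : HasDerivAt (fun w => w * deriv (deriv f) w)
        (1 * deriv (deriv f) z + z * deriv (deriv (deriv f)) z) z :=
      (hasDerivAt_id z).mul (hff2 z hz).differentiableAt.hasDerivAt
    rw [h1.deriv]; ring
  have hR2 : ∀ z ∈ ball (0:ℂ) 1,
      deriv (fun w => deriv f w * G w + f w * deriv G w) z =
        (deriv (deriv f) z * G z + deriv f z * deriv G z) +
          (deriv f z * deriv G z + f z * deriv (deriv G) z) := by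
    intro z hz
    have h1 : HasDerivAt (fun w => deriv f w * G w + f w * deriv G w)
        ((deriv (deriv f) z * G z + deriv f z * deriv G z) +
          (deriv f z * deriv G z + f z * deriv (deriv G) z)) z :=
      ((hff1 z hz).differentiableAt.hasDerivAt.mul (hG z hz).differentiableAt.hasDerivAt).add
        ((hf z hz).differentiableAt.hasDerivAt.mul (hG1 z hz).differentiableAt.hasDerivAt)
    exact h1.deriv
  have E2 : (fun z => deriv (deriv f) z + z * deriv (deriv (deriv f)) z) =ᶠ[nhds (0:ℂ)]
      (fun z => (deriv (deriv f) z * G z + deriv f z * deriv G z) +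
        (deriv f z * deriv G z + f z * deriv (deriv G) z)) := by
    have e1 : (fun z => deriv (deriv f) z + z * deriv (deriv (deriv f)) z) =ᶠ[nhds (0:ℂ)]
        deriv (fun w => w * deriv (deriv f) w) := by
      filter_upwards [hBn] with z hz using (hL2 z hz).symm
    have e2 : deriv (fun w => deriv f w * G w + f w * deriv G w) =ᶠ[nhds (0:ℂ)]
        (fun z => (deriv (deriv f) z * G z + deriv f z * deriv G z) +
          (deriv f z * deriv G z + f z * deriv (deriv G) z)) := by
      filter_upwards [hBn] with z hz using hR2 z hz
    exact e1.trans (E1.deriv.trans e2)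
  -- second-order relation : evaluate E2 at 0
  have rel1 : deriv (deriv f) 0 = 2 * c1 := by
    have := E2.eq_of_nhds
    simp only [hf0, hf1, hG0, hG1_0] at this
    linear_combination this
  -- third-order relation : differentiate E2 at 0
  have rel2 : 2 * deriv (deriv (deriv f)) 0 = 3 * (deriv (deriv f) 0 * c1) + 3 * c2 := by
    have hdL : deriv (fun z => deriv (deriv f) z + z * deriv (deriv (deriv f)) z) 0 =
        2 * deriv (deriv (deriv f)) 0 := by
      have h1 : HasDerivAt (fun z => deriv (deriv f) z + z * deriv (deriv (deriv f)) z)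
          (deriv (deriv (deriv f)) 0 +
            (1 * deriv (deriv (deriv f)) 0 + 0 * deriv (deriv (deriv (deriv f))) 0)) 0 :=
        (hff2 0 h0B).differentiableAt.hasDerivAt.add
          ((hasDerivAt_id 0).mul (hff3 0 h0B).differentiableAt.hasDerivAt)
      rw [h1.deriv]; ring
    have hdR : deriv (fun z => (deriv (deriv f) z * G z + deriv f z * deriv G z) +
        (deriv f z * deriv G z + f z * deriv (deriv G) z)) 0 =
        3 * (deriv (deriv f) 0 * c1) + 3 * c2 := by
      have h1 : HasDerivAt (fun z => (deriv (deriv f) z * G z + deriv f z * deriv G z) +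
          (deriv f z * deriv G z + f z * deriv (deriv G) z))
          (((deriv (deriv (deriv f)) 0 * G 0 + deriv (deriv f) 0 * deriv G 0) +
            (deriv (deriv f) 0 * deriv G 0 + deriv f 0 * deriv (deriv G) 0)) +
           ((deriv (deriv f) 0 * deriv G 0 + deriv f 0 * deriv (deriv G) 0) +
            (deriv f 0 * deriv (deriv G) 0 + f 0 * deriv (deriv (deriv G)) 0))) 0 := by
        refine HasDerivAt.add (HasDerivAt.add ?_ ?_) (HasDerivAt.add ?_ ?_)
        · exact (hff2 0 h0B).differentiableAt.hasDerivAt.mul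
            (hG 0 h0B).differentiableAt.hasDerivAt
        · exact (hff1 0 h0B).differentiableAt.hasDerivAt.mul
            (hG1 0 h0B).differentiableAt.hasDerivAt
        · exact (hff1 0 h0B).differentiableAt.hasDerivAt.mul
            (hG1 0 h0B).differentiableAt.hasDerivAt
        · exact (hf 0 h0B).differentiableAt.hasDerivAt.mul
            (hG2 0 h0B).differentiableAt.hasDerivAt
      rw [h1.deriv, hf0, hf1, hG0, hG1_0, hG2_0]
      ring
    rw [← hdL, ← hdR]
    exact E2.deriv_eq
  -- combine with the coefficient formula
  have hcoeff := coeff_three ha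
  have h12 : (12:ℂ) * a 3 = 6 * c1 ^ 2 + 3 * c2 := by
    linear_combination 2 * hcoeff + rel2 + 3 * c1 * rel1
  -- final estimate
  have hsc := schwarz_coeff hω hω0 hωb
  rw [← hc1_def, ← hc2_def] at hsc
  have habs : ‖(12:ℂ) * a 3‖ ≤ 6 := by
    rw [h12]
    calc ‖6 * c1 ^ 2 + 3 * c2‖ ≤
        ‖6 * c1 ^ 2‖ + ‖3 * c2‖ := norm_add_le _ _
      _ = 6 * ‖c1‖ ^ 2 + 3 * ‖c2‖ := by
          rw [norm_mul, norm_mul, norm_pow]; norm_num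
      _ ≤ 6 * ‖c1‖ ^ 2 + 3 * (2 * (1 - ‖c1‖ ^ 2)) := by linarith
      _ = 6 := by ring
  rw [norm_mul] at habs
  simp only [Complex.norm_ofNat] at habs
  nlinarith [norm_nonneg (a 3)]
end

section
/- Let 0 ≤ α ≤ 1 and let f be in the class BK(α) with Taylor expansion f(z) = z + Σ_{n≥2} a_n z^n about 0. Then |a_2| ≤ 1/2. -/
open Metric

lemma bk_radius_le {a : ℕ → ℂ} (h : ∀ z ∈ ball (0 : ℂ) 1, Summable (fun n : ℕ => a n * z ^ n)) :
    1 ≤ (FormalMultilinearSeries.ofScalars ℂ a).radius := by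
  refine ENNReal.le_of_forall_nnreal_lt fun r hr => ?_
  have hrb : ((r : ℝ) : ℂ) ∈ ball (0 : ℂ) 1 := by
    simp only [mem_ball, dist_zero_right, Complex.norm_real, Real.norm_eq_abs,
      abs_of_nonneg r.coe_nonneg]
    exact_mod_cast hr
  have hs := (h _ hrb).tendsto_atTop_zero
  have hn : Filter.Tendsto (fun n : ℕ => ‖FormalMultilinearSeries.ofScalars ℂ a n‖ * (r : ℝ) ^ n)
      Filter.atTop (nhds 0) := by
    have := hs.norm
    simp only [norm_zero] at this
    convert this using 2 with n
    rw [FormalMultilinearSeries.ofScalars_norm, norm_mul, norm_pow]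
    simp [abs_of_nonneg r.coe_nonneg]
  exact FormalMultilinearSeries.le_radius_of_tendsto _ hn

/-- |a₂| ≤ 1/2 for f ∈ BK(α), 0 ≤ α ≤ 1 -/
theorem stmt_4 (α : ℝ) (hα0 : 0 ≤ α) (hα1 : α ≤ 1)
    (f ω : ℂ → ℂ) (a : ℕ → ℂ)
    -- f is analytic on the unit disk with f(0) = 0, f'(0) = 1, f'(z) ≠ 0
    (hf : AnalyticOnNhd ℂ f (ball 0 1))
    (hf0 : f 0 = 0) (hf1 : deriv f 0 = 1)
    (hfz : ∀ z ∈ ball (0 : ℂ) 1, deriv f z ≠ 0)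
    -- ω is a Schwarz function
    (hω : AnalyticOnNhd ℂ ω (ball 0 1))
    (hω0 : ω 0 = 0)
    (hωb : ∀ z ∈ ball (0 : ℂ) 1, ω z ∈ ball (0 : ℂ) 1)
    -- f ∈ BK(α): z f''(z)/f'(z) = ω(z)/(1 - α ω(z)²)
    (heq : ∀ z ∈ ball (0 : ℂ) 1,
      z * deriv (deriv f) z / deriv f z = ω z / (1 - (α : ℂ) * ω z ^ 2))
    -- Taylor expansion f(z) = z + Σ_{n ≥ 2} aₙ zⁿ on the unit disk
    (ha : ∀ z ∈ ball (0 : ℂ) 1, HasSum (fun n : ℕ => a n * z ^ n) (f z))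
    (ha0 : a 0 = 0) (ha1 : a 1 = 1) :
    ‖a 2‖ ≤ 1 / 2 := by
  have h0 : (0 : ℂ) ∈ ball (0 : ℂ) 1 := by simp
  -- Step 1: f has a power series with coefficients a, so deriv (deriv f) 0 = 2 * a 2
  have hps : HasFPowerSeriesOnBall f (FormalMultilinearSeries.ofScalars ℂ a) 0 1 := by
    refine ⟨bk_radius_le (fun z hz => (ha z hz).summable), one_pos, fun {y} hy => ?_⟩
    have hyb : y ∈ ball (0 : ℂ) 1 := by
      rwa [← ENNReal.coe_one, Metric.eball_coe, NNReal.coe_one] at hy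
    have := ha y hyb
    simp only [zero_add]
    convert this using 2 with n
    case e'_3 => rfl
    rw [FormalMultilinearSeries.ofScalars_apply_eq, smul_eq_mul]
  have hfact := hps.factorial_smul (1 : ℂ) 2
  have ha2 : deriv (deriv f) 0 = 2 * a 2 := by
    have h1 : (Nat.factorial 2) • FormalMultilinearSeries.ofScalars ℂ a 2 (fun _ => (1 : ℂ))
        = 2 * a 2 := by
      rw [FormalMultilinearSeries.ofScalars_apply_eq]
      simp [Nat.factorial]
    have h2 : iteratedFDeriv ℂ 2 f 0 (fun _ => (1 : ℂ)) = deriv (deriv f) 0 := by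
      rw [← iteratedDeriv_eq_iteratedFDeriv, iteratedDeriv_succ, iteratedDeriv_one]
    rw [h1, h2] at hfact
    exact hfact.symm ▸ hfact
  -- Step 2: deriv (deriv f) 0 = deriv ω 0
  have hden : ∀ z ∈ ball (0 : ℂ) 1, (1 - (α : ℂ) * ω z ^ 2) ≠ 0 := by
    intro z hz h
    have hlt : ‖(α : ℂ) * ω z ^ 2‖ < 1 := by
      rw [norm_mul, norm_pow]
      have hωz : ‖ω z‖ < 1 := by
        simpa [mem_ball, dist_zero_right] using hωb z hz
      have h2 : ‖ω z‖ ^ 2 < 1 := by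
        nlinarith [norm_nonneg (ω z)]
      calc ‖(α : ℂ)‖ * ‖ω z‖ ^ 2
          ≤ 1 * (‖ω z‖ ^ 2) := by
            apply mul_le_mul_of_nonneg_right _ (by positivity)
            simpa [Complex.norm_real, abs_of_nonneg hα0] using hα1
        _ < 1 := by simpa using h2
    have : (α : ℂ) * ω z ^ 2 = 1 := by linear_combination -h
    rw [this] at hlt
    simp at hlt
  have hf' : AnalyticOnNhd ℂ (deriv f) (ball 0 1) := hf.deriv
  have hf'' : AnalyticOnNhd ℂ (deriv (deriv f)) (ball 0 1) := hf'.deriv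
  have hEq : (fun z => z * deriv (deriv f) z)
      =ᶠ[nhds (0 : ℂ)] (fun z => ω z / (1 - (α : ℂ) * ω z ^ 2) * deriv f z) := by
    filter_upwards [isOpen_ball.mem_nhds h0] with z hz
    have h := heq z hz
    field_simp [hfz z hz] at h
    rw [h]
    ring
  have hderivEq : deriv (fun z => z * deriv (deriv f) z) 0
      = deriv (fun z => ω z / (1 - (α : ℂ) * ω z ^ 2) * deriv f z) 0 := hEq.deriv_eq
  have hωd : DifferentiableAt ℂ ω 0 := (hω 0 h0).differentiableAt
  have hdd : DifferentiableAt ℂ (fun z => 1 - (α : ℂ) * ω z ^ 2) 0 := by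
    fun_prop
  have hd0 : (1 - (α : ℂ) * ω 0 ^ 2) = 1 := by simp [hω0]
  have hud : DifferentiableAt ℂ (fun z => ω z / (1 - (α : ℂ) * ω z ^ 2)) 0 := by
    apply hωd.div hdd
    rw [hd0]; exact one_ne_zero
  have hLHS : deriv (fun z => z * deriv (deriv f) z) 0 = deriv (deriv f) 0 := by
    rw [deriv_fun_mul differentiableAt_fun_id ((hf'' 0 h0).differentiableAt)]
    simp
  have hRHS : deriv (fun z => ω z / (1 - (α : ℂ) * ω z ^ 2) * deriv f z) 0 = deriv ω 0 := by
    rw [deriv_fun_mul hud ((hf' 0 h0).differentiableAt)]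
    rw [deriv_fun_div hωd hdd (by rw [hd0]; exact one_ne_zero)]
    simp [hω0, hf1]
  have key : deriv (deriv f) 0 = deriv ω 0 := by rw [← hLHS, hderivEq, hRHS]
  -- Step 3: Schwarz lemma
  have hsch : ‖deriv ω 0‖ ≤ 1 := by
    apply Complex.norm_deriv_le_one_of_mapsTo_ball (hω.differentiableOn)
      (fun z hz => by rw [hω0]; exact ball_subset_closedBall (hωb z hz)) one_pos
  -- conclude
  have : a 2 = deriv ω 0 / 2 := by
    have := ha2.symm.trans key
    field_simp
    linear_combination this
  rw [this, norm_div]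
  simp only [Complex.norm_two]
  linarith
end

section
/- Let 0 ≤ α ≤ 1 and let f be in the class BK(α) with Taylor expansion f(z) = z + Σ_{n≥2} a_n z^n about 0. Then |a_3| ≤ 1/6. -/
open Metric

open Set Filter Complex

lemma mobius_aux {a w : ℂ} (ha : ‖a‖ < 1) (hw : ‖w‖ < 1) :
    ‖w - a‖ < ‖1 - (starRingEnd ℂ) a * w‖ := by
  have key : Complex.normSq (1 - (starRingEnd ℂ) a * w) - Complex.normSq (w - a)
      = (1 - Complex.normSq a) * (1 - Complex.normSq w) := by
    simp only [Complex.normSq_apply, Complex.sub_re, Complex.sub_im, Complex.mul_re,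
      Complex.mul_im, Complex.one_re, Complex.one_im, Complex.conj_re, Complex.conj_im]
    ring
  have h1 : Complex.normSq a < 1 := by
    rw [← Complex.sq_norm]; nlinarith [norm_nonneg a]
  have h2 : Complex.normSq w < 1 := by
    rw [← Complex.sq_norm]; nlinarith [norm_nonneg w]
  have hk : Complex.normSq (w - a) < Complex.normSq (1 - (starRingEnd ℂ) a * w) := by
    nlinarith
  rw [Complex.norm_def, Complex.norm_def]
  exact Real.sqrt_lt_sqrt (Complex.normSq_nonneg _) hk

lemma schwarz_pick_center {φ : ℂ → ℂ} (hd : DifferentiableOn ℂ φ (ball 0 1))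
    (hb : ∀ z ∈ ball (0 : ℂ) 1, ‖φ z‖ ≤ 1) :
    ‖deriv φ 0‖ ≤ 1 - ‖φ 0‖ ^ 2 := by
  have h0 : (0 : ℂ) ∈ ball (0 : ℂ) 1 := mem_ball_self one_pos
  by_cases hstrict : ∀ z ∈ ball (0 : ℂ) 1, ‖φ z‖ < 1
  · set a := φ 0 with hadef
    have ha : ‖a‖ < 1 := hstrict 0 h0
    set g : ℂ → ℂ := fun z => (φ z - a) / (1 - (starRingEnd ℂ) a * φ z) with hg
    have hden : ∀ z ∈ ball (0 : ℂ) 1, (1 : ℂ) - (starRingEnd ℂ) a * φ z ≠ 0 := by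
      intro z hz
      have := mobius_aux ha (hstrict z hz)
      intro hco
      rw [hco, norm_zero] at this
      exact absurd this (norm_nonneg _).not_gt
    have hgd : DifferentiableOn ℂ g (ball 0 1) := by
      apply DifferentiableOn.div
      · exact hd.sub_const a
      · exact (differentiableOn_const 1).sub ((differentiableOn_const _).mul hd)
      · exact hden
    have hg0 : g 0 = 0 := by simp [hg, hadef]
    have hmaps : MapsTo g (ball 0 1) (ball (g 0) 1) := by
      intro z hz
      rw [hg0, mem_ball_zero_iff]
      have hlt := mobius_aux ha (hstrict z hz)
      have hpos : 0 < ‖1 - (starRingEnd ℂ) a * φ z‖ :=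
        lt_of_le_of_lt (norm_nonneg _) hlt
      rw [hg]
      simp only [norm_div]
      exact div_lt_one hpos |>.mpr hlt
    have hder := Complex.norm_deriv_le_div_of_mapsTo_ball hgd (hmaps.mono_right ball_subset_closedBall) one_pos
    have hφ0 : HasDerivAt φ (deriv φ 0) 0 :=
      (hd.differentiableAt (isOpen_ball.mem_nhds h0)).hasDerivAt
    have hnum : HasDerivAt (fun z => φ z - a) (deriv φ 0) 0 := hφ0.sub_const a
    have hd2 : HasDerivAt (fun z => (1 : ℂ) - (starRingEnd ℂ) a * φ z)
        (-((starRingEnd ℂ) a * deriv φ 0)) 0 := (hφ0.const_mul _).const_sub 1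
    have hgder : HasDerivAt g
        ((deriv φ 0 * (1 - (starRingEnd ℂ) a * φ 0) -
          (φ 0 - a) * -((starRingEnd ℂ) a * deriv φ 0)) /
          (1 - (starRingEnd ℂ) a * φ 0) ^ 2) 0 := hnum.div hd2 (hden 0 h0)
    have hne : (1 : ℂ) - (starRingEnd ℂ) a * a ≠ 0 := hden 0 h0
    have hgval : deriv g 0 = deriv φ 0 / (1 - (starRingEnd ℂ) a * a) := by
      rw [hgder.deriv, ← hadef]
      field_simp
      ring
    rw [hgval] at hder
    have hsq : Complex.normSq a < 1 := by
      rw [← Complex.sq_norm]; nlinarith [norm_nonneg a]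
    have habs : ‖1 - (starRingEnd ℂ) a * a‖ = 1 - ‖a‖ ^ 2 := by
      have h1 : (starRingEnd ℂ) a * a = (Complex.normSq a : ℂ) := by
        rw [mul_comm, Complex.mul_conj]
      rw [h1, ← Complex.sq_norm]
      have h2 : (1 : ℂ) - (Complex.normSq a : ℂ) = ((1 - Complex.normSq a : ℝ) : ℂ) := by
        push_cast; ring
      rw [Complex.sq_norm, h2, Complex.norm_real, Real.norm_eq_abs, _root_.abs_of_nonneg (by linarith)]
    rw [norm_div, habs] at hder
    have hpos : 0 < 1 - ‖a‖ ^ 2 := by nlinarith [norm_nonneg a]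
    rw [div_le_div_iff₀ hpos one_pos] at hder
    linarith
  · push_neg at hstrict
    obtain ⟨z₀, hz₀, hz₀1⟩ := hstrict
    have hz₀eq : ‖φ z₀‖ = 1 := le_antisymm (hb z₀ hz₀) hz₀1
    have hmax : IsMaxOn (norm ∘ φ) (ball (0 : ℂ) 1) z₀ := by
      intro z hz
      simp only [Function.comp, Set.mem_setOf_eq, hz₀eq]
      exact hb z hz
    have heq := Complex.eqOn_of_isPreconnected_of_isMaxOn_norm
      (convex_ball (0 : ℂ) 1).isPreconnected isOpen_ball hd hz₀ hmax
    have hconst : φ =ᶠ[nhds (0 : ℂ)] fun _ => φ z₀ :=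
      eventually_of_mem (isOpen_ball.mem_nhds h0) fun z hz => heq hz
    rw [hconst.deriv_eq, deriv_const]
    have := hb 0 h0
    simp only [norm_zero]
    nlinarith [norm_nonneg (φ 0)]

lemma coeff_iteratedDeriv {f : ℂ → ℂ} {a : ℕ → ℂ}
    (ha : ∀ z ∈ ball (0 : ℂ) 1, HasSum (fun n : ℕ => a n * z ^ n) (f z)) (n : ℕ) :
    iteratedDeriv n f 0 = (n.factorial : ℂ) * a n := by
  set p := FormalMultilinearSeries.ofScalars ℂ a with hp
  have hrad : 1 ≤ p.radius := by
    apply ENNReal.le_of_forall_nnreal_lt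
    intro r hr
    apply p.le_radius_of_tendsto (l := 0)
    have hr1 : (r : ℝ) < 1 := by exact_mod_cast hr
    have hrball : ((r : ℝ) : ℂ) ∈ ball (0 : ℂ) 1 := by
      rw [mem_ball_zero_iff, Complex.norm_real, Real.norm_eq_abs,
        _root_.abs_of_nonneg r.coe_nonneg]
      exact hr1
    have ht := ((ha _ hrball).summable.tendsto_atTop_zero).norm
    rw [norm_zero] at ht
    convert ht using 2 with n
    rw [FormalMultilinearSeries.ofScalars_norm, norm_mul, norm_pow,
      Complex.norm_real, Real.norm_eq_abs, _root_.abs_of_nonneg r.coe_nonneg]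
  have hps : HasFPowerSeriesOnBall f p 0 1 :=
    { r_le := hrad
      r_pos := one_pos
      hasSum := by
        intro y hy
        have hy' : y ∈ ball (0 : ℂ) 1 := by
          rw [mem_ball_zero_iff]
          rw [EMetric.mem_ball, edist_zero_right, enorm_eq_nnnorm] at hy
          exact_mod_cast hy
        have := ha y hy'
        simp only [hp, FormalMultilinearSeries.ofScalars_apply_eq, smul_eq_mul, zero_add]
        exact this }
  have h1 := hps.factorial_smul (1 : ℂ) n
  rw [iteratedDeriv_eq_iteratedFDeriv, ← h1, FormalMultilinearSeries.ofScalars_apply_eq]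
  simp [smul_eq_mul]

/-- |a₃| ≤ 1/6 for f ∈ BK(α), 0 ≤ α ≤ 1 -/
theorem stmt_5 (α : ℝ) (hα0 : 0 ≤ α) (hα1 : α ≤ 1)
    (f ω : ℂ → ℂ) (a : ℕ → ℂ)
    -- f is analytic on the unit disk with f(0) = 0, f'(0) = 1, f'(z) ≠ 0
    (hf : AnalyticOnNhd ℂ f (ball 0 1))
    (hf0 : f 0 = 0) (hf1 : deriv f 0 = 1)
    (hfz : ∀ z ∈ ball (0 : ℂ) 1, deriv f z ≠ 0)
    -- ω is a Schwarz function
    (hω : AnalyticOnNhd ℂ ω (ball 0 1))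
    (hω0 : ω 0 = 0)
    (hωb : ∀ z ∈ ball (0 : ℂ) 1, ω z ∈ ball (0 : ℂ) 1)
    -- f ∈ BK(α): z f''(z)/f'(z) = ω(z)/(1 - α ω(z)²)
    (heq : ∀ z ∈ ball (0 : ℂ) 1,
      z * deriv (deriv f) z / deriv f z = ω z / (1 - (α : ℂ) * ω z ^ 2))
    -- Taylor expansion f(z) = z + Σ_{n ≥ 2} aₙ zⁿ on the unit disk
    (ha : ∀ z ∈ ball (0 : ℂ) 1, HasSum (fun n : ℕ => a n * z ^ n) (f z))
    (ha0 : a 0 = 0) (ha1 : a 1 = 1) :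
    ‖a 3‖ ≤ 1 / 6 := by
  have h0m : (0 : ℂ) ∈ ball (0 : ℂ) 1 := mem_ball_self one_pos
  have hnhds : ball (0 : ℂ) 1 ∈ nhds (0 : ℂ) := isOpen_ball.mem_nhds h0m
  set G := deriv (deriv f) with hG
  have hfact := coeff_iteratedDeriv ha
  have hG'0 : deriv G 0 = 6 * a 3 := by
    have h3 := hfact 3
    rw [show (3 : ℕ) = 2 + 1 from rfl, iteratedDeriv_succ,
      show (2 : ℕ) = 1 + 1 from rfl, iteratedDeriv_succ, iteratedDeriv_one] at h3
    rw [← hG] at h3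
    norm_num [Nat.factorial] at h3
    exact h3
  -- analyticity
  have hfd : AnalyticOnNhd ℂ (deriv f) (ball 0 1) := hf.deriv
  have hGa : AnalyticOnNhd ℂ G (ball 0 1) := hfd.deriv
  have hG'a : AnalyticOnNhd ℂ (deriv G) (ball 0 1) := hGa.deriv
  -- φ := dslope ω 0
  have hωd : DifferentiableOn ℂ ω (ball 0 1) := hω.differentiableOn
  set φ := dslope ω 0 with hφ
  have hφd : DifferentiableOn ℂ φ (ball 0 1) :=
    (differentiableOn_dslope (ball_mem_nhds 0 one_pos)).mpr hωd
  have hφa : AnalyticOnNhd ℂ φ (ball 0 1) := hφd.analyticOnNhd isOpen_ball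
  have hφ'a : AnalyticOnNhd ℂ (deriv φ) (ball 0 1) := hφa.deriv
  have hmapsω : MapsTo ω (ball 0 1) (ball (ω 0) 1) := by
    rw [hω0]; exact fun z hz => hωb z hz
  have hφb : ∀ z ∈ ball (0 : ℂ) 1, ‖φ z‖ ≤ 1 := by
    intro z hz
    have := Complex.norm_dslope_le_div_of_mapsTo_ball hωd (hmapsω.mono_right ball_subset_closedBall) hz
    simpa using this
  set c1 := φ 0 with hc1
  set c2 := deriv φ 0 with hc2
  have hb1 : ‖c1‖ ≤ 1 := hφb 0 h0m
  have hb2 : ‖c2‖ ≤ 1 - ‖c1‖ ^ 2 := schwarz_pick_center hφd hφb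
  -- ω z = z * φ z
  have hωeq : ∀ z, ω z = z * φ z := by
    intro z
    rcases eq_or_ne z 0 with rfl | hz
    · simp [hω0]
    · rw [hφ, dslope_of_ne _ hz, slope_def_field]
      field_simp [hω0]
      rw [hω0]; ring
  have hωfun : ω = fun z => z * φ z := funext hωeq
  -- derivatives of ω
  have hωd0 : ∀ z ∈ ball (0 : ℂ) 1, HasDerivAt ω (1 * φ z + z * deriv φ z) z := by
    intro z hz
    have := (hasDerivAt_id z).mul
      ((hφd.differentiableAt (isOpen_ball.mem_nhds hz)).hasDerivAt)
    rw [hωfun]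
    exact this
  have hdω0 : deriv ω 0 = c1 := by
    have := (hωd0 0 h0m).deriv
    rw [this]; simp [hc1]
  have hωderiv_ev : deriv ω =ᶠ[nhds (0 : ℂ)] fun z => 1 * φ z + z * deriv φ z :=
    eventually_of_mem hnhds fun z hz => (hωd0 z hz).deriv
  have hd2ω0 : deriv (deriv ω) 0 = 2 * c2 := by
    rw [hωderiv_ev.deriv_eq]
    have h1 : HasDerivAt (fun z => 1 * φ z + z * deriv φ z)
        (1 * deriv φ 0 + (1 * deriv φ 0 + 0 * deriv (deriv φ) 0)) 0 :=
      (((hφd.differentiableAt hnhds).hasDerivAt).const_mul 1).add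
        ((hasDerivAt_id 0).mul ((hφ'a 0 h0m).differentiableAt.hasDerivAt))
    rw [h1.deriv]; ring
  -- denominator D
  set D : ℂ → ℂ := fun z => 1 - (α : ℂ) * ω z ^ 2 with hD
  have hDz : ∀ z ∈ ball (0 : ℂ) 1, D z ≠ 0 := by
    intro z hz hcon
    have hzb := hωb z hz
    rw [mem_ball_zero_iff] at hzb
    have h1 : (α : ℂ) * ω z ^ 2 = 1 := by
      have : (1 : ℂ) - (α : ℂ) * ω z ^ 2 = 0 := hcon
      linear_combination -this
    have h2 := congrArg (‖·‖) h1
    rw [norm_mul, norm_pow, norm_one, Complex.norm_real, Real.norm_eq_abs,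
      _root_.abs_of_nonneg hα0] at h2
    nlinarith [norm_nonneg (ω z), sq_nonneg ‖ω z‖]
  set q : ℂ → ℂ := fun z => ω z / D z with hq
  have hheq : ∀ z ∈ ball (0 : ℂ) 1, z * G z = q z * deriv f z := by
    intro z hz
    have h1 := heq z hz
    rw [div_eq_iff (hfz z hz)] at h1
    exact h1
  have hDa : AnalyticOnNhd ℂ D (ball 0 1) := fun z hz =>
    analyticAt_const.sub (analyticAt_const.mul ((hω z hz).pow 2))
  have hqa : AnalyticOnNhd ℂ q (ball 0 1) := fun z hz =>
    (hω z hz).div (hDa z hz) (hDz z hz)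
  have hq'a : AnalyticOnNhd ℂ (deriv q) (ball 0 1) := hqa.deriv
  -- derivative of D and q
  have hDder : ∀ z ∈ ball (0 : ℂ) 1,
      HasDerivAt D (-((α : ℂ) * (2 * ω z ^ 1 * deriv ω z))) z := by
    intro z hz
    exact ((((hω z hz).differentiableAt.hasDerivAt).pow 2).const_mul (α : ℂ)).const_sub 1
  have hqder : ∀ z ∈ ball (0 : ℂ) 1, HasDerivAt q
      ((deriv ω z * D z - ω z * -((α : ℂ) * (2 * ω z ^ 1 * deriv ω z))) / D z ^ 2) z := by
    intro z hz
    exact ((hω z hz).differentiableAt.hasDerivAt).div (hDder z hz) (hDz z hz)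
  have hD0 : D 0 = 1 := by simp [hD, hω0]
  have hq0 : q 0 = 0 := by simp [hq, hω0]
  have hdq0 : deriv q 0 = c1 := by
    rw [(hqder 0 h0m).deriv, hdω0, hω0, hD0]
    ring_nf
  have hq'ev : deriv q =ᶠ[nhds (0 : ℂ)] fun z =>
      (deriv ω z * D z - ω z * -((α : ℂ) * (2 * ω z ^ 1 * deriv ω z))) / D z ^ 2 :=
    eventually_of_mem hnhds fun z hz => (hqder z hz).deriv
  have hω'a : AnalyticOnNhd ℂ (deriv ω) (ball 0 1) := hω.deriv
  have hd2q0 : deriv (deriv q) 0 = 2 * c2 := by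
    rw [hq'ev.deriv_eq]
    have A : HasDerivAt ω (deriv ω 0) 0 := (hω 0 h0m).differentiableAt.hasDerivAt
    have B : HasDerivAt (deriv ω) (deriv (deriv ω) 0) 0 :=
      (hω'a 0 h0m).differentiableAt.hasDerivAt
    have D0d : HasDerivAt D (-((α : ℂ) * (2 * ω 0 ^ 1 * deriv ω 0))) 0 := hDder 0 h0m
    have t1 : HasDerivAt (fun z => (2 : ℂ) * ω z ^ 1)
        ((2 : ℂ) * (((1 : ℕ) : ℂ) * ω 0 ^ (1 - 1) * deriv ω 0)) 0 := (A.pow 1).const_mul 2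
    have t3 : HasDerivAt (fun z => (2 : ℂ) * ω z ^ 1 * deriv ω z)
        ((2 : ℂ) * (((1 : ℕ) : ℂ) * ω 0 ^ (1 - 1) * deriv ω 0) * deriv ω 0 +
          (2 : ℂ) * ω 0 ^ 1 * deriv (deriv ω) 0) 0 := t1.mul B
    have t5 : HasDerivAt (fun z => -((α : ℂ) * ((2 : ℂ) * ω z ^ 1 * deriv ω z)))
        (-((α : ℂ) * ((2 : ℂ) * (((1 : ℕ) : ℂ) * ω 0 ^ (1 - 1) * deriv ω 0) * deriv ω 0 +
          (2 : ℂ) * ω 0 ^ 1 * deriv (deriv ω) 0))) 0 := (t3.const_mul (α : ℂ)).neg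
    have t6 : HasDerivAt (fun z => ω z * -((α : ℂ) * ((2 : ℂ) * ω z ^ 1 * deriv ω z)))
        (deriv ω 0 * -((α : ℂ) * ((2 : ℂ) * ω 0 ^ 1 * deriv ω 0)) +
          ω 0 * -((α : ℂ) * ((2 : ℂ) * (((1 : ℕ) : ℂ) * ω 0 ^ (1 - 1) * deriv ω 0) * deriv ω 0 +
          (2 : ℂ) * ω 0 ^ 1 * deriv (deriv ω) 0))) 0 := A.mul t5
    have tN : HasDerivAt
        (fun z => deriv ω z * D z - ω z * -((α : ℂ) * (2 * ω z ^ 1 * deriv ω z)))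
        ((deriv (deriv ω) 0 * D 0 + deriv ω 0 * -((α : ℂ) * (2 * ω 0 ^ 1 * deriv ω 0))) -
          (deriv ω 0 * -((α : ℂ) * ((2 : ℂ) * ω 0 ^ 1 * deriv ω 0)) +
          ω 0 * -((α : ℂ) * ((2 : ℂ) * (((1 : ℕ) : ℂ) * ω 0 ^ (1 - 1) * deriv ω 0) * deriv ω 0 +
          (2 : ℂ) * ω 0 ^ 1 * deriv (deriv ω) 0)))) 0 := (B.mul D0d).sub t6
    have tD : HasDerivAt (fun z => D z ^ 2)
        ((2 : ℂ) * D 0 ^ 1 * -((α : ℂ) * (2 * ω 0 ^ 1 * deriv ω 0))) 0 := D0d.pow 2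
    have hD20 : (fun z => D z ^ 2) 0 ≠ 0 := by simp [hD, hω0]
    have tQ : HasDerivAt (fun z => (deriv ω z * D z - ω z * -((α : ℂ) * (2 * ω z ^ 1 * deriv ω z))) /
        D z ^ 2) _ 0 := tN.div tD hD20
    rw [tQ.deriv, hd2ω0, hdω0, hω0, hD0]
    ring_nf
  -- main functional equation derivatives
  have hLR : (fun z => z * G z) =ᶠ[nhds (0 : ℂ)] fun z => q z * deriv f z :=
    eventually_of_mem hnhds hheq
  have hLd : ∀ z ∈ ball (0 : ℂ) 1, HasDerivAt (fun w => w * G w)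
      (1 * G z + z * deriv G z) z := fun z hz =>
    (hasDerivAt_id z).mul ((hGa z hz).differentiableAt.hasDerivAt)
  have hRd : ∀ z ∈ ball (0 : ℂ) 1, HasDerivAt (fun w => q w * deriv f w)
      (deriv q z * deriv f z + q z * G z) z := fun z hz =>
    ((hqa z hz).differentiableAt.hasDerivAt).mul ((hfd z hz).differentiableAt.hasDerivAt)
  have eq1 : G 0 = c1 := by
    have e := hLR.deriv_eq
    rw [(hLd 0 h0m).deriv, (hRd 0 h0m).deriv, hf1, hq0, hdq0] at e
    simpa using e
  have hL'ev : deriv (fun w => w * G w) =ᶠ[nhds (0 : ℂ)]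
      fun z => 1 * G z + z * deriv G z :=
    eventually_of_mem hnhds fun z hz => (hLd z hz).deriv
  have hR'ev : deriv (fun w => q w * deriv f w) =ᶠ[nhds (0 : ℂ)]
      fun z => deriv q z * deriv f z + q z * G z :=
    eventually_of_mem hnhds fun z hz => (hRd z hz).deriv
  have eq2 : deriv (deriv (fun w => w * G w)) 0
      = deriv (deriv (fun w => q w * deriv f w)) 0 := hLR.deriv.deriv_eq
  have hL2 : HasDerivAt (fun z => 1 * G z + z * deriv G z)
      (1 * deriv G 0 + (1 * deriv G 0 + 0 * deriv (deriv G) 0)) 0 :=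
    (((hGa 0 h0m).differentiableAt.hasDerivAt).const_mul 1).add
      ((hasDerivAt_id 0).mul ((hG'a 0 h0m).differentiableAt.hasDerivAt))
  have hR2 : HasDerivAt (fun z => deriv q z * deriv f z + q z * G z)
      ((deriv (deriv q) 0 * deriv f 0 + deriv q 0 * G 0) +
        (deriv q 0 * G 0 + q 0 * deriv G 0)) 0 :=
    (((hq'a 0 h0m).differentiableAt.hasDerivAt).mul
      ((hfd 0 h0m).differentiableAt.hasDerivAt)).add
      (((hqa 0 h0m).differentiableAt.hasDerivAt).mul ((hGa 0 h0m).differentiableAt.hasDerivAt))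
  rw [hL'ev.deriv_eq, hR'ev.deriv_eq, hL2.deriv, hR2.deriv, hf1, hq0, hdq0, hd2q0,
    eq1, hG'0] at eq2
  -- eq2 : 1 * (6 * a 3) + (1 * (6*a 3) + 0 * _) = (2*c2*1 + c1*c1) + (c1*c1 + 0*(6*a3))
  have h6 : (6 : ℂ) * a 3 = c2 + c1 ^ 2 := by linear_combination eq2 / 2
  have habs : ‖c2 + c1 ^ 2‖ ≤ 1 := by
    calc ‖c2 + c1 ^ 2‖ ≤ ‖c2‖ + ‖c1 ^ 2‖ :=
          norm_add_le _ _
      _ = ‖c2‖ + ‖c1‖ ^ 2 := by rw [norm_pow]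
      _ ≤ 1 := by linarith
  have hfin : (6 : ℝ) * ‖a 3‖ ≤ 1 := by
    have := congrArg (‖·‖) h6
    rw [norm_mul] at this
    simp only [Complex.norm_ofNat] at this
    calc (6 : ℝ) * ‖a 3‖ = ‖(6 : ℂ)‖ * ‖a 3‖ := by
          norm_num
      _ = ‖c2 + c1 ^ 2‖ := by rw [← norm_mul, h6]
      _ ≤ 1 := habs
  linarith
end

section
/- Let 0 ≤ α ≤ 1, let f be in the class BS(α), and let γ_n be the logarithmic coefficients of f. Then |γ_n| ≤ 1/(2n) for n = 1, 2, 3. -/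
open Metric Filter

lemma cauchy_bound {h : ℂ → ℂ} (hh : AnalyticOnNhd ℂ h (ball 0 1)) {C : ℝ}
    (hC : ∀ z ∈ ball (0:ℂ) 1, ‖h z‖ ≤ C) (n : ℕ) :
    ‖iteratedDeriv n h 0‖ ≤ n.factorial * C := by
  have hC0 : 0 ≤ C := le_trans (norm_nonneg _) (hC 0 (by simp))
  have key : ∀ r : ℝ, 0 < r → r < 1 → ‖iteratedDeriv n h 0‖ ≤ n.factorial * C / r ^ n := by
    intro r hr0 hr1
    set R : NNReal := ⟨r, hr0.le⟩ with hR
    have hsub : closedBall (0:ℂ) r ⊆ ball 0 1 := closedBall_subset_ball hr1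
    have hdiff : DifferentiableOn ℂ h (closedBall (0:ℂ) (R:ℝ)) :=
      (hh.mono hsub).differentiableOn
    have hps : HasFPowerSeriesOnBall h (cauchyPowerSeries h 0 (R:ℝ)) 0 R :=
      hdiff.hasFPowerSeriesOnBall (by exact_mod_cast hr0)
    have hmem : ∀ θ : ℝ, circleMap 0 r θ ∈ ball (0:ℂ) 1 := by
      intro θ
      simp only [mem_ball, dist_zero_right, norm_circleMap_zero]
      rw [abs_of_pos hr0]; exact hr1
    have hcont : Continuous fun θ : ℝ => ‖h (circleMap 0 r θ)‖ :=
      ((hh.continuousOn.comp (continuous_circleMap 0 r).continuousOn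
        (fun θ _ => hmem θ)).norm.comp_continuous continuous_id (fun θ => Set.mem_univ θ) : _)
    have hint : (∫ θ : ℝ in (0)..2 * Real.pi, ‖h (circleMap 0 r θ)‖) ≤ 2 * Real.pi * C := by
      have := intervalIntegral.integral_mono_on (a := 0) (b := 2 * Real.pi)
        Real.two_pi_pos.le (hcont.intervalIntegrable 0 (2 * Real.pi))
        (intervalIntegrable_const (μ := MeasureTheory.volume) (c := C)) (fun θ _ => hC _ (hmem θ))
      simpa [mul_comm] using this
    have hcoeff : ‖cauchyPowerSeries h 0 (R:ℝ) n‖ ≤ C / r ^ n := by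
      refine (norm_cauchyPowerSeries_le h 0 (R:ℝ) n).trans ?_
      have habs : |(R:ℝ)| = r := abs_of_pos hr0
      rw [habs, inv_pow, ← div_eq_mul_inv]
      gcongr
      calc (2 * Real.pi)⁻¹ * ∫ θ : ℝ in (0)..2 * Real.pi, ‖h (circleMap 0 (R:ℝ) θ)‖
          ≤ (2 * Real.pi)⁻¹ * (2 * Real.pi * C) := by
            gcongr
            · exact hint
        _ = C := by field_simp
    have h1 : iteratedDeriv n h 0 = (n.factorial : ℂ) * (cauchyPowerSeries h 0 (R:ℝ) n fun _ => (1:ℂ)) := by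
      rw [iteratedDeriv_eq_iteratedFDeriv, ← hps.factorial_smul (1:ℂ) n, nsmul_eq_mul]
    rw [h1]
    have h2 : ‖(cauchyPowerSeries h 0 (R:ℝ) n fun _ => (1:ℂ))‖ ≤ C / r ^ n := by
      refine le_trans ?_ hcoeff
      have := (cauchyPowerSeries h 0 (R:ℝ) n).le_opNorm (fun _ => (1:ℂ))
      simpa using this
    rw [norm_mul, Complex.norm_natCast, mul_div_assoc]
    exact mul_le_mul_of_nonneg_left h2 (Nat.cast_nonneg _)
  have hev : ∀ᶠ r : ℝ in nhdsWithin 1 (Set.Iio 1), ‖iteratedDeriv n h 0‖ ≤ n.factorial * C / r ^ n := by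
    filter_upwards [Ioo_mem_nhdsLT_of_mem (by norm_num : (1:ℝ) ∈ Set.Ioc (1/2) 1)] with r hr
    exact key r (by linarith [hr.1]) hr.2
  have hc : ContinuousAt (fun r : ℝ => (n.factorial : ℝ) * C / r ^ n) 1 :=
    ContinuousAt.div continuousAt_const ((continuous_pow n).continuousAt) (by norm_num)
  have hlim : Tendsto (fun r : ℝ => (n.factorial : ℝ) * C / r ^ n) (nhdsWithin 1 (Set.Iio 1)) (nhds (n.factorial * C)) := by
    have := hc.tendsto.mono_left (nhdsWithin_le_nhds (s := Set.Iio 1))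
    simpa using this
  exact ge_of_tendsto hlim hev

lemma coeff_F {F : ℂ → ℂ} {γ : ℕ → ℂ}
    (hγ : ∀ z ∈ ball (0:ℂ) 1, HasSum (fun n : ℕ => 2 * γ n * z ^ n) (F z)) (n : ℕ) :
    iteratedDeriv n F 0 = (n.factorial : ℂ) * (2 * γ n) := by
  set p := FormalMultilinearSeries.ofScalars ℂ (fun n => 2 * γ n) with hp
  have hrad : 1 ≤ p.radius := by
    refine ENNReal.le_of_forall_nnreal_lt (fun r hr => ?_)
    have hr1 : (r : ℝ) < 1 := by exact_mod_cast hr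
    have hz : ((r:ℝ) : ℂ) ∈ ball (0:ℂ) 1 := by
      simp [abs_of_nonneg r.coe_nonneg, hr1, Complex.norm_real]
    have hsum := (hγ _ hz).summable
    have ht : Tendsto (fun n : ℕ => ‖p n‖ * (r:ℝ) ^ n) atTop (nhds 0) := by
      have h0 := hsum.tendsto_atTop_zero
      have h1 : Tendsto (fun n : ℕ => ‖2 * γ n * ((r:ℝ):ℂ) ^ n‖) atTop (nhds 0) :=
        tendsto_zero_iff_norm_tendsto_zero.mp h0
      refine h1.congr (fun n => ?_)
      rw [hp, FormalMultilinearSeries.ofScalars_norm, norm_mul, norm_pow]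
      simp [abs_of_nonneg r.coe_nonneg]
    exact p.le_radius_of_tendsto ht
  have hps : HasFPowerSeriesOnBall F p 0 1 := by
    refine ⟨hrad, by norm_num, fun {y} hy => ?_⟩
    have hy' : y ∈ ball (0:ℂ) 1 := by
      rw [EMetric.mem_ball, edist_zero_right] at hy
      simp only [mem_ball, dist_zero_right]
      rw [← ofReal_norm] at hy; exact ENNReal.ofReal_lt_one.mp hy
    have hgy := hγ y hy'
    rw [zero_add]
    have : (fun n : ℕ => p n fun _ => y) = fun n : ℕ => 2 * γ n * y ^ n := by
      funext m
      rw [hp, FormalMultilinearSeries.ofScalars_apply_eq, smul_eq_mul]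
    rw [this]
    exact hgy
  have := hps.factorial_smul (1:ℂ) n
  rw [iteratedDeriv_eq_iteratedFDeriv, ← this, nsmul_eq_mul, hp,
    FormalMultilinearSeries.ofScalars_apply_eq]
  simp

lemma schwarz_two_aux {u : ℂ → ℂ} (hu : AnalyticOnNhd ℂ u (ball 0 1))
    (hub : ∀ z ∈ ball (0:ℂ) 1, ‖u z‖ ≤ 1) (h0 : ‖u 0‖ < 1) :
    ‖iteratedDeriv 2 u 0‖ ≤ 2 * (1 - ‖u 0‖ ^ 2) := by
  have h01 : (0:ℂ) ∈ ball (0:ℂ) 1 := by simp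
  set t := u 0 with ht
  set tc := (starRingEnd ℂ) t with htc
  set k : ℂ → ℂ := fun z => (1/2 : ℂ) * (u z + u (-z)) with hk
  have hmemneg : ∀ z ∈ ball (0:ℂ) 1, -z ∈ ball (0:ℂ) 1 := by
    intro z hz; simpa using hz
  have hkan : AnalyticOnNhd ℂ k (ball 0 1) := by
    intro z hz
    exact (analyticAt_const.mul ((hu z hz).add
      (((hu (-z) (hmemneg z hz)).comp (analyticAt_id.neg)) : AnalyticAt ℂ (fun z => u (-z)) z)))
  have hkb : ∀ z ∈ ball (0:ℂ) 1, ‖k z‖ ≤ 1 := by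
    intro z hz
    rw [hk]
    calc ‖(1/2 : ℂ) * (u z + u (-z))‖ = (1/2) * ‖u z + u (-z)‖ := by
          rw [norm_mul]; norm_num
      _ ≤ (1/2) * (‖u z‖ + ‖u (-z)‖) := by gcongr; exact norm_add_le _ _
      _ ≤ (1/2) * (1 + 1) := by
          gcongr
          · exact hub z hz
          · exact hub _ (hmemneg z hz)
      _ = 1 := by norm_num
  have hk0 : k 0 = t := by rw [hk]; simp [ht]; ring
  have hudiff : ∀ z ∈ ball (0:ℂ) 1, DifferentiableAt ℂ u z := fun z hz => (hu z hz).differentiableAt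
  -- derivative of k
  have hkd : ∀ z ∈ ball (0:ℂ) 1,
      HasDerivAt k ((1/2 : ℂ) * (deriv u z - deriv u (-z))) z := by
    intro z hz
    have h1 : HasDerivAt u (deriv u z) z := (hudiff z hz).hasDerivAt
    have h2 : HasDerivAt (fun w => u (-w)) (-deriv u (-z)) z := by
      simpa [Function.comp_def] using (HasDerivAt.scomp z (hudiff (-z) (hmemneg z hz)).hasDerivAt (hasDerivAt_neg z))
    have := (h1.add h2).const_mul (1/2 : ℂ)
    exact this.congr_deriv (by ring)
  have hkd0 : deriv k 0 = 0 := by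
    have := (hkd 0 h01).deriv
    simpa using this
  -- second derivative of k equals second derivative of u
  have hkEq : Set.EqOn (deriv k) (fun z => (1/2 : ℂ) * (deriv u z - deriv u (-z))) (ball 0 1) :=
    fun z hz => (hkd z hz).deriv
  have hk2 : iteratedDeriv 2 k 0 = iteratedDeriv 2 u 0 := by
    have hev : deriv k =ᶠ[nhds 0] (fun z => (1/2 : ℂ) * (deriv u z - deriv u (-z))) :=
      Filter.eventuallyEq_of_mem (isOpen_ball.mem_nhds h01) hkEq
    have hud : AnalyticOnNhd ℂ (deriv u) (ball 0 1) := hu.deriv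
    have h1 : HasDerivAt (deriv u) (deriv (deriv u) 0) 0 := (hud 0 h01).differentiableAt.hasDerivAt
    have h2 : HasDerivAt (fun z => deriv u (-z)) (-(deriv (deriv u) 0)) 0 := by
      have h1' : HasDerivAt (deriv u) (deriv (deriv u) 0) (-0:ℂ) := by
        rw [neg_zero]; exact h1
      have := HasDerivAt.scomp (0:ℂ) h1' (hasDerivAt_neg (0:ℂ))
      simpa [Function.comp_def] using this
    have h3 : HasDerivAt (fun z => (1/2 : ℂ) * (deriv u z - deriv u (-z)))
        (deriv (deriv u) 0) 0 := by
      have := (h1.sub h2).const_mul (1/2 : ℂ)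
      exact this.congr_deriv (by ring)
    rw [show (2:ℕ) = 1 + 1 from rfl, iteratedDeriv_succ, iteratedDeriv_succ,
      iteratedDeriv_zero, iteratedDeriv_succ, iteratedDeriv_succ, iteratedDeriv_zero]
    rw [hev.deriv_eq, h3.deriv]
  -- Möbius transform
  set g : ℂ → ℂ := fun z => 1 - tc * k z with hg
  have htle : ‖t‖ < 1 := h0
  have hgne : ∀ z ∈ ball (0:ℂ) 1, g z ≠ 0 := by
    intro z hz hzero
    have h1 : (1:ℂ) = tc * k z := by rw [hg] at hzero; linear_combination hzero
    have : (1:ℝ) ≤ ‖t‖ := by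
      calc (1:ℝ) = ‖(1:ℂ)‖ := by simp
        _ = ‖tc‖ * ‖k z‖ := by rw [h1, norm_mul]
        _ ≤ ‖tc‖ * 1 := by gcongr; exact hkb z hz
        _ = ‖t‖ := by rw [mul_one, htc, RCLike.norm_conj]
    linarith
  set D : ℂ → ℂ := fun z => (g z)⁻¹ with hD
  set M : ℂ → ℂ := fun z => (k z - t) * D z with hM
  have hgan : AnalyticOnNhd ℂ g (ball 0 1) := fun z hz =>
    (analyticAt_const.sub (analyticAt_const.mul (hkan z hz)))
  have hDan : AnalyticOnNhd ℂ D (ball 0 1) := fun z hz => (hgan z hz).inv (hgne z hz)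
  have hMan : AnalyticOnNhd ℂ M (ball 0 1) := fun z hz =>
    ((hkan z hz).sub analyticAt_const).mul (hDan z hz)
  -- bound on M
  have hMb : ∀ z ∈ ball (0:ℂ) 1, ‖M z‖ ≤ 1 := by
    intro z hz
    have hnum : ‖k z - t‖ ≤ ‖g z‖ := by
      have hsq : Complex.normSq (g z) - Complex.normSq (k z - t)
          = (1 - Complex.normSq t) * (1 - Complex.normSq (k z)) := by
        rw [hg, htc]
        simp only [Complex.normSq_apply, Complex.sub_re, Complex.sub_im, Complex.one_re,
          Complex.one_im, Complex.mul_re, Complex.mul_im, Complex.conj_re, Complex.conj_im]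
        ring
      have hknorm : Complex.normSq (k z) ≤ 1 := by
        rw [← Complex.sq_norm]
        nlinarith [hkb z hz, norm_nonneg (k z)]
      have htnorm : Complex.normSq t ≤ 1 := by
        rw [← Complex.sq_norm]
        nlinarith [htle.le, norm_nonneg t]
      have hpos : 0 ≤ Complex.normSq (g z) - Complex.normSq (k z - t) := by
        rw [hsq]
        apply mul_nonneg <;> linarith
      rw [Complex.norm_def, Complex.norm_def]
      exact Real.sqrt_le_sqrt (by linarith)
    rw [hM]
    simp only
    rw [norm_mul, hD]
    simp only
    rw [norm_inv]
    rw [mul_inv_le_iff₀ (norm_pos_iff.mpr (hgne z hz))]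
    simpa using hnum
  -- second derivative of M at 0
  have hkdan : AnalyticOnNhd ℂ (deriv k) (ball 0 1) := hkan.deriv
  set Dd : ℂ → ℂ := fun z => (tc * deriv k z) * (D z)^2 with hDd
  have hDdan : AnalyticOnNhd ℂ Dd (ball 0 1) := fun z hz =>
    (analyticAt_const.mul (hkdan z hz)).mul ((hDan z hz).pow 2)
  have hkd' : ∀ z ∈ ball (0:ℂ) 1, HasDerivAt k (deriv k z) z := by
    intro z hz
    have hkval : deriv k z = 1/2 * (deriv u z - deriv u (-z)) := (hkd z hz).deriv
    rw [hkval]; exact hkd z hz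
  have hDderiv : ∀ z ∈ ball (0:ℂ) 1, HasDerivAt D (Dd z) z := by
    intro z hz
    have hgd : HasDerivAt g (-(tc * deriv k z)) z := ((hkd' z hz).const_mul tc).const_sub 1
    have := hgd.inv (hgne z hz)
    refine this.congr_deriv ?_
    rw [hDd, hD]
    simp only
    field_simp
  have hMderiv : ∀ z ∈ ball (0:ℂ) 1,
      HasDerivAt M (deriv k z * D z + (k z - t) * Dd z) z := by
    intro z hz
    exact ((hkd' z hz).sub_const t).mul (hDderiv z hz)
  have hMEq : Set.EqOn (deriv M) (fun z => deriv k z * D z + (k z - t) * Dd z) (ball 0 1) :=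
    fun z hz => (hMderiv z hz).deriv
  have hM2 : iteratedDeriv 2 M 0 = iteratedDeriv 2 u 0 * D 0 := by
    have hev : deriv M =ᶠ[nhds 0] (fun z => deriv k z * D z + (k z - t) * Dd z) :=
      Filter.eventuallyEq_of_mem (isOpen_ball.mem_nhds h01) hMEq
    have ha : HasDerivAt (deriv k) (iteratedDeriv 2 u 0) 0 := by
      have := (hkdan 0 h01).differentiableAt.hasDerivAt
      rwa [show deriv (deriv k) 0 = iteratedDeriv 2 u 0 from by
        rw [← hk2]
        rw [show (2:ℕ) = 1 + 1 from rfl, iteratedDeriv_succ, iteratedDeriv_succ, iteratedDeriv_zero]] at this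
    have hb : HasDerivAt D (deriv D 0) 0 := (hDan 0 h01).differentiableAt.hasDerivAt
    have hc : HasDerivAt (fun z => k z - t) 0 0 := by
      have := (hkd 0 h01).sub_const t
      rwa [show (1/2 : ℂ) * (deriv u 0 - deriv u (-0)) = 0 from by rw [neg_zero]; ring] at this
    have hd : HasDerivAt Dd (deriv Dd 0) 0 := (hDdan 0 h01).differentiableAt.hasDerivAt
    have hsum : HasDerivAt (fun z => deriv k z * D z + (k z - t) * Dd z)
        (iteratedDeriv 2 u 0 * D 0) 0 := by
      have h' := (ha.mul hb).add (hc.mul hd)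
      have : (iteratedDeriv 2 u 0 * D 0 + deriv k 0 * deriv D 0) +
          (0 * Dd 0 + (k 0 - t) * deriv Dd 0) = iteratedDeriv 2 u 0 * D 0 := by
        rw [hkd0, hk0]; ring
      rwa [this] at h'
    rw [show (2:ℕ) = 1 + 1 from rfl, iteratedDeriv_succ, iteratedDeriv_succ, iteratedDeriv_zero,
      hev.deriv_eq, hsum.deriv]
  -- conclude via Cauchy bound
  have hC := cauchy_bound hMan hMb 2
  rw [hM2] at hC
  have hD0 : ‖D 0‖ = (1 - ‖t‖^2)⁻¹ := by
    have : g 0 = ((1 - ‖t‖^2 : ℝ) : ℂ) := by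
      show 1 - tc * k 0 = _
      rw [hk0, htc]
      rw [show ((starRingEnd ℂ) t) * t = (Complex.normSq t : ℂ) from by
        rw [← Complex.normSq_eq_conj_mul_self]]
      rw [← Complex.sq_norm]
      push_cast
      ring
    show ‖(g 0)⁻¹‖ = _
    rw [this, norm_inv, Complex.norm_real, Real.norm_eq_abs, abs_of_pos]
    nlinarith [htle, norm_nonneg t]
  rw [norm_mul, hD0] at hC
  have hpos : (0:ℝ) < 1 - ‖t‖^2 := by nlinarith [htle, norm_nonneg t]
  rw [mul_inv_le_iff₀ hpos] at hC
  calc ‖iteratedDeriv 2 u 0‖ ≤ ((2:ℕ).factorial : ℝ) * 1 * (1 - ‖t‖^2) := hC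
    _ = 2 * (1 - ‖t‖^2) := by norm_num [Nat.factorial]


lemma schwarz_two {u : ℂ → ℂ} (hu : AnalyticOnNhd ℂ u (ball 0 1))
    (hub : ∀ z ∈ ball (0:ℂ) 1, ‖u z‖ ≤ 1) :
    ‖iteratedDeriv 2 u 0‖ ≤ 2 * (1 - ‖u 0‖ ^ 2) := by
  have h01 : (0:ℂ) ∈ ball (0:ℂ) 1 := by simp
  have hu0 : ‖u 0‖ ≤ 1 := hub 0 h01
  have key : ∀ c : ℝ, 0 < c → c < 1 →
      ‖iteratedDeriv 2 u 0‖ ≤ 2 * (1 - c^2 * ‖u 0‖^2) / c := by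
    intro c hc0 hc1
    set v : ℂ → ℂ := fun z => (c:ℂ) * u z with hv
    have hvan : AnalyticOnNhd ℂ v (ball 0 1) := fun z hz => analyticAt_const.mul (hu z hz)
    have hvb : ∀ z ∈ ball (0:ℂ) 1, ‖v z‖ ≤ 1 := by
      intro z hz
      rw [hv]
      simp only [norm_mul, Complex.norm_real, Real.norm_eq_abs, abs_of_pos hc0]
      calc c * ‖u z‖ ≤ 1 * 1 := by
            apply mul_le_mul hc1.le (hub z hz) (norm_nonneg _) zero_le_one
        _ = 1 := one_mul 1
    have hv0 : ‖v 0‖ < 1 := by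
      rw [hv]
      simp only [norm_mul, Complex.norm_real, Real.norm_eq_abs, abs_of_pos hc0]
      calc c * ‖u 0‖ ≤ c * 1 := by gcongr
        _ < 1 := by linarith
    have hvd : ∀ z ∈ ball (0:ℂ) 1, HasDerivAt v ((c:ℂ) * deriv u z) z := fun z hz =>
      ((hu z hz).differentiableAt.hasDerivAt).const_mul (c:ℂ)
    have hvEq : Set.EqOn (deriv v) (fun z => (c:ℂ) * deriv u z) (ball 0 1) :=
      fun z hz => (hvd z hz).deriv
    have hv2 : iteratedDeriv 2 v 0 = (c:ℂ) * iteratedDeriv 2 u 0 := by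
      have hev : deriv v =ᶠ[nhds 0] (fun z => (c:ℂ) * deriv u z) :=
        Filter.eventuallyEq_of_mem (isOpen_ball.mem_nhds h01) hvEq
      have h2 : HasDerivAt (fun z => (c:ℂ) * deriv u z) ((c:ℂ) * deriv (deriv u) 0) 0 :=
        ((hu.deriv 0 h01).differentiableAt.hasDerivAt).const_mul (c:ℂ)
      rw [show (2:ℕ) = 1 + 1 from rfl, iteratedDeriv_succ, iteratedDeriv_succ, iteratedDeriv_zero,
        iteratedDeriv_succ, iteratedDeriv_succ, iteratedDeriv_zero, hev.deriv_eq, h2.deriv]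
    have haux := schwarz_two_aux hvan hvb hv0
    rw [hv2] at haux
    have hnv0 : ‖v 0‖^2 = c^2 * ‖u 0‖^2 := by
      rw [hv]
      simp only [norm_mul, Complex.norm_real, Real.norm_eq_abs, abs_of_pos hc0]
      ring
    rw [hnv0, norm_mul, Complex.norm_real, Real.norm_eq_abs, abs_of_pos hc0] at haux
    rw [le_div_iff₀ hc0]
    linarith [haux]
  have hev : ∀ᶠ c : ℝ in nhdsWithin 1 (Set.Iio 1),
      ‖iteratedDeriv 2 u 0‖ ≤ 2 * (1 - c^2 * ‖u 0‖^2) / c := by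
    filter_upwards [Ioo_mem_nhdsLT_of_mem (by norm_num : (1:ℝ) ∈ Set.Ioc (1/2) 1)] with c hc
    exact key c (by linarith [hc.1]) hc.2
  have hc : ContinuousAt (fun c : ℝ => 2 * (1 - c^2 * ‖u 0‖^2) / c) 1 := by
    apply ContinuousAt.div (by fun_prop) continuousAt_id (by norm_num)
  have hlim : Tendsto (fun c : ℝ => 2 * (1 - c^2 * ‖u 0‖^2) / c) (nhdsWithin 1 (Set.Iio 1))
      (nhds (2 * (1 - ‖u 0‖^2))) := by
    have := hc.tendsto.mono_left (nhdsWithin_le_nhds (s := Set.Iio 1))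
    simpa using this
  exact ge_of_tendsto hlim hev

/-- |γₙ| ≤ 1/(2n) for n = 1, 2, 3, for f ∈ BS(α), 0 ≤ α ≤ 1 -/
theorem stmt_8 (α : ℝ) (hα0 : 0 ≤ α) (hα1 : α ≤ 1)
    (f ω F : ℂ → ℂ) (γ : ℕ → ℂ)
    -- f is analytic on the unit disk with f(0) = 0, f'(0) = 1, f(z) ≠ 0 for z ≠ 0
    (hf : AnalyticOnNhd ℂ f (ball 0 1))
    (hf0 : f 0 = 0) (hf1 : deriv f 0 = 1)
    (hfz : ∀ z ∈ ball (0 : ℂ) 1, z ≠ 0 → f z ≠ 0)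
    -- ω is a Schwarz function
    (hω : AnalyticOnNhd ℂ ω (ball 0 1))
    (hω0 : ω 0 = 0)
    (hωb : ∀ z ∈ ball (0 : ℂ) 1, ω z ∈ ball (0 : ℂ) 1)
    -- f ∈ BS(α): z f'(z)/f(z) - 1 = ω(z)/(1 - α ω(z)²)
    (heq : ∀ z ∈ ball (0 : ℂ) 1, z ≠ 0 →
      z * deriv f z / f z - 1 = ω z / (1 - (α : ℂ) * ω z ^ 2))
    -- F is an analytic branch of log(f(z)/z) on the unit disk
    (hF : AnalyticOnNhd ℂ F (ball 0 1))
    (hF0 : F 0 = 0)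
    (hFf : ∀ z ∈ ball (0 : ℂ) 1, z ≠ 0 → Complex.exp (F z) = f z / z)
    -- the logarithmic coefficients: log(f(z)/z) = 2 Σ_{n ≥ 1} γₙ zⁿ
    (hγ : ∀ z ∈ ball (0 : ℂ) 1, HasSum (fun n : ℕ => 2 * γ n * z ^ n) (F z)) :
    ∀ n : ℕ, 1 ≤ n → n ≤ 3 → ‖γ n‖ ≤ 1 / (2 * n) := by
  have h01 : (0:ℂ) ∈ ball (0:ℂ) 1 := by simp
  -- the function u = ω(z)/z
  set u : ℂ → ℂ := dslope ω 0 with hu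
  have hu_an : AnalyticOnNhd ℂ u (ball 0 1) := by
    intro z hz
    rcases eq_or_ne z 0 with rfl | hz0
    · obtain ⟨p, hp⟩ := hω 0 h01
      exact hp.has_fpower_series_dslope_fslope.analyticAt
    · have hg : AnalyticAt ℂ (fun w => w⁻¹ * ω w) z :=
        ((analyticAt_id.inv hz0)).mul (hω z hz)
      refine hg.congr ?_
      have hmem : {w : ℂ | w ≠ 0} ∈ nhds z := isOpen_ne.mem_nhds hz0
      filter_upwards [hmem] with w hw
      rw [hu, dslope_of_ne ω hw, slope_def_field]
      field_simp [hω0]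
      rw [hω0]; ring
  have hub : ∀ z ∈ ball (0:ℂ) 1, ‖u z‖ ≤ 1 := by
    intro z hz
    have hmaps : Set.MapsTo ω (ball 0 1) (closedBall (ω 0) 1) := by
      rw [hω0]; exact fun w hw => ball_subset_closedBall (hωb w hw)
    have := Complex.norm_dslope_le_div_of_mapsTo_ball (hω.differentiableOn) hmaps hz
    simpa using this
  have hωu : ∀ z ∈ ball (0:ℂ) 1, ω z = z * u z := by
    intro z hz
    rcases eq_or_ne z 0 with rfl | hz0
    · simp [hω0]
    · rw [hu, dslope_of_ne ω hz0, slope_def_field]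
      field_simp [hω0]
      rw [hω0]; ring
  have hu0 : u 0 = deriv ω 0 := dslope_same ω 0
  have hs1 : ‖u 0‖ ≤ 1 := hub 0 h01
  -- the denominator
  set V : ℂ → ℂ := fun z => 1 - (α:ℂ) * ω z ^ 2 with hV
  have hVne : ∀ z ∈ ball (0:ℂ) 1, V z ≠ 0 := by
    intro z hz hzero
    have h1 : (1:ℂ) = (α:ℂ) * ω z ^ 2 := by rw [hV] at hzero; linear_combination hzero
    have hn : ‖ω z‖ < 1 := by simpa [mem_ball, dist_zero_right] using hωb z hz
    have : (1:ℝ) = α * ‖ω z‖^2 := by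
      calc (1:ℝ) = ‖(1:ℂ)‖ := by simp
        _ = ‖(α:ℂ)‖ * ‖ω z‖^2 := by rw [h1, norm_mul, norm_pow]
        _ = α * ‖ω z‖^2 := by rw [Complex.norm_real, Real.norm_eq_abs, abs_of_nonneg hα0]
    nlinarith [norm_nonneg (ω z)]
  set W : ℂ → ℂ := fun z => (V z)⁻¹ with hW
  have hVan : AnalyticOnNhd ℂ V (ball 0 1) := fun z hz =>
    analyticAt_const.sub (analyticAt_const.mul ((hω z hz).pow 2))
  have hWan : AnalyticOnNhd ℂ W (ball 0 1) := fun z hz => (hVan z hz).inv (hVne z hz)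
  set Ψ : ℂ → ℂ := fun z => u z * W z with hΨ
  have hΨan : AnalyticOnNhd ℂ Ψ (ball 0 1) := fun z hz => (hu_an z hz).mul (hWan z hz)
  have hW0 : W 0 = 1 := by rw [hW]; simp [hV, hω0]
  -- deriv F = Ψ on the ball
  have hFΨne : ∀ z ∈ ball (0:ℂ) 1, z ≠ 0 → deriv F z = Ψ z := by
    intro z hz hz0
    have hopen : IsOpen (ball (0:ℂ) 1 ∩ {w | w ≠ 0}) := isOpen_ball.inter isOpen_ne
    have hmem : (ball (0:ℂ) 1 ∩ {w | w ≠ 0}) ∈ nhds z := hopen.mem_nhds ⟨hz, hz0⟩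
    have hev : (fun w => Complex.exp (F w)) =ᶠ[nhds z] (fun w => f w / w) := by
      filter_upwards [hmem] with w hw
      exact hFf w hw.1 hw.2
    have hd1 : HasDerivAt (fun w => Complex.exp (F w)) (Complex.exp (F z) * deriv F z) z :=
      ((hF z hz).differentiableAt.hasDerivAt).cexp
    have hd2 : HasDerivAt (fun w => f w / w) ((deriv f z * z - f z * 1) / z^2) z :=
      ((hf z hz).differentiableAt.hasDerivAt).div (hasDerivAt_id z) hz0
    have hd1' : HasDerivAt (fun w => Complex.exp (F w)) ((deriv f z * z - f z * 1) / z^2) z :=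
      hd2.congr_of_eventuallyEq hev
    have e1 : Complex.exp (F z) * deriv F z = (deriv f z * z - f z * 1) / z^2 :=
      hd1.unique hd1'
    rw [hFf z hz hz0] at e1
    have hfz' : f z ≠ 0 := hfz z hz hz0
    have heqz := heq z hz hz0
    have hVz := hVne z hz
    have hωz := hωu z hz
    -- solve for deriv F z
    field_simp at e1
    have e2 : f z * deriv F z * z = deriv f z * z - f z := by
      apply mul_right_cancel₀ hz0
      linear_combination z * e1
    have heqz' : (z * deriv f z - f z) * V z = ω z * f z := by
      calc (z * deriv f z - f z) * V z = ((z * deriv f z / f z - 1) * f z) * V z := by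
            field_simp
        _ = (ω z / V z * f z) * V z := by rw [heqz]
        _ = ω z * f z := by field_simp
    have e3 : deriv F z * V z * (f z * z) = u z * (f z * z) := by
      calc deriv F z * V z * (f z * z) = (f z * deriv F z * z) * V z := by ring
        _ = (deriv f z * z - f z) * V z := by rw [e2]
        _ = (z * deriv f z - f z) * V z := by ring
        _ = ω z * f z := heqz'
        _ = (z * u z) * f z := by rw [hωz]
        _ = u z * (f z * z) := by ring
    have e4 : deriv F z * V z = u z := mul_right_cancel₀ (mul_ne_zero hfz' hz0) e3
    show deriv F z = u z * (V z)⁻¹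
    exact (eq_mul_inv_iff_mul_eq₀ hVz).mpr e4
  have hFΨ : Set.EqOn (deriv F) Ψ (ball 0 1) := by
    intro z hz
    rcases eq_or_ne z 0 with rfl | hz0
    · have hcF : ContinuousAt (deriv F) 0 := ((hF.deriv) 0 h01).continuousAt
      have hcΨ : ContinuousAt Ψ 0 := (hΨan 0 h01).continuousAt
      have hevp : ∀ᶠ w in nhdsWithin (0:ℂ) {(0:ℂ)}ᶜ, deriv F w = Ψ w := by
        have hb : ball (0:ℂ) 1 ∈ nhdsWithin (0:ℂ) {(0:ℂ)}ᶜ :=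
          nhdsWithin_le_nhds (isOpen_ball.mem_nhds h01)
        filter_upwards [hb, self_mem_nhdsWithin] with w hw hw0
        exact hFΨne w hw hw0
      have h1 : Tendsto (deriv F) (nhdsWithin (0:ℂ) {(0:ℂ)}ᶜ) (nhds (deriv F 0)) :=
        hcF.continuousWithinAt
      have h2 : Tendsto (deriv F) (nhdsWithin (0:ℂ) {(0:ℂ)}ᶜ) (nhds (Ψ 0)) := by
        refine Tendsto.congr' ?_ (hcΨ.continuousWithinAt)
        filter_upwards [hevp] with w hw
        exact hw.symm
      exact tendsto_nhds_unique h1 h2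
    · exact hFΨne z hz hz0
  -- first derivative at 0
  have hΨ0 : Ψ 0 = u 0 := by
    show u 0 * W 0 = u 0
    rw [hW0, mul_one]
  have hb1 : deriv F 0 = u 0 := by rw [hFΨ h01, hΨ0]
  -- HasDerivAt infrastructure
  have hωd : ∀ z ∈ ball (0:ℂ) 1, HasDerivAt ω (deriv ω z) z :=
    fun z hz => (hω z hz).differentiableAt.hasDerivAt
  have hud : ∀ z ∈ ball (0:ℂ) 1, HasDerivAt u (deriv u z) z :=
    fun z hz => (hu_an z hz).differentiableAt.hasDerivAt
  have hVd : ∀ z ∈ ball (0:ℂ) 1, HasDerivAt V (-((α:ℂ) * (2 * ω z * deriv ω z))) z := by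
    intro z hz
    have h := (((hωd z hz).pow 2).const_mul (α:ℂ)).const_sub 1
    exact h.congr_deriv (by ring)
  set Wd : ℂ → ℂ := fun z => ((α:ℂ) * (2 * ω z * deriv ω z)) * (W z)^2 with hWd
  have hWdan : AnalyticOnNhd ℂ Wd (ball 0 1) := fun z hz =>
    (analyticAt_const.mul ((analyticAt_const.mul (hω z hz)).mul ((hω.deriv) z hz))).mul
      ((hWan z hz).pow 2)
  have hWderiv : ∀ z ∈ ball (0:ℂ) 1, HasDerivAt W (Wd z) z := by
    intro z hz
    have h := (hVd z hz).inv (hVne z hz)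
    refine h.congr_deriv ?_
    rw [hWd, hW]
    simp only
    field_simp
  set Φ : ℂ → ℂ := fun z => deriv u z * W z + u z * Wd z with hΦ
  have hΨd : ∀ z ∈ ball (0:ℂ) 1, HasDerivAt Ψ (Φ z) z :=
    fun z hz => (hud z hz).mul (hWderiv z hz)
  have hdF2 : Set.EqOn (deriv (deriv F)) Φ (ball 0 1) := by
    intro z hz
    have hev : deriv F =ᶠ[nhds z] Ψ :=
      Filter.eventuallyEq_of_mem (isOpen_ball.mem_nhds hz) hFΨ
    rw [hev.deriv_eq, (hΨd z hz).deriv]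
  have hWd0 : Wd 0 = 0 := by rw [hWd]; simp [hω0]
  have hΦ0 : Φ 0 = deriv u 0 := by
    show deriv u 0 * W 0 + u 0 * Wd 0 = deriv u 0
    rw [hW0, hWd0]
    ring
  have hb2 : iteratedDeriv 2 F 0 = deriv u 0 := by
    rw [show (2:ℕ) = 1 + 1 from rfl, iteratedDeriv_succ, iteratedDeriv_succ, iteratedDeriv_zero,
      hdF2 h01, hΦ0]
  -- third derivative
  have hdω0 : deriv ω 0 = u 0 := hu0.symm
  set R : ℂ → ℂ := fun z => ((α:ℂ) * 2 * deriv ω z) * (W z)^2 with hR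
  have hRan : AnalyticOnNhd ℂ R (ball 0 1) := fun z hz =>
    (analyticAt_const.mul ((hω.deriv) z hz)).mul ((hWan z hz).pow 2)
  have hWdR : Wd = fun z => ω z * R z := by
    funext z
    rw [hWd, hR]
    ring
  have hWdderiv0 : HasDerivAt Wd (2 * (α:ℂ) * (u 0)^2) 0 := by
    rw [hWdR]
    have h := (hωd 0 h01).mul ((hRan 0 h01).differentiableAt.hasDerivAt)
    have hval : deriv ω 0 * R 0 + ω 0 * deriv R 0 = 2 * (α:ℂ) * (u 0)^2 := by
      rw [hω0, hdω0, hR]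
      simp only
      rw [hW0, hdω0]
      ring
    rwa [hval] at h
  have hΦd0 : HasDerivAt Φ (iteratedDeriv 2 u 0 + 2 * (α:ℂ) * (u 0)^3) 0 := by
    have ha : HasDerivAt (deriv u) (deriv (deriv u) 0) 0 :=
      ((hu_an.deriv) 0 h01).differentiableAt.hasDerivAt
    have hb : HasDerivAt W (Wd 0) 0 := hWderiv 0 h01
    have hc : HasDerivAt u (deriv u 0) 0 := hud 0 h01
    have h := (ha.mul hb).add (hc.mul hWdderiv0)
    have hval : (deriv (deriv u) 0 * W 0 + deriv u 0 * Wd 0) +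
        (deriv u 0 * Wd 0 + u 0 * (2 * (α:ℂ) * (u 0)^2))
        = iteratedDeriv 2 u 0 + 2 * (α:ℂ) * (u 0)^3 := by
      rw [hW0, hWd0, show deriv (deriv u) 0 = iteratedDeriv 2 u 0 from by
        rw [show (2:ℕ) = 1 + 1 from rfl, iteratedDeriv_succ, iteratedDeriv_succ, iteratedDeriv_zero]]
      ring
    rwa [hval] at h
  have hb3 : iteratedDeriv 3 F 0 = iteratedDeriv 2 u 0 + 2 * (α:ℂ) * (u 0)^3 := by
    have hev : deriv (deriv F) =ᶠ[nhds 0] Φ :=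
      Filter.eventuallyEq_of_mem (isOpen_ball.mem_nhds h01) hdF2
    rw [show (3:ℕ) = 1 + 1 + 1 from rfl, iteratedDeriv_succ, iteratedDeriv_succ,
      iteratedDeriv_succ, iteratedDeriv_zero, hev.deriv_eq, hΦd0.deriv]
  -- coefficient bounds
  have hcu1 : ‖deriv u 0‖ ≤ 1 := by
    have := cauchy_bound hu_an hub 1
    simpa [iteratedDeriv_one] using this
  have hcu2 : ‖iteratedDeriv 2 u 0‖ ≤ 2 * (1 - ‖u 0‖^2) := schwarz_two hu_an hub
  -- conclude
  intro n hn1 hn3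
  interval_cases n
  · -- n = 1
    have h := coeff_F hγ 1
    rw [iteratedDeriv_one, hb1] at h
    have hval : ‖u 0‖ = 2 * ‖γ 1‖ := by
      rw [h, norm_mul, norm_mul]
      simp [Nat.factorial]
    rw [show (1:ℝ)/(2*((1:ℕ):ℝ)) = 1/2 from by norm_num]
    linarith [hs1, hval.le, hval.ge]
  · -- n = 2
    have h := coeff_F hγ 2
    rw [hb2] at h
    have hval : ‖deriv u 0‖ = 4 * ‖γ 2‖ := by
      rw [h, norm_mul, norm_mul]
      simp [Nat.factorial]
      ring
    rw [show (1:ℝ)/(2*((2:ℕ):ℝ)) = 1/4 from by norm_num]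
    linarith [hcu1, hval.le, hval.ge]
  · -- n = 3
    have h := coeff_F hγ 3
    rw [hb3] at h
    have h12 : ‖iteratedDeriv 2 u 0 + 2 * (α:ℂ) * (u 0)^3‖ = 12 * ‖γ 3‖ := by
      rw [h, norm_mul, norm_mul]
      simp [Nat.factorial]
      ring
    have hbound : ‖iteratedDeriv 2 u 0 + 2 * (α:ℂ) * (u 0)^3‖ ≤ 2 := by
      calc ‖iteratedDeriv 2 u 0 + 2 * (α:ℂ) * (u 0)^3‖
          ≤ ‖iteratedDeriv 2 u 0‖ + ‖2 * (α:ℂ) * (u 0)^3‖ := norm_add_le _ _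
        _ = ‖iteratedDeriv 2 u 0‖ + 2 * α * ‖u 0‖^3 := by
            rw [norm_mul, norm_mul, norm_pow]
            simp [Complex.norm_real, abs_of_nonneg hα0]
        _ ≤ 2 * (1 - ‖u 0‖^2) + 2 * α * ‖u 0‖^3 := by linarith [hcu2]
        _ ≤ 2 := by
            have e1 : α * ‖u 0‖^3 ≤ ‖u 0‖^3 := by
              nlinarith [pow_nonneg (norm_nonneg (u 0)) 3]
            have e2 : ‖u 0‖^3 ≤ ‖u 0‖^2 := by
              nlinarith [sq_nonneg (‖u 0‖), norm_nonneg (u 0), hs1]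
            linarith
    rw [show (1:ℝ)/(2*((3:ℕ):ℝ)) = 1/6 from by norm_num]
    rw [h12] at hbound
    linarith [hbound]
end

section
/- Let 0 ≤ α ≤ 1, let f be in the class BS(α), and let γ_n be the logarithmic coefficients of f. Then |γ_n| ≤ 1/2 for every positive integer n. -/
open Metric Filter NNReal Topology

noncomputable def cpsCoeff (g : ℂ → ℂ) (n : ℕ) : ℂ :=
  (cauchyPowerSeries g 0 (1/2 : ℝ)).coeff n

lemma aux_hasFPS (g : ℂ → ℂ) (hg : DifferentiableOn ℂ g (ball 0 1))
    {r : ℝ} (h0 : 0 < r) (h1 : r < 1) :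
    HasFPowerSeriesAt g (cauchyPowerSeries g 0 r) 0 := by
  lift r to ℝ≥0 using h0.le with r' hr'
  exact ((hg.mono (closedBall_subset_ball h1)).hasFPowerSeriesOnBall
    (by exact_mod_cast h0)).hasFPowerSeriesAt

lemma aux_indep (g : ℂ → ℂ) (hg : DifferentiableOn ℂ g (ball 0 1))
    {r : ℝ} (h0 : 0 < r) (h1 : r < 1) (n : ℕ) :
    (cauchyPowerSeries g 0 r).coeff n = cpsCoeff g n :=
  congrArg (fun p => FormalMultilinearSeries.coeff p n)
    ((aux_hasFPS g hg h0 h1).eq_formalMultilinearSeries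
      (aux_hasFPS g hg (by norm_num) (by norm_num)))

lemma aux_bound (g : ℂ → ℂ) (hg : DifferentiableOn ℂ g (ball 0 1))
    {r : ℝ} (h0 : 0 < r) (h1 : r < 1) (n : ℕ) {C : ℝ}
    (hb : ∀ z ∈ sphere (0:ℂ) r, ‖g z‖ ≤ C) :
    ‖cpsCoeff g n‖ ≤ C / r ^ n := by
  rw [← aux_indep g hg h0 h1 n]
  have hsub : sphere (0:ℂ) r ⊆ ball 0 1 :=
    sphere_subset_closedBall.trans (closedBall_subset_ball h1)
  have hC : 0 ≤ C := le_trans (norm_nonneg _)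
    (hb r (by simp [Complex.norm_real, abs_of_pos h0]))
  have hcont : Continuous fun θ : ℝ => ‖g (circleMap 0 r θ)‖ :=
    (hg.continuousOn.comp_continuous (continuous_circleMap 0 r)
      fun θ => hsub (circleMap_mem_sphere 0 h0.le θ)).norm
  have hint : (∫ θ : ℝ in (0)..2 * Real.pi, ‖g (circleMap 0 r θ)‖) ≤ 2 * Real.pi * C := by
    calc (∫ θ : ℝ in (0)..2 * Real.pi, ‖g (circleMap 0 r θ)‖)
        ≤ ∫ _ : ℝ in (0)..2 * Real.pi, C := by
          apply intervalIntegral.integral_mono_on Real.two_pi_pos.le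
            (hcont.intervalIntegrable _ _) intervalIntegrable_const
          intro θ _
          exact hb _ (circleMap_mem_sphere 0 h0.le θ)
      _ = 2 * Real.pi * C := by simp [mul_comm]
  have hcoeff : ‖(cauchyPowerSeries g 0 r).coeff n‖ ≤ ‖cauchyPowerSeries g 0 r n‖ := by
    have h2 := (cauchyPowerSeries g 0 r n).le_opNorm (fun _ => (1:ℂ))
    simp only [norm_one, Finset.prod_const_one, mul_one] at h2
    exact h2
  refine hcoeff.trans ((norm_cauchyPowerSeries_le g 0 r n).trans ?_)
  rw [abs_of_pos h0]
  calc (2 * Real.pi)⁻¹ * (∫ θ : ℝ in (0)..2 * Real.pi, ‖g (circleMap 0 r θ)‖) * r⁻¹ ^ n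
      ≤ (2 * Real.pi)⁻¹ * (2 * Real.pi * C) * r⁻¹ ^ n := by
        have h3 : (0:ℝ) ≤ (2 * Real.pi)⁻¹ := inv_nonneg.2 Real.two_pi_pos.le
        gcongr
    _ = C / r ^ n := by
        rw [inv_mul_eq_div, mul_div_assoc]
        field_simp [Real.pi_ne_zero]
        rw [one_div, inv_pow, mul_assoc, inv_mul_cancel₀ (pow_ne_zero _ h0.ne'), mul_one]

lemma aux_bridge (g : ℂ → ℂ) (b : ℕ → ℂ)
    (hb : ∀ z ∈ ball (0:ℂ) 1, HasSum (fun k => b k * z ^ k) (g z)) :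
    HasFPowerSeriesOnBall g (FormalMultilinearSeries.ofScalars ℂ b) 0 1 := by
  constructor
  · refine ENNReal.le_of_forall_nnreal_lt fun r hr => ?_
    have hr1 : (r : ℝ) < 1 := by exact_mod_cast hr
    have hz : ((r:ℝ) : ℂ) ∈ ball (0:ℂ) 1 := by
      simp [Complex.norm_real, abs_of_nonneg r.coe_nonneg, hr1]
    have hsum := (hb _ hz).summable
    refine FormalMultilinearSeries.le_radius_of_tendsto _ ?_ (l := 0)
    have h0 := (hsum.tendsto_atTop_zero).norm
    simp only [norm_zero] at h0
    convert h0 using 2 with k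
    rw [FormalMultilinearSeries.ofScalars_norm, norm_mul, norm_pow, Complex.norm_real,
      Real.norm_eq_abs, abs_of_nonneg r.coe_nonneg]
  · exact zero_lt_one
  · intro y hy
    have hy' : y ∈ ball (0:ℂ) 1 := by
      simp only [EMetric.mem_ball, edist_zero_right] at hy
      simp only [mem_ball, dist_zero_right]
      rwa [← ofReal_norm, ENNReal.ofReal_lt_one] at hy
    have := hb y hy'
    simp only [zero_add]
    convert this using 2 with k
    · rfl
    rw [FormalMultilinearSeries.ofScalars_apply_eq, smul_eq_mul]

lemma aux_coeff_eq (g : ℂ → ℂ) (b : ℕ → ℂ) (hg : DifferentiableOn ℂ g (ball 0 1))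
    (hb : ∀ z ∈ ball (0:ℂ) 1, HasSum (fun k => b k * z ^ k) (g z)) (n : ℕ) :
    cpsCoeff g n = b n := by
  have h1 := (aux_bridge g b hb).hasFPowerSeriesAt
  have h2 := aux_hasFPS g hg (r := 1/2) (by norm_num) (by norm_num)
  have h3 := h2.eq_formalMultilinearSeries h1
  rw [cpsCoeff, h3]
  have h4 : ((1 : Fin n → ℂ)) = (fun _ => (1:ℂ)) := rfl
  rw [FormalMultilinearSeries.coeff, h4, FormalMultilinearSeries.ofScalars_apply_eq]
  simp

lemma aux_coeff_add (g1 g2 : ℂ → ℂ) (h1 : DifferentiableOn ℂ g1 (ball 0 1))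
    (h2 : DifferentiableOn ℂ g2 (ball 0 1)) (n : ℕ) :
    cpsCoeff (fun z => g1 z + g2 z) n = cpsCoeff g1 n + cpsCoeff g2 n := by
  have ha := aux_hasFPS g1 h1 (r := 1/2) (by norm_num) (by norm_num)
  have hb := aux_hasFPS g2 h2 (r := 1/2) (by norm_num) (by norm_num)
  have hc := aux_hasFPS (fun z => g1 z + g2 z) (h1.add h2) (r := 1/2) (by norm_num) (by norm_num)
  have hd := hc.eq_formalMultilinearSeries (ha.add hb)
  rw [cpsCoeff, hd]
  rfl

lemma aux_ofScalars_coeff (b : ℕ → ℂ) (n : ℕ) :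
    (FormalMultilinearSeries.ofScalars ℂ b).coeff n = b n := by
  have h4 : ((1 : Fin n → ℂ)) = (fun _ => (1:ℂ)) := rfl
  rw [FormalMultilinearSeries.coeff, h4, FormalMultilinearSeries.ofScalars_apply_eq]
  simp

lemma aux_zderiv_rep {g : ℂ → ℂ} {b : ℕ → ℂ}
    (hp : HasFPowerSeriesOnBall g (FormalMultilinearSeries.ofScalars ℂ b) 0 1) :
    ∀ z ∈ ball (0:ℂ) 1,
      HasSum (fun k => (((k:ℕ):ℂ) * b k) * z ^ k) (z * deriv g z) := by
  intro z hz
  set c : ℕ → ℂ := fun k => ((k:ℕ):ℂ) * b k with hc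
  set p := FormalMultilinearSeries.ofScalars ℂ b with hpdef
  have hz' : z ∈ Metric.eball (0:ℂ) 1 := by
    simp only [mem_ball, dist_zero_right] at hz
    simp only [Metric.mem_eball, edist_zero_right]
    rwa [← ofReal_norm, ENNReal.ofReal_lt_one]
  have h1 := hp.fderiv.hasSum hz'
  have h2 := h1.mapL (ContinuousLinearMap.apply ℂ ℂ z)
  simp only [ContinuousLinearMap.apply_apply, zero_add] at h2
  have h3 : ∀ k : ℕ, (p.derivSeries k fun _ => z) z = ((k:ℂ)+1) * p.coeff (k+1) * z ^ (k+1) := by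
    intro k
    rw [FormalMultilinearSeries.derivSeries_apply_diag,
      FormalMultilinearSeries.apply_eq_pow_smul_coeff]
    push_cast [nsmul_eq_mul, smul_eq_mul]
    ring
  have h4 : fderiv ℂ g z z = z * deriv g z := by
    have h40 : fderiv ℂ g z z = fderiv ℂ g z (z • 1) := by norm_num
    rw [h40, (fderiv ℂ g z).map_smul, smul_eq_mul]
    rfl
  rw [h4] at h2
  simp only [h3] at h2
  have h6 : HasSum (fun k => c (k+1) * z ^ (k+1))
      (z * deriv g z - ∑ i ∈ Finset.range 1, c i * z ^ i) := by
    simp only [Finset.range_one, Finset.sum_singleton, hc, Nat.cast_zero, zero_mul, sub_zero,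
      pow_zero, mul_one]
    convert h2 using 2 with k
    · rfl
    rw [aux_ofScalars_coeff]
    push_cast
    ring
  exact (hasSum_nat_add_iff' 1).mp h6

section
variable (α : ℝ) (hα0 : 0 ≤ α) (hα1 : α ≤ 1)
    (f ω F : ℂ → ℂ) (γ : ℕ → ℂ)
    (hf : AnalyticOnNhd ℂ f (ball 0 1))
    (hf0 : f 0 = 0) (hf1 : deriv f 0 = 1)
    (hfz : ∀ z ∈ ball (0 : ℂ) 1, z ≠ 0 → f z ≠ 0)
    (hω : AnalyticOnNhd ℂ ω (ball 0 1))
    (hω0 : ω 0 = 0)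
    (hωb : ∀ z ∈ ball (0 : ℂ) 1, ω z ∈ ball (0 : ℂ) 1)
    (heq : ∀ z ∈ ball (0 : ℂ) 1, z ≠ 0 →
      z * deriv f z / f z - 1 = ω z / (1 - (α : ℂ) * ω z ^ 2))
    (hF : AnalyticOnNhd ℂ F (ball 0 1))
    (hF0 : F 0 = 0)
    (hFf : ∀ z ∈ ball (0 : ℂ) 1, z ≠ 0 → Complex.exp (F z) = f z / z)
    (hγ : ∀ z ∈ ball (0 : ℂ) 1, HasSum (fun n : ℕ => 2 * γ n * z ^ n) (F z))

include hα0 hα1 hωb in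
lemma lem_hden : ∀ z ∈ ball (0:ℂ) 1, (1:ℂ) - (α:ℂ) * ω z ^ 2 ≠ 0 := by
  intro z hz h
  have hωz : ‖ω z‖ < 1 := mem_ball_zero_iff.mp (hωb z hz)
  have h1 : ‖(α:ℂ) * ω z ^ 2‖ < 1 := by
    rw [norm_mul, norm_pow, Complex.norm_real, Real.norm_eq_abs, abs_of_nonneg hα0]
    calc α * ‖ω z‖ ^ 2 ≤ 1 * ‖ω z‖ ^ 2 := by
          gcongr
      _ < 1 := by nlinarith [norm_nonneg (ω z)]
  have h2 : (α:ℂ) * ω z ^ 2 = 1 := by linear_combination -h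
  rw [h2] at h1
  simp at h1

include hα0 hα1 hf hfz hω0 hωb heq hF hFf in
lemma lem_key : ∀ z ∈ ball (0:ℂ) 1,
    (z * deriv F z) * (1 - (α:ℂ) * ω z ^ 2) = ω z := by
  intro z hz
  rcases eq_or_ne z 0 with rfl | hz0
  · simp [hω0]
  · have hball : ball (0:ℂ) 1 ∈ 𝓝 z := isOpen_ball.mem_nhds hz
    have hev : (fun w => Complex.exp (F w)) =ᶠ[𝓝 z] (fun w => f w / w) := by
      filter_upwards [hball, isOpen_compl_singleton.mem_nhds hz0] with w hw hw0
      exact hFf w hw hw0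
    have hFz : DifferentiableAt ℂ F z := (hF z hz).differentiableAt
    have hfz' : DifferentiableAt ℂ f z := (hf z hz).differentiableAt
    have hd1 : deriv (fun w => Complex.exp (F w)) z
        = Complex.exp (F z) * deriv F z := by
      rw [deriv_cexp hFz]
    have hd2 : deriv (fun w => f w / w) z
        = (deriv f z * z - f z * 1) / z ^ 2 := by
      rw [deriv_fun_div (d := fun w => w) hfz' differentiableAt_id hz0, deriv_id'']
    have hde := hev.deriv_eq
    rw [hd1, hd2] at hde
    have hexp : Complex.exp (F z) = f z / z := hFf z hz hz0
    have hfz0 : f z ≠ 0 := hfz z hz hz0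
    have heqz := heq z hz hz0
    have hdenz := lem_hden α hα0 hα1 ω hωb z hz
    rw [hexp] at hde
    have eq1 : f z * deriv F z * z ^ 2 = (deriv f z * z - f z) * z := by
      field_simp at hde
      linear_combination z * hde
    have eq2 : (z * deriv f z - f z) * (1 - (α:ℂ) * ω z ^ 2) = ω z * f z := by
      field_simp at heqz
      rw [eq_div_iff (fun h => hdenz (by linear_combination h))] at heqz
      linear_combination heqz
    apply mul_left_cancel₀ hfz0
    apply mul_left_cancel₀ hz0
    linear_combination (1 - (α:ℂ) * ω z ^ 2) * eq1 + z * eq2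
end


section
variable {α : ℝ} {ω F : ℂ → ℂ}

theorem stmt_10_main (hα0 : 0 ≤ α) (hα1 : α ≤ 1)
    (hω : AnalyticOnNhd ℂ ω (ball 0 1))
    (hω0 : ω 0 = 0)
    (hωb : ∀ z ∈ ball (0 : ℂ) 1, ω z ∈ ball (0 : ℂ) 1)
    (hF : AnalyticOnNhd ℂ F (ball 0 1))
    (γ : ℕ → ℂ)
    (hγ : ∀ z ∈ ball (0 : ℂ) 1, HasSum (fun n : ℕ => 2 * γ n * z ^ n) (F z))
    (key : ∀ z ∈ ball (0:ℂ) 1, (z * deriv F z) * (1 - (α:ℂ) * ω z ^ 2) = ω z) :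
    ∀ n : ℕ, 1 ≤ n → ‖γ n‖ ≤ 1 / 2 := by
  intro n hn
  -- Schwarz lemma for ω
  have hSch : ∀ z ∈ ball (0:ℂ) 1, ‖ω z‖ ≤ ‖z‖ := by
    intro z hz
    exact Complex.norm_le_norm_of_mapsTo_ball hω.differentiableOn
      (fun w hw => ball_subset_closedBall (hωb w hw)) hω0 (mem_ball_zero_iff.mp hz)
  -- analytic data
  have hDF : AnalyticOnNhd ℂ (deriv F) (ball 0 1) := hF.deriv
  have hEan : AnalyticOnNhd ℂ (fun z => z * deriv F z) (ball 0 1) :=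
    analyticOnNhd_id.mul hDF
  have hEd : DifferentiableOn ℂ (fun z => z * deriv F z) (ball 0 1) :=
    hEan.differentiableOn
  -- coefficient of E := z F'
  have hFb : HasFPowerSeriesOnBall F
      (FormalMultilinearSeries.ofScalars ℂ (fun k => 2 * γ k)) 0 1 :=
    aux_bridge F _ hγ
  have hEs := aux_zderiv_rep hFb
  have hcE : cpsCoeff (fun z => z * deriv F z) n = (n:ℂ) * (2 * γ n) :=
    aux_coeff_eq _ (fun k => ((k:ℕ):ℂ) * (2 * γ k)) hEd hEs n
  -- split
  set m : ℕ := (n+1)/2 with hm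
  have hm1 : 1 ≤ m := by omega
  have hmn : n ≤ 2*m := by omega
  have hmn' : m ≤ n := by omega
  set P : ℂ → ℂ := fun z => ∑ j ∈ Finset.range m, (α:ℂ)^j * ω z^(2*j+1) with hPdef
  have hPd : DifferentiableOn ℂ P (ball 0 1) := by
    apply DifferentiableOn.fun_sum
    intro j _
    exact (hω.differentiableOn.pow (2*j+1)).const_mul _
  set G : ℂ → ℂ := fun z => z * deriv F z - P z with hGdef
  have hGd : DifferentiableOn ℂ G (ball 0 1) := hEd.sub hPd
  have hsplit : cpsCoeff (fun z => z * deriv F z) n = cpsCoeff P n + cpsCoeff G n := by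
    have h1 := aux_coeff_add P G hPd hGd n
    have h2 : (fun z => P z + G z) = (fun z => z * deriv F z) := by
      funext z; simp [hGdef]
    rw [h2] at h1
    exact h1
  -- identity for G
  have hGid : ∀ z ∈ ball (0:ℂ) 1, G z = ((α:ℂ) * ω z ^ 2)^m * (z * deriv F z) := by
    intro z hz
    have hk := key z hz
    have hgs : (∑ j ∈ Finset.range m, ((α:ℂ) * ω z ^2)^j) * ((α:ℂ) * ω z^2 - 1)
        = ((α:ℂ)*ω z^2)^m - 1 := geom_sum_mul _ m
    have hPz : P z = ω z * ∑ j ∈ Finset.range m, ((α:ℂ) * ω z ^2)^j := by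
      rw [hPdef, Finset.mul_sum]
      apply Finset.sum_congr rfl
      intro j _
      rw [mul_pow, pow_add, pow_mul, pow_one]
      ring
    rw [hGdef]
    simp only [hPz]
    linear_combination (∑ j ∈ Finset.range m, ((α:ℂ) * ω z ^2)^j) * hk
      + (z * deriv F z) * hgs
  -- bound for deriv F on closed ball 1/2
  obtain ⟨M, hM⟩ := (isCompact_closedBall (0:ℂ) (1/2)).exists_bound_of_continuousOn
    (hDF.continuousOn.mono (closedBall_subset_ball (by norm_num)))
  have hM0 : 0 ≤ M := le_trans (norm_nonneg _) (hM 0 (by simp))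
  -- coefficient of G is 0
  have hGr : ∀ r : ℝ, 0 < r → r ≤ 1/2 → ‖cpsCoeff G n‖ ≤ M * r := by
    intro r h0 h12
    have hr1 : r < 1 := lt_of_le_of_lt h12 (by norm_num)
    have hb : ∀ z ∈ sphere (0:ℂ) r, ‖G z‖ ≤ M * r^(2*m+1) := by
      intro z hzs
      have hzr : ‖z‖ = r := by simpa using hzs
      have hzb : z ∈ ball (0:ℂ) 1 := by
        rw [mem_ball_zero_iff, hzr]; exact hr1
      rw [hGid z hzb]
      have h1 : ‖(α:ℂ) * ω z^2‖ ≤ r^2 := by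
        rw [norm_mul, norm_pow]
        have hω1 : ‖ω z‖ ≤ r := hzr ▸ hSch z hzb
        have hαn : ‖(α:ℂ)‖ ≤ 1 := by
          rw [Complex.norm_real, Real.norm_eq_abs, abs_of_nonneg hα0]; exact hα1
        calc ‖(α:ℂ)‖ * ‖ω z‖^2 ≤ 1 * r^2 := by gcongr
          _ = r^2 := one_mul _
      have h3 : ‖deriv F z‖ ≤ M := hM z (by rw [mem_closedBall_zero_iff, hzr]; exact h12)
      calc ‖((α:ℂ) * ω z ^ 2)^m * (z * deriv F z)‖
          = ‖(α:ℂ) * ω z^2‖^m * (‖z‖ * ‖deriv F z‖) := by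
            rw [norm_mul, norm_pow, norm_mul z (deriv F z)]
        _ ≤ (r^2)^m * (r * M) := by
            rw [hzr]
            have hnn : (0:ℝ) ≤ ‖(α:ℂ) * ω z^2‖ := norm_nonneg _
            exact mul_le_mul (pow_le_pow_left₀ hnn h1 m)
              (mul_le_mul_of_nonneg_left h3 h0.le)
              (mul_nonneg h0.le (norm_nonneg _))
              (pow_nonneg (by positivity) m)
        _ = M * r^(2*m+1) := by rw [← pow_mul]; ring
    have hbd := aux_bound G hGd h0 hr1 n hb
    have hsplitpow : r^(2*m+1) = r^n * r^(2*m+1-n) := by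
      rw [← pow_add]; congr 1; omega
    have heq2 : M * r ^ (2*m+1) / r^n = M * r^(2*m+1-n) := by
      rw [hsplitpow]
      field_simp
    rw [heq2] at hbd
    refine hbd.trans ?_
    have hple : r^(2*m+1-n) ≤ r^1 := pow_le_pow_of_le_one h0.le hr1.le (by omega)
    rw [pow_one] at hple
    exact mul_le_mul_of_nonneg_left hple hM0
  have hG0 : cpsCoeff G n = 0 := by
    by_contra hne
    have hpos : 0 < ‖cpsCoeff G n‖ := norm_pos_iff.mpr hne
    set c := ‖cpsCoeff G n‖ with hc
    have h0 : 0 < min (1/2 : ℝ) (c/(2*(M+1))) :=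
      lt_min (by norm_num) (div_pos hpos (by linarith))
    have hle := hGr _ h0 (min_le_left _ _)
    have hr2 : min (1/2 : ℝ) (c/(2*(M+1))) ≤ c/(2*(M+1)) := min_le_right _ _
    have : c ≤ M * (c/(2*(M+1))) := by
      refine hle.trans ?_
      exact mul_le_mul_of_nonneg_left hr2 hM0
    rw [mul_div_assoc'] at this
    rw [le_div_iff₀ (by linarith : (0:ℝ) < 2*(M+1))] at this
    nlinarith
  -- bound for coefficient of P
  have hPr : ∀ r : ℝ, 0 < r → r < 1 → ‖cpsCoeff P n‖ ≤ (m:ℝ) / r^n := by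
    intro r h0 h1
    apply aux_bound P hPd h0 h1 n
    intro z hzs
    have hzr : ‖z‖ = r := by simpa using hzs
    have hzb : z ∈ ball (0:ℂ) 1 := by rw [mem_ball_zero_iff, hzr]; exact h1
    have hωz : ‖ω z‖ ≤ 1 := le_of_lt (mem_ball_zero_iff.mp (hωb z hzb))
    have hαn : ‖(α:ℂ)‖ ≤ 1 := by
      rw [Complex.norm_real, Real.norm_eq_abs, abs_of_nonneg hα0]; exact hα1
    calc ‖P z‖ ≤ ∑ j ∈ Finset.range m, ‖(α:ℂ)^j * ω z^(2*j+1)‖ := norm_sum_le _ _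
      _ ≤ ∑ _j ∈ Finset.range m, (1:ℝ) := by
          apply Finset.sum_le_sum
          intro j _
          rw [norm_mul, norm_pow, norm_pow]
          have e1 : ‖(α:ℂ)‖^j ≤ 1 := pow_le_one₀ (norm_nonneg _) hαn
          have e2 : ‖ω z‖^(2*j+1) ≤ 1 := pow_le_one₀ (norm_nonneg _) hωz
          calc ‖(α:ℂ)‖^j * ‖ω z‖^(2*j+1) ≤ 1 * 1 :=
                mul_le_mul e1 e2 (by positivity) one_pos.le
            _ = 1 := one_mul 1
      _ = (m:ℝ) := by simp
  have hPb : ‖cpsCoeff P n‖ ≤ (m:ℝ) := by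
    have hlim : Tendsto (fun r : ℝ => (m:ℝ) / r^n) (𝓝[<] (1:ℝ)) (𝓝 ((m:ℝ)/1^n)) := by
      apply Tendsto.div tendsto_const_nhds
      · exact ((continuous_pow n).tendsto 1).mono_left nhdsWithin_le_nhds
      · norm_num
    rw [one_pow, div_one] at hlim
    refine ge_of_tendsto hlim ?_
    filter_upwards [Ioo_mem_nhdsLT_of_mem (by constructor <;> norm_num :
      (1:ℝ) ∈ Set.Ioc (0:ℝ) 1)] with r hr
    exact hPr r hr.1 hr.2
  -- conclude
  have hfin : ‖(n:ℂ) * (2 * γ n)‖ ≤ (m:ℝ) := by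
    rw [← hcE, hsplit, hG0, add_zero]
    exact hPb
  rw [norm_mul, norm_mul, Complex.norm_natCast, RCLike.norm_ofNat] at hfin
  have hγn : ‖γ n‖ = ‖γ n‖ := rfl
  rw [hγn]
  have hn1 : (1:ℝ) ≤ (n:ℝ) := by exact_mod_cast hn
  have hmr : (m:ℝ) ≤ (n:ℝ) := by exact_mod_cast hmn'
  nlinarith [norm_nonneg (γ n)]
end


/-- |γₙ| ≤ 1/2 for all n ≥ 1, for f ∈ BS(α), 0 ≤ α ≤ 1 -/
theorem stmt_10 (α : ℝ) (hα0 : 0 ≤ α) (hα1 : α ≤ 1)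
    (f ω F : ℂ → ℂ) (γ : ℕ → ℂ)
    -- f is analytic on the unit disk with f(0) = 0, f'(0) = 1, f(z) ≠ 0 for z ≠ 0
    (hf : AnalyticOnNhd ℂ f (ball 0 1))
    (hf0 : f 0 = 0) (hf1 : deriv f 0 = 1)
    (hfz : ∀ z ∈ ball (0 : ℂ) 1, z ≠ 0 → f z ≠ 0)
    -- ω is a Schwarz function
    (hω : AnalyticOnNhd ℂ ω (ball 0 1))
    (hω0 : ω 0 = 0)
    (hωb : ∀ z ∈ ball (0 : ℂ) 1, ω z ∈ ball (0 : ℂ) 1)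
    -- f ∈ BS(α): z f'(z)/f(z) - 1 = ω(z)/(1 - α ω(z)²)
    (heq : ∀ z ∈ ball (0 : ℂ) 1, z ≠ 0 →
      z * deriv f z / f z - 1 = ω z / (1 - (α : ℂ) * ω z ^ 2))
    -- F is an analytic branch of log(f(z)/z) on the unit disk
    (hF : AnalyticOnNhd ℂ F (ball 0 1))
    (hF0 : F 0 = 0)
    (hFf : ∀ z ∈ ball (0 : ℂ) 1, z ≠ 0 → Complex.exp (F z) = f z / z)
    -- the logarithmic coefficients: log(f(z)/z) = 2 Σ_{n ≥ 1} γₙ zⁿ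
    (hγ : ∀ z ∈ ball (0 : ℂ) 1, HasSum (fun n : ℕ => 2 * γ n * z ^ n) (F z)) :
    ∀ n : ℕ, 1 ≤ n → ‖γ n‖ ≤ 1 / 2 := by
  have key := lem_key α hα0 hα1 f ω F hf hfz hω0 hωb heq hF hFf
  exact stmt_10_main hα0 hα1 hω hω0 hωb hF γ hγ key
end

section
/- For every real α with 0 < α ≤ 1, the quartic polynomial l_α(r) = α²r⁴ + αr³ + (1 − 2α)r² − 3r + 1 has exactly one root in the open interval (0, 1). -/
private lemma roots_eq (α x y : ℝ) (hα0 : 0 < α) (hα1 : α ≤ 1)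
    (hx0 : 0 < x) (hx1 : x < 1) (hy0 : 0 < y) (hy1 : y < 1) (hxy : x < y)
    (hx : α ^ 2 * x ^ 4 + α * x ^ 3 + (1 - 2 * α) * x ^ 2 - 3 * x + 1 = 0)
    (hy : α ^ 2 * y ^ 4 + α * y ^ 3 + (1 - 2 * α) * y ^ 2 - 3 * y + 1 = 0) : False := by
  have Ex : (α*x^2-1)^2 + (α*x^2-1)*x + x^2 - 2*x = 0 := by linear_combination hx
  have Ey : (α*y^2-1)^2 + (α*y^2-1)*y + y^2 - 2*y = 0 := by linear_combination hy
  have hux : α*x^2 - 1 < 0 := by nlinarith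
  have huy : α*y^2 - 1 < 0 := by nlinarith
  have hbx : 5*(α*x^2-1) + 8*x < 0 := by nlinarith [sq_nonneg (α*x^2-1)]
  have hby : 5*(α*y^2-1) + 8*y < 0 := by nlinarith [sq_nonneg (α*y^2-1)]
  have hK : α*(x+y)*((α*x^2-1)+(α*y^2-1)) + α*(x^2+x*y+y^2) - 1 + x + y - 2 = 0 := by
    have h : (x - y) * (α*(x+y)*((α*x^2-1)+(α*y^2-1)) + α*(x^2+x*y+y^2) - 1 + x + y - 2) = 0 := by
      linear_combination hx - hy
    have hne : x - y ≠ 0 := by linarith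
    exact (mul_eq_zero.mp h).resolve_left hne
  nlinarith [mul_pos hx0 hy0, mul_pos hα0 hx0, mul_pos hα0 hy0, mul_pos (mul_pos hα0 hx0) hy0]

/-- For 0 < α ≤ 1, the quartic l_α(r) = α²r⁴ + αr³ + (1 − 2α)r² − 3r + 1 has exactly one
root in the open interval (0, 1). -/
theorem stmt_12 (α : ℝ) (hα0 : 0 < α) (hα1 : α ≤ 1) :
    ∃! r : ℝ, r ∈ Set.Ioo (0 : ℝ) 1 ∧
      α ^ 2 * r ^ 4 + α * r ^ 3 + (1 - 2 * α) * r ^ 2 - 3 * r + 1 = 0 := by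
  set f : ℝ → ℝ := fun r => α ^ 2 * r ^ 4 + α * r ^ 3 + (1 - 2 * α) * r ^ 2 - 3 * r + 1 with hf
  have hcont : ContinuousOn f (Set.Icc (0:ℝ) 1) := by
    apply Continuous.continuousOn; fun_prop
  have h0 : f 0 = 1 := by simp [hf]
  have h1 : f 1 < 0 := by
    have : f 1 = α^2 - α - 1 := by simp [hf]; ring
    nlinarith
  have hmem : (0:ℝ) ∈ Set.Ioo (f 1) (f 0) := by
    constructor
    · exact h1
    · rw [h0]; norm_num
  have := intermediate_value_Ioo' (le_of_lt one_pos) hcont hmem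
  obtain ⟨r, hr, hfr⟩ := this
  refine ⟨r, ⟨hr, hfr⟩, ?_⟩
  rintro y ⟨hy, hfy⟩
  by_contra hne
  rcases lt_or_gt_of_ne hne with h | h
  · exact roots_eq α y r hα0 hα1 hy.1 hy.2 hr.1 hr.2 h hfy hfr
  · exact roots_eq α r y hα0 hα1 hr.1 hr.2 hy.1 hy.2 h hfr hfy
end

section
/- Let 0 ≤ α ≤ 1 and let f be in the class BS(α). Then for every z ∈ 𝔻 with r = |z| satisfying 1 − r − αr² > 0, one has Re(1 + z f''(z)/f'(z)) ≥ l_α(r)/((1 − αr²)(1 − r − αr²)), where l_α(r) = α²r⁴ + αr³ + (1 − 2α)r² − 3r + 1. In particular, if in addition l_α(s) > 0 for all s ∈ [0, r], then Re(1 + z f''(z)/f'(z)) > 0. -/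
open Metric

/-- The final real inequality. -/
lemma bs_real_final (α t r : ℝ) (hα0 : 0 ≤ α) (hα1 : α ≤ 1) (ht0 : 0 ≤ t) (htr : t ≤ r)
    (hr1 : r < 1) (hD : 0 < 1 - r - α * r ^ 2) :
    (α ^ 2 * r ^ 4 + α * r ^ 3 + (1 - 2 * α) * r ^ 2 - 3 * r + 1)
        / ((1 - α * r ^ 2) * (1 - r - α * r ^ 2))
      ≤ (1 - t - α * t ^ 2) / (1 - α * t ^ 2)
        - r * (1 - t ^ 2) * (1 + α * t ^ 2)
            / ((1 - r ^ 2) * (1 - α * t ^ 2) * (1 - t - α * t ^ 2)) := by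
  have hr0 : 0 ≤ r := le_trans ht0 htr
  have hDt : 0 < 1 - t - α * t ^ 2 := by nlinarith [mul_nonneg hα0 (mul_nonneg (add_nonneg hr0 ht0) (sub_nonneg.2 htr))]
  have hC : 0 < 1 - α * r ^ 2 := by nlinarith
  have hA : 0 < 1 - α * t ^ 2 := by nlinarith
  have hr2 : 0 < 1 - r ^ 2 := by nlinarith
  have key1 : (1 - r - α * r ^ 2) / (1 - α * r ^ 2) ≤ (1 - t - α * t ^ 2) / (1 - α * t ^ 2) := by
    rw [div_le_div_iff₀ hC hA]
    nlinarith [mul_nonneg (mul_nonneg hα0 ht0) (mul_nonneg hr0 (sub_nonneg.2 htr))]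
  have step1 : (1 - t ^ 2) * (1 - r - α * r ^ 2) ≤ (1 - r ^ 2) * (1 - t - α * t ^ 2) := by
    nlinarith [mul_nonneg (sub_nonneg.2 htr) (mul_nonneg hr0 ht0),
      mul_nonneg (mul_nonneg hα0 (sub_nonneg.2 htr)) (add_nonneg hr0 ht0),
      mul_nonneg (sub_nonneg.2 htr) (mul_nonneg (by nlinarith : (0:ℝ) ≤ 1 - r) (by nlinarith : (0:ℝ) ≤ 1 - t))]
  have step2 : (1 + α * t ^ 2) * (1 - α * r ^ 2) ≤ (1 + α * r ^ 2) * (1 - α * t ^ 2) := by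
    nlinarith [mul_nonneg hα0 (mul_nonneg (add_nonneg hr0 ht0) (sub_nonneg.2 htr))]
  have key2 : r * (1 - t ^ 2) * (1 + α * t ^ 2) / ((1 - r ^ 2) * (1 - α * t ^ 2) * (1 - t - α * t ^ 2))
      ≤ r * (1 + α * r ^ 2) / ((1 - α * r ^ 2) * (1 - r - α * r ^ 2)) := by
    rw [div_le_div_iff₀ (by positivity) (by positivity)]
    have h12 : ((1 - t ^ 2) * (1 - r - α * r ^ 2)) * ((1 + α * t ^ 2) * (1 - α * r ^ 2))
        ≤ ((1 - r ^ 2) * (1 - t - α * t ^ 2)) * ((1 + α * r ^ 2) * (1 - α * t ^ 2)) := by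
      apply mul_le_mul step1 step2 (by positivity) (by positivity)
    nlinarith [mul_le_mul_of_nonneg_left h12 hr0]
  have hsplit : (α ^ 2 * r ^ 4 + α * r ^ 3 + (1 - 2 * α) * r ^ 2 - 3 * r + 1)
      / ((1 - α * r ^ 2) * (1 - r - α * r ^ 2))
      = (1 - r - α * r ^ 2) / (1 - α * r ^ 2)
        - r * (1 + α * r ^ 2) / ((1 - α * r ^ 2) * (1 - r - α * r ^ 2)) := by
    field_simp
    ring
  rw [hsplit]
  linarith [key1, key2]

noncomputable def moeb (a u : ℂ) : ℂ := (a + u) / (1 + (starRingEnd ℂ) a * u)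


lemma mem_ball_one_iff_abs {u : ℂ} : u ∈ ball (0 : ℂ) 1 ↔ ‖u‖ < 1 := by
  rw [mem_ball_zero_iff]

lemma moeb_den_ne {a u : ℂ} (ha : ‖a‖ < 1) (hu : ‖u‖ < 1) :
    (1 : ℂ) + (starRingEnd ℂ) a * u ≠ 0 := by
  intro h
  have h2 : (starRingEnd ℂ) a * u = -1 := by linear_combination h
  have : ‖(starRingEnd ℂ) a * u‖ = 1 := by rw [h2]; simp
  rw [norm_mul, Complex.norm_conj] at this
  nlinarith [norm_nonneg a, norm_nonneg u]

lemma moeb_maps {a : ℂ} (ha : ‖a‖ < 1) {u : ℂ} (hu : ‖u‖ < 1) :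
    ‖moeb a u‖ < 1 := by
  have hne := moeb_den_ne ha hu
  have hkey : Complex.normSq (1 + (starRingEnd ℂ) a * u) - Complex.normSq (a + u)
      = (1 - Complex.normSq a) * (1 - Complex.normSq u) := by
    simp only [Complex.normSq_apply, Complex.add_re, Complex.add_im, Complex.mul_re,
      Complex.mul_im, Complex.one_re, Complex.one_im, Complex.conj_re, Complex.conj_im]
    ring
  have hsq : Complex.normSq (a + u) < Complex.normSq (1 + (starRingEnd ℂ) a * u) := by
    have h1 : Complex.normSq a < 1 := by rw [← Complex.sq_norm]; nlinarith [norm_nonneg a]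
    have h2 : Complex.normSq u < 1 := by rw [← Complex.sq_norm]; nlinarith [norm_nonneg u]
    nlinarith
  have habs : ‖a + u‖ < ‖1 + (starRingEnd ℂ) a * u‖ := by
    rw [Complex.norm_def, Complex.norm_def]
    exact Real.sqrt_lt_sqrt (Complex.normSq_nonneg _) hsq
  rw [moeb, norm_div, div_lt_one (lt_of_le_of_lt (norm_nonneg _) habs)]
  exact habs

lemma moeb_hasDerivAt (a u : ℂ) (hne : (1 : ℂ) + (starRingEnd ℂ) a * u ≠ 0) :
    HasDerivAt (moeb a) ((1 - (starRingEnd ℂ) a * a) / (1 + (starRingEnd ℂ) a * u) ^ 2) u := by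
  have h1 : HasDerivAt (fun v : ℂ => a + v) 1 u := (hasDerivAt_id u).const_add a
  have h2 : HasDerivAt (fun v : ℂ => 1 + (starRingEnd ℂ) a * v) ((starRingEnd ℂ) a) u := by
    simpa using ((hasDerivAt_id u).const_mul ((starRingEnd ℂ) a)).const_add 1
  have := h1.div h2 hne
  exact this.congr_deriv (by congr 1; ring)

lemma schwarz_pick {ω : ℂ → ℂ} (hω : DifferentiableOn ℂ ω (ball 0 1))
    (hωb : ∀ u ∈ ball (0 : ℂ) 1, ω u ∈ ball (0 : ℂ) 1) {z : ℂ} (hz : z ∈ ball (0 : ℂ) 1) :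
    ‖deriv ω z‖ * (1 - ‖z‖ ^ 2) ≤ 1 - ‖ω z‖ ^ 2 := by
  have hz1 : ‖z‖ < 1 := mem_ball_one_iff_abs.1 hz
  set w := ω z with hw
  have hw1 : ‖w‖ < 1 := mem_ball_one_iff_abs.1 (hωb z hz)
  have hnw1 : ‖-w‖ < 1 := by simpa using hw1
  set ψ : ℂ → ℂ := fun u => moeb (-w) (ω (moeb z u)) with hψ
  have hmz : ∀ u ∈ ball (0 : ℂ) 1, moeb z u ∈ ball (0 : ℂ) 1 := by
    intro u hu
    exact mem_ball_one_iff_abs.2 (moeb_maps hz1 (mem_ball_one_iff_abs.1 hu))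
  have hψd : DifferentiableOn ℂ ψ (ball 0 1) := by
    intro u hu
    have hu1 : ‖u‖ < 1 := mem_ball_one_iff_abs.1 hu
    have h1 : DifferentiableAt ℂ (moeb z) u := (moeb_hasDerivAt z u (moeb_den_ne hz1 hu1)).differentiableAt
    have h2 : DifferentiableAt ℂ ω (moeb z u) :=
      hω.differentiableAt (isOpen_ball.mem_nhds (hmz u hu))
    have hω1 : ‖ω (moeb z u)‖ < 1 := mem_ball_one_iff_abs.1 (hωb _ (hmz u hu))
    have h3 : DifferentiableAt ℂ (moeb (-w)) (ω (moeb z u)) :=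
      (moeb_hasDerivAt (-w) _ (moeb_den_ne hnw1 hω1)).differentiableAt
    exact ((h3.comp u (h2.comp u h1))).differentiableWithinAt
  have hψm : Set.MapsTo ψ (ball 0 1) (ball 0 1) := by
    intro u hu
    have hu1 : ‖u‖ < 1 := mem_ball_one_iff_abs.1 hu
    have hω1 : ‖ω (moeb z u)‖ < 1 := mem_ball_one_iff_abs.1 (hωb _ (hmz u hu))
    exact mem_ball_one_iff_abs.2 (moeb_maps hnw1 hω1)
  have hmz0 : moeb z 0 = z := by simp [moeb]
  have hψ0 : ψ 0 = 0 := by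
    have : moeb (-w) w = 0 := by simp [moeb]
    simp [hψ, hmz0, ← hw, this]
  -- derivative of ψ at 0
  have hd1 : HasDerivAt (moeb z) ((1 - (starRingEnd ℂ) z * z)) 0 := by
    have := moeb_hasDerivAt z 0 (by simpa using moeb_den_ne hz1 (by simp : ‖(0:ℂ)‖ < 1))
    simpa using this
  have hd2 : HasDerivAt ω (deriv ω z) z :=
    (hω.differentiableAt (isOpen_ball.mem_nhds hz)).hasDerivAt
  have hd3 : HasDerivAt (moeb (-w)) ((1 - (starRingEnd ℂ) w * w) / (1 - (starRingEnd ℂ) w * w) ^ 2) w := by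
    have := moeb_hasDerivAt (-w) w (by
      have : (1 : ℂ) + (starRingEnd ℂ) (-w) * w = 1 - (starRingEnd ℂ) w * w := by rw [map_neg]; ring
      rw [this]
      intro h
      have h2 : (starRingEnd ℂ) w * w = 1 := by linear_combination -h
      have : ‖(starRingEnd ℂ) w * w‖ = 1 := by rw [h2]; simp
      rw [norm_mul, Complex.norm_conj] at this
      nlinarith [norm_nonneg w])
    convert this using 1
    rw [map_neg]
    ring
  have hd2' : HasDerivAt ω (deriv ω z) (moeb z 0) := by rw [hmz0]; exact hd2
  have hcomp1 : HasDerivAt (fun u => ω (moeb z u)) (deriv ω z * (1 - (starRingEnd ℂ) z * z)) 0 :=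
    hd2'.comp 0 hd1
  have hw2 : (0:ℝ) < 1 - ‖w‖ ^ 2 := by nlinarith [norm_nonneg w]
  have hcwne : (1 : ℂ) - (starRingEnd ℂ) w * w ≠ 0 := by
    intro h
    have h2 : (starRingEnd ℂ) w * w = 1 := by linear_combination -h
    have : ‖(starRingEnd ℂ) w * w‖ = 1 := by rw [h2]; simp
    rw [norm_mul, Complex.norm_conj] at this
    nlinarith [norm_nonneg w]
  have hd3' : HasDerivAt (moeb (-w))
      ((1 - (starRingEnd ℂ) w * w) / (1 - (starRingEnd ℂ) w * w) ^ 2) (ω (moeb z 0)) := by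
    rw [hmz0]; exact hd3
  have hcomp2 : HasDerivAt ψ
      ((deriv ω z * (1 - (starRingEnd ℂ) z * z)) / (1 - (starRingEnd ℂ) w * w)) 0 := by
    have h := hd3'.comp 0 hcomp1
    refine h.congr_deriv ?_
    simp only [sq, ← div_div, div_self hcwne]
    ring
  have hb := Complex.norm_deriv_le_div_of_mapsTo_ball hψd
    (by rw [show ψ 0 = (0:ℂ) from hψ0]; exact hψm.mono_right ball_subset_closedBall) one_pos
  rw [hcomp2.deriv, norm_div, norm_mul] at hb
  have hcz : ‖1 - (starRingEnd ℂ) z * z‖ = 1 - ‖z‖ ^ 2 := by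
    have e : (1:ℂ) - (starRingEnd ℂ) z * z = ((1 - ‖z‖ ^ 2 : ℝ) : ℂ) := by
      rw [mul_comm, Complex.mul_conj, ← Complex.sq_norm]; push_cast; ring
    rw [e, Complex.norm_real, Real.norm_of_nonneg (by nlinarith [norm_nonneg z])]
  have hcw : ‖1 - (starRingEnd ℂ) w * w‖ = 1 - ‖w‖ ^ 2 := by
    have e : (1:ℂ) - (starRingEnd ℂ) w * w = ((1 - ‖w‖ ^ 2 : ℝ) : ℂ) := by
      rw [mul_comm, Complex.mul_conj, ← Complex.sq_norm]; push_cast; ring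
    rw [e, Complex.norm_real, Real.norm_of_nonneg hw2.le]
  rw [hcz, hcw, div_le_div_iff₀ hw2 one_pos] at hb
  linarith

set_option maxHeartbeats 2000000 in
/-- For f ∈ BS(α), 0 ≤ α ≤ 1, and z ∈ 𝔻 with r = |z| satisfying 1 - r - αr² > 0,
Re(1 + z f''(z)/f'(z)) ≥ l_α(r)/((1 - αr²)(1 - r - αr²)), where
l_α(r) = α²r⁴ + αr³ + (1 − 2α)r² − 3r + 1.  If moreover l_α(s) > 0 for all s ∈ [0, r],
then Re(1 + z f''(z)/f'(z)) > 0. -/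
theorem stmt_13 (α : ℝ) (hα0 : 0 ≤ α) (hα1 : α ≤ 1)
    (f ω : ℂ → ℂ)
    -- f is analytic on the unit disk with f(0) = 0, f'(0) = 1, f(z) ≠ 0 for z ≠ 0
    (hf : AnalyticOnNhd ℂ f (ball 0 1))
    (hf0 : f 0 = 0) (hf1 : deriv f 0 = 1)
    (hfz : ∀ z ∈ ball (0 : ℂ) 1, z ≠ 0 → f z ≠ 0)
    -- ω is a Schwarz function
    (hω : AnalyticOnNhd ℂ ω (ball 0 1))
    (hω0 : ω 0 = 0)
    (hωb : ∀ z ∈ ball (0 : ℂ) 1, ω z ∈ ball (0 : ℂ) 1)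
    -- f ∈ BS(α): z f'(z)/f(z) - 1 = ω(z)/(1 - α ω(z)²)
    (heq : ∀ z ∈ ball (0 : ℂ) 1, z ≠ 0 →
      z * deriv f z / f z - 1 = ω z / (1 - (α : ℂ) * ω z ^ 2))
    (z : ℂ) (hz : z ∈ ball (0 : ℂ) 1)
    (hden : 0 < 1 - ‖z‖ - α * ‖z‖ ^ 2) :
    (α ^ 2 * ‖z‖ ^ 4 + α * ‖z‖ ^ 3 + (1 - 2 * α) * ‖z‖ ^ 2
        - 3 * ‖z‖ + 1)
      / ((1 - α * ‖z‖ ^ 2) * (1 - ‖z‖ - α * ‖z‖ ^ 2))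
      ≤ (1 + z * deriv (deriv f) z / deriv f z).re
    ∧ ((∀ s ∈ Set.Icc (0 : ℝ) (‖z‖),
          0 < α ^ 2 * s ^ 4 + α * s ^ 3 + (1 - 2 * α) * s ^ 2 - 3 * s + 1) →
        0 < (1 + z * deriv (deriv f) z / deriv f z).re) := by
  have hr0 : 0 ≤ ‖z‖ := norm_nonneg z
  have hr1 : ‖z‖ < 1 := mem_ball_one_iff_abs.1 hz
  have hC : 0 < 1 - α * ‖z‖ ^ 2 := by nlinarith
  have main : (α ^ 2 * ‖z‖ ^ 4 + α * ‖z‖ ^ 3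
        + (1 - 2 * α) * ‖z‖ ^ 2 - 3 * ‖z‖ + 1)
      / ((1 - α * ‖z‖ ^ 2) * (1 - ‖z‖ - α * ‖z‖ ^ 2))
      ≤ (1 + z * deriv (deriv f) z / deriv f z).re := by
    by_cases hz0 : z = 0
    · subst hz0
      simp only [norm_zero]
      norm_num
    -- main case
    set r := ‖z‖ with hrdef
    set w := ω z with hwdef
    set t := ‖w‖ with htdef
    have htr : t ≤ r :=
      Complex.norm_le_norm_of_mapsTo_ball hω.differentiableOn
        (fun u hu => ball_subset_closedBall (hωb u hu)) hω0 hr1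
    have ht0 : 0 ≤ t := norm_nonneg w
    have ht1 : t < 1 := lt_of_le_of_lt htr hr1
    have hDt : 0 < 1 - t - α * t ^ 2 := by
      nlinarith [mul_nonneg hα0 (mul_nonneg (add_nonneg hr0 ht0) (sub_nonneg.2 htr))]
    have hA : 0 < 1 - α * t ^ 2 := by nlinarith
    have hr2 : 0 < 1 - r ^ 2 := by nlinarith
    set a : ℂ := (α : ℂ) with hadef
    have haw : ‖a * w ^ 2‖ = α * t ^ 2 := by
      rw [norm_mul, norm_pow, hadef, Complex.norm_real, Real.norm_of_nonneg hα0]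
    have hden_ne : ∀ u ∈ ball (0 : ℂ) 1, (1 : ℂ) - a * ω u ^ 2 ≠ 0 := by
      intro u hu h
      have hu1 : ‖ω u‖ < 1 := mem_ball_one_iff_abs.1 (hωb u hu)
      have h2 : a * ω u ^ 2 = 1 := by linear_combination -h
      have h3 : ‖a * ω u ^ 2‖ = 1 := by rw [h2]; simp
      rw [norm_mul, norm_pow, hadef, Complex.norm_real, Real.norm_of_nonneg hα0] at h3
      nlinarith [norm_nonneg (ω u)]
    set G : ℂ → ℂ := fun u => 1 + ω u / (1 - a * ω u ^ 2) with hGdef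
    have h1 : ∀ u ∈ ball (0 : ℂ) 1, deriv f u * u = f u * G u := by
      intro u hu
      by_cases h0 : u = 0
      · simp [h0, hf0]
      · have h := heq u hu h0
        have hfu := hfz u hu h0
        have hdu := hden_ne u hu
        have h2 : u * deriv f u / f u = G u := by
          rw [show G u = 1 + ω u / (1 - a * ω u ^ 2) from rfl, ← h]; ring
        calc deriv f u * u = f u * (u * deriv f u / f u) := by field_simp
          _ = f u * G u := by rw [h2]
    have hfz' : f z ≠ 0 := hfz z hz hz0
    have hdz : (1 : ℂ) - a * w ^ 2 ≠ 0 := hden_ne z hz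
    have h1z : deriv f z * z = f z * G z := h1 z hz
    -- real part lower bound for G z
    have habs_den : 1 - α * t ^ 2 ≤ ‖1 - a * w ^ 2‖ := by
      have h := norm_sub_norm_le (1 : ℂ) (a * w ^ 2)
      rw [norm_one, haw] at h
      exact h
    have habsq : ‖w / (1 - a * w ^ 2)‖ ≤ t / (1 - α * t ^ 2) := by
      rw [norm_div]
      exact div_le_div₀ ht0 le_rfl hA habs_den
    have hReG : (1 - t - α * t ^ 2) / (1 - α * t ^ 2) ≤ (G z).re := by
      have hGre : (G z).re = 1 + (w / (1 - a * w ^ 2)).re := by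
        rw [show G z = 1 + w / (1 - a * w ^ 2) from rfl, Complex.add_re, Complex.one_re]
      have habs_re := Complex.abs_re_le_norm (w / (1 - a * w ^ 2))
      have e : (1 - t - α * t ^ 2) / (1 - α * t ^ 2) = 1 - t / (1 - α * t ^ 2) := by
        rw [eq_sub_iff_add_eq, ← add_div, div_eq_one_iff_eq hA.ne']
        ring
      rw [hGre, e]
      have : -(t / (1 - α * t ^ 2)) ≤ (w / (1 - a * w ^ 2)).re := by
        have h2 := neg_abs_le ((w / (1 - a * w ^ 2)).re)
        have h3 : |(w / (1 - a * w ^ 2)).re| ≤ t / (1 - α * t ^ 2) :=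
          le_trans habs_re habsq
        linarith
      linarith
    have hGre_pos : 0 < (G z).re := lt_of_lt_of_le (div_pos hDt hA) hReG
    have hG0 : G z ≠ 0 := by
      intro h; rw [h] at hGre_pos; simp at hGre_pos
    have hf'0 : deriv f z ≠ 0 := by
      intro h
      rw [h, zero_mul] at h1z
      exact (mul_ne_zero hfz' hG0) h1z.symm
    -- derivative computation
    have hωz_d : HasDerivAt ω (deriv ω z) z :=
      (hω.differentiableOn.differentiableAt (isOpen_ball.mem_nhds hz)).hasDerivAt
    set W' := deriv ω z with hW'def
    set G' : ℂ := W' * (1 + a * w ^ 2) / (1 - a * w ^ 2) ^ 2 with hG'def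
    have hGd : HasDerivAt G G' z := by
      have h2 : HasDerivAt (fun u => ω u ^ 2) (2 * w * W') z := by
        simpa [← hwdef] using hωz_d.fun_pow 2
      have hden_d : HasDerivAt (fun u => (1 : ℂ) - a * ω u ^ 2) (-(a * (2 * w * W'))) z := by
        simpa using (h2.const_mul a).const_sub 1
      have hdiv := hωz_d.div hden_d hdz
      have h3 := hdiv.const_add 1
      refine h3.congr_deriv ?_
      rw [hG'def, ← hwdef]
      congr 1
      ring
    have hLd : HasDerivAt (fun u => deriv f u * u) (deriv (deriv f) z * z + deriv f z * 1) z := by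
      have hfd2 : DifferentiableAt ℂ (deriv f) z :=
        (hf.deriv.differentiableOn.differentiableAt (isOpen_ball.mem_nhds hz))
      exact hfd2.hasDerivAt.mul (hasDerivAt_id z)
    have hRd : HasDerivAt (fun u => f u * G u) (deriv f z * G z + f z * G') z :=
      ((hf.differentiableOn.differentiableAt (isOpen_ball.mem_nhds hz)).hasDerivAt).mul hGd
    have hEvq : (fun u => deriv f u * u) =ᶠ[nhds z] (fun u => f u * G u) :=
      Filter.eventuallyEq_of_mem (isOpen_ball.mem_nhds hz) h1
    have hE : deriv (deriv f) z * z + deriv f z * 1 = deriv f z * G z + f z * G' := by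
      rw [← hLd.deriv, hEvq.deriv_eq, hRd.deriv]
    clear_value a w G W' G'
    have hfz_df : f z / deriv f z = z / G z := by
      rw [div_eq_div_iff hf'0 hG0]
      linear_combination -h1z
    have h4 : z * deriv (deriv f) z = deriv f z * (G z - 1) + f z * G' := by
      linear_combination hE
    have hX : 1 + z * deriv (deriv f) z / deriv f z = G z + z * G' / G z := by
      calc 1 + z * deriv (deriv f) z / deriv f z
          = 1 + (deriv f z * (G z - 1) + f z * G') / deriv f z := by rw [h4]
        _ = G z + (f z / deriv f z) * G' := by field_simp; ring
        _ = G z + (z / G z) * G' := by rw [hfz_df]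
        _ = G z + z * G' / G z := by ring
    -- estimates
    have hSP : ‖W'‖ * (1 - r ^ 2) ≤ 1 - t ^ 2 := by
      rw [hW'def, htdef, hwdef, hrdef]
      exact schwarz_pick hω.differentiableOn hωb hz
    have hs2 : ‖1 + a * w ^ 2‖ ≤ 1 + α * t ^ 2 := by
      calc ‖1 + a * w ^ 2‖ ≤ ‖1‖ + ‖a * w ^ 2‖ :=
            norm_add_le _ _
        _ = 1 + α * t ^ 2 := by rw [norm_one, haw]
    have hs3pos : 0 < ‖1 - a * w ^ 2‖ := lt_of_lt_of_le hA habs_den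
    have hs4 : (1 - t - α * t ^ 2) / (1 - α * t ^ 2) ≤ ‖G z‖ :=
      le_trans hReG (Complex.re_le_norm _)
    have hs4pos : 0 < ‖G z‖ := lt_of_lt_of_le (div_pos hDt hA) hs4
    set s1 := ‖W'‖
    set s2 := ‖1 + a * w ^ 2‖
    set s3 := ‖1 - a * w ^ 2‖
    set s4 := ‖G z‖
    have hNle : ‖z * G' / G z‖
        ≤ r * (1 - t ^ 2) * (1 + α * t ^ 2)
          / ((1 - r ^ 2) * (1 - α * t ^ 2) * (1 - t - α * t ^ 2)) := by
      have eabs : ‖z * G' / G z‖ = r * s1 * s2 / (s3 ^ 2 * s4) := by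
        rw [norm_div, norm_mul, hG'def, norm_div, norm_mul, norm_pow]
        field_simp
        ring
      rw [eabs, div_le_div_iff₀ (by positivity) (by positivity)]
      have hAB : (1 - α * t ^ 2) * (1 - t - α * t ^ 2) ≤ s3 ^ 2 * s4 := by
        have e1 : (1 - α * t ^ 2) * (1 - t - α * t ^ 2)
            = (1 - α * t ^ 2) ^ 2 * ((1 - t - α * t ^ 2) / (1 - α * t ^ 2)) := by
          field_simp
        rw [e1]
        apply mul_le_mul (by nlinarith [habs_den, hA.le]) hs4 (by positivity) (by positivity)
      have hstep : s1 * (1 - r ^ 2) * s2 ≤ (1 - t ^ 2) * (1 + α * t ^ 2) := by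
        apply mul_le_mul hSP hs2 (norm_nonneg _) (by nlinarith : (0:ℝ) ≤ 1 - t ^ 2)
      calc r * s1 * s2 * ((1 - r ^ 2) * (1 - α * t ^ 2) * (1 - t - α * t ^ 2))
          = (s1 * (1 - r ^ 2) * s2) * (r * ((1 - α * t ^ 2) * (1 - t - α * t ^ 2))) := by ring
        _ ≤ ((1 - t ^ 2) * (1 + α * t ^ 2)) * (r * (s3 ^ 2 * s4)) := by
            apply mul_le_mul hstep (mul_le_mul_of_nonneg_left hAB hr0)
              (by positivity)
              (mul_nonneg (by nlinarith : (0:ℝ) ≤ 1 - t ^ 2)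
                (by nlinarith [mul_nonneg hα0 (sq_nonneg t)] : (0:ℝ) ≤ 1 + α * t ^ 2))
        _ = r * (1 - t ^ 2) * (1 + α * t ^ 2) * (s3 ^ 2 * s4) := by ring
    have hre_ineq : -(r * (1 - t ^ 2) * (1 + α * t ^ 2)
          / ((1 - r ^ 2) * (1 - α * t ^ 2) * (1 - t - α * t ^ 2)))
        ≤ (z * G' / G z).re := by
      have h2 := neg_abs_le ((z * G' / G z).re)
      have h3 := le_trans (Complex.abs_re_le_norm (z * G' / G z)) hNle
      linarith
    rw [hX, Complex.add_re]
    have hfinal := bs_real_final α t r hα0 hα1 ht0 htr hr1 hden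
    linarith [hReG, hre_ineq]
  refine ⟨main, fun hl => ?_⟩
  have hlr := hl (‖z‖) ⟨hr0, le_refl _⟩
  exact lt_of_lt_of_le (div_pos hlr (mul_pos hC hden)) main
end

section
/- Let 0 ≤ α ≤ 1, let f be in the class BS(α), and suppose f(z) = z((1 + √α z)/(1 − √α z))^{1/(2√α)} is the extremal function f₁ of BS(α), characterized by z f₁'(z)/f₁(z) − 1 = z/(1 − αz²) on 𝔻. Then for real r ∈ (0,1) with 1 − r − αr² > 0, Re(1 + (−r) f₁''(−r)/f₁'(−r)) = l_α(r)/((1 − αr²)(1 − r − αr²)), where l_α(r) = α²r⁴ + αr³ + (1 − 2α)r² − 3r + 1; consequently this quantity vanishes when l_α(r) = 0. -/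
open Metric

/-- For the extremal function f₁ of BS(α), characterized by
z f₁'(z)/f₁(z) − 1 = z/(1 − αz²), and 0 < r < 1 with 1 − r − αr² > 0, one has
Re(1 + (−r) f₁''(−r)/f₁'(−r)) = l_α(r)/((1 − αr²)(1 − r − αr²)) where
l_α(r) = α²r⁴ + αr³ + (1 − 2α)r² − 3r + 1; in particular this vanishes when l_α(r) = 0. -/
theorem stmt_14 (α : ℝ) (hα0 : 0 ≤ α) (hα1 : α ≤ 1)
    (f : ℂ → ℂ)
    -- f is analytic on the unit disk with f(0) = 0, f'(0) = 1, f(z) ≠ 0 for z ≠ 0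
    (hf : AnalyticOnNhd ℂ f (ball 0 1))
    (hf0 : f 0 = 0) (hf1 : deriv f 0 = 1)
    (hfz : ∀ z ∈ ball (0 : ℂ) 1, z ≠ 0 → f z ≠ 0)
    -- f is the extremal function f₁: z f'(z)/f(z) − 1 = z/(1 − αz²)
    (heq : ∀ z ∈ ball (0 : ℂ) 1, z ≠ 0 →
      z * deriv f z / f z - 1 = z / (1 - (α : ℂ) * z ^ 2))
    (r : ℝ) (hr0 : 0 < r) (hr1 : r < 1)
    (hden : 0 < 1 - r - α * r ^ 2) :
    (1 + (-(r : ℂ)) * deriv (deriv f) (-(r : ℂ)) / deriv f (-(r : ℂ))).re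
      = (α ^ 2 * r ^ 4 + α * r ^ 3 + (1 - 2 * α) * r ^ 2 - 3 * r + 1)
        / ((1 - α * r ^ 2) * (1 - r - α * r ^ 2))
    ∧ (α ^ 2 * r ^ 4 + α * r ^ 3 + (1 - 2 * α) * r ^ 2 - 3 * r + 1 = 0 →
        (1 + (-(r : ℂ)) * deriv (deriv f) (-(r : ℂ)) / deriv f (-(r : ℂ))).re = 0) := by
  
  set z₀ : ℂ := -(r:ℂ) with hz₀
  have hzmem : z₀ ∈ ball (0:ℂ) 1 := by
    simp only [mem_ball, dist_zero_right, hz₀, norm_neg, Complex.norm_real,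
      Real.norm_eq_abs, abs_of_pos hr0]
    exact hr1
  have hzne : z₀ ≠ 0 := by
    simp only [hz₀, neg_ne_zero, ne_eq, Complex.ofReal_eq_zero]
    exact ne_of_gt hr0
  have hDr : (0:ℝ) < 1 - α * r^2 := by nlinarith
  have hDeq : (1 - (α:ℂ) * z₀^2) = ((1 - α*r^2 : ℝ) : ℂ) := by
    rw [hz₀]; push_cast; ring
  have hEeq : (1 + z₀ - (α:ℂ) * z₀^2) = ((1 - r - α*r^2 : ℝ) : ℂ) := by
    rw [hz₀]; push_cast; ring
  have hDc : (1 - (α:ℂ) * z₀^2) ≠ 0 := by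
    rw [hDeq]; exact_mod_cast ne_of_gt hDr
  have hEc : (1 + z₀ - (α:ℂ) * z₀^2) ≠ 0 := by
    rw [hEeq]; exact_mod_cast ne_of_gt hden
  set a := deriv f z₀ with ha
  set b := deriv (deriv f) z₀ with hb
  set v := f z₀ with hv
  have hvne : v ≠ 0 := hfz z₀ hzmem hzne
  -- equation A: z₀ * a * D = v * E
  have hA : z₀ * a * (1 - (α:ℂ)*z₀^2) = v * (1 + z₀ - (α:ℂ)*z₀^2) := by
    have h := heq z₀ hzmem hzne
    rw [← ha, ← hv] at h
    rw [div_sub_one hvne, div_eq_div_iff hvne hDc] at h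
    linear_combination h
  have hane : a ≠ 0 := by
    intro h0
    apply hvne
    have := hA
    rw [h0] at this
    simp at this
    rcases this with h | h
    · exact h
    · exact absurd h hEc
  -- the functional identity holds on the ball after clearing denominators
  have hg : ∀ z ∈ ball (0:ℂ) 1,
      z * (1 - (α:ℂ)*z^2) * deriv f z - (1 + z - (α:ℂ)*z^2) * f z = 0 := by
    intro z hzm
    by_cases hz : z = 0
    · simp [hz, hf0]
    · have h := heq z hzm hz
      have hfzne := hfz z hzm hz
      have hDz : (1 - (α:ℂ)*z^2) ≠ 0 := by
        intro h0
        have : (α:ℂ) * z^2 = 1 := by linear_combination -h0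
        have habs : ‖(α:ℂ) * z^2‖ = 1 := by rw [this]; simp
        rw [norm_mul, norm_pow] at habs
        have hz1 : ‖z‖ < 1 := by simpa [mem_ball, dist_zero_right] using hzm
        have : ‖(α:ℂ)‖ ≤ 1 := by
          rw [Complex.norm_real, Real.norm_of_nonneg hα0]; exact hα1
        nlinarith [norm_nonneg z, norm_nonneg ((α:ℂ))]
      rw [div_sub_one hfzne, div_eq_div_iff hfzne hDz] at h
      linear_combination h
  -- derivatives
  have hfd : HasDerivAt f a z₀ := by
    rw [ha]; exact ((hf z₀ hzmem).differentiableAt).hasDerivAt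
  have hfd2 : HasDerivAt (deriv f) b z₀ := by
    rw [hb]; exact ((hf.deriv z₀ hzmem).differentiableAt).hasDerivAt
  have h1 : HasDerivAt (fun z : ℂ => z * (1 - (α:ℂ)*z^2))
      (1 - 3*(α:ℂ)*z₀^2) z₀ := by
    have := (hasDerivAt_id z₀).mul (((hasDerivAt_pow 2 z₀).const_mul (α:ℂ)).const_sub 1)
    exact this.congr_deriv (by simp; ring)
  have h2 : HasDerivAt (fun z : ℂ => 1 + z - (α:ℂ)*z^2)
      (1 - 2*(α:ℂ)*z₀) z₀ := by
    have := ((hasDerivAt_id z₀).const_add 1).sub ((hasDerivAt_pow 2 z₀).const_mul (α:ℂ))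
    exact this.congr_deriv (by simp; ring)
  have hG : HasDerivAt (fun z => z * (1 - (α:ℂ)*z^2) * deriv f z - (1 + z - (α:ℂ)*z^2) * f z)
      ((1 - 3*(α:ℂ)*z₀^2) * a + (z₀ * (1 - (α:ℂ)*z₀^2)) * b
        - ((1 - 2*(α:ℂ)*z₀) * v + (1 + z₀ - (α:ℂ)*z₀^2) * a)) z₀ :=
    (h1.mul hfd2).sub (h2.mul hfd)
  have hev : (fun z => z * (1 - (α:ℂ)*z^2) * deriv f z - (1 + z - (α:ℂ)*z^2) * f z)
      =ᶠ[nhds z₀] (fun _ => (0:ℂ)) := by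
    filter_upwards [isOpen_ball.mem_nhds hzmem] with z hzm using hg z hzm
  have hB : (1 - 3*(α:ℂ)*z₀^2) * a + (z₀ * (1 - (α:ℂ)*z₀^2)) * b
        - ((1 - 2*(α:ℂ)*z₀) * v + (1 + z₀ - (α:ℂ)*z₀^2) * a) = 0 := by
    have hd := hG.deriv
    rw [hev.deriv_eq] at hd
    simp at hd
    linear_combination -hd
  -- key cleared identity
  have key1 : (a + z₀ * b) * ((1 - (α:ℂ)*z₀^2) * (1 + z₀ - (α:ℂ)*z₀^2))
      = ((α:ℂ)^2*z₀^4 - (α:ℂ)*z₀^3 + (1 - 2*(α:ℂ))*z₀^2 + 3*z₀ + 1) * a := by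
    linear_combination (-(1 - 2*(α:ℂ)*z₀)) * hA + (1 + z₀ - (α:ℂ)*z₀^2) * hB
  have hNeq : (α:ℂ)^2*z₀^4 - (α:ℂ)*z₀^3 + (1 - 2*(α:ℂ))*z₀^2 + 3*z₀ + 1
      = ((α^2*r^4 + α*r^3 + (1-2*α)*r^2 - 3*r + 1 : ℝ) : ℂ) := by
    rw [hz₀]; push_cast; ring
  have hdeq : ((((1 - α*r^2) * (1 - r - α*r^2)) : ℝ) : ℂ)
      = (1 - (α:ℂ)*z₀^2) * (1 + z₀ - (α:ℂ)*z₀^2) := by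
    rw [hDeq, hEeq]; push_cast; ring
  have hdne : ((((1 - α*r^2) * (1 - r - α*r^2)) : ℝ) : ℂ) ≠ 0 := by
    exact_mod_cast ne_of_gt (mul_pos hDr hden)
  have key : 1 + z₀ * b / a
      = (((α^2*r^4 + α*r^3 + (1-2*α)*r^2 - 3*r + 1)
          / ((1 - α*r^2) * (1 - r - α*r^2)) : ℝ) : ℂ) := by
    have hstep : 1 + z₀ * b / a = (a + z₀*b)/a := by field_simp
    rw [hstep, Complex.ofReal_div, div_eq_div_iff hane hdne, hdeq, ← hNeq]
    exact key1
  constructor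
  · rw [key, Complex.ofReal_re]
  · intro h
    rw [key, Complex.ofReal_re, h, zero_div]
end

section
/- Let 0 ≤ α ≤ 1 and let f be in the class BK(α). Then for every z ∈ 𝔻 with r = |z|, one has Re(1 + z f''(z)/f'(z)) ≥ (1 − r − αr²)/(1 − αr²). In particular, if α > 0 then Re(1 + z f''(z)/f'(z)) > 0 whenever |z| < (√(1 + 4α) − 1)/(2α), and if α = 0 then Re(1 + z f''(z)/f'(z)) > 0 for all z ∈ 𝔻. -/
open Metric

/-- For f ∈ BK(α), 0 ≤ α ≤ 1: Re(1 + z f''(z)/f'(z)) ≥ (1 − r − αr²)/(1 − αr²) with r = |z|;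
hence Re(1 + z f''(z)/f'(z)) > 0 for |z| < (√(1 + 4α) − 1)/(2α) when α > 0, and on all of 𝔻
when α = 0. -/
theorem stmt_15 (α : ℝ) (hα0 : 0 ≤ α) (hα1 : α ≤ 1)
    (f ω : ℂ → ℂ)
    -- f is analytic on the unit disk with f(0) = 0, f'(0) = 1, f'(z) ≠ 0
    (hf : AnalyticOnNhd ℂ f (ball 0 1))
    (hf0 : f 0 = 0) (hf1 : deriv f 0 = 1)
    (hfz : ∀ z ∈ ball (0 : ℂ) 1, deriv f z ≠ 0)
    -- ω is a Schwarz function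
    (hω : AnalyticOnNhd ℂ ω (ball 0 1))
    (hω0 : ω 0 = 0)
    (hωb : ∀ z ∈ ball (0 : ℂ) 1, ω z ∈ ball (0 : ℂ) 1)
    -- f ∈ BK(α): z f''(z)/f'(z) = ω(z)/(1 - α ω(z)²)
    (heq : ∀ z ∈ ball (0 : ℂ) 1,
      z * deriv (deriv f) z / deriv f z = ω z / (1 - (α : ℂ) * ω z ^ 2)) :
    (∀ z ∈ ball (0 : ℂ) 1,
        (1 - ‖z‖ - α * ‖z‖ ^ 2) / (1 - α * ‖z‖ ^ 2)
          ≤ (1 + z * deriv (deriv f) z / deriv f z).re)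
    ∧ (0 < α → ∀ z ∈ ball (0 : ℂ) 1,
        ‖z‖ < (Real.sqrt (1 + 4 * α) - 1) / (2 * α) →
          0 < (1 + z * deriv (deriv f) z / deriv f z).re)
    ∧ (α = 0 → ∀ z ∈ ball (0 : ℂ) 1,
          0 < (1 + z * deriv (deriv f) z / deriv f z).re) := by
  have hden_pos : ∀ r : ℝ, 0 ≤ r → r < 1 → 0 < 1 - α * r ^ 2 := by
    intro r hr0 hr1
    nlinarith
  have key : ∀ z ∈ ball (0 : ℂ) 1,
      (1 - ‖z‖ - α * ‖z‖ ^ 2) / (1 - α * ‖z‖ ^ 2)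
        ≤ (1 + z * deriv (deriv f) z / deriv f z).re := by
    intro z hz
    have hzr : ‖z‖ < 1 := by simpa [Metric.mem_ball] using hz
    set r := ‖z‖ with hr
    set w := ω z with hwdef
    set t := ‖w‖ with htdef
    have hr0 : 0 ≤ r := norm_nonneg z
    have ht0 : 0 ≤ t := norm_nonneg w
    have htr : t ≤ r :=
      Complex.norm_le_norm_of_mapsTo_ball hω.differentiableOn
        (fun x hx => ball_subset_closedBall (hωb x hx)) hω0 hzr
    have ht1 : t < 1 := lt_of_le_of_lt htr hzr
    have hdt : 0 < 1 - α * t ^ 2 := hden_pos t ht0 ht1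
    have hdr : 0 < 1 - α * r ^ 2 := hden_pos r hr0 hzr
    have hden : 1 - α * t ^ 2 ≤ ‖1 - (α : ℂ) * w ^ 2‖ := by
      have h1 : ‖(α : ℂ) * w ^ 2‖ = α * t ^ 2 := by
        simp [norm_mul, norm_pow, Complex.norm_real, abs_of_nonneg hα0, htdef]
      have h2 : ‖(1 : ℂ)‖ - ‖(α : ℂ) * w ^ 2‖ ≤ ‖1 - (α : ℂ) * w ^ 2‖ :=
        norm_sub_norm_le _ _
      simp only [norm_mul, Complex.norm_real, norm_pow,
        Real.norm_eq_abs, abs_of_nonneg hα0, norm_one] at h2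
      simpa [htdef, abs_of_nonneg hα0] using h2
    set q : ℂ := w / (1 - (α : ℂ) * w ^ 2) with hq
    have hqabs : ‖q‖ ≤ t / (1 - α * t ^ 2) := by
      rw [hq, norm_div]
      exact div_le_div_of_nonneg_left ht0 hdt hden
    have hmono : t / (1 - α * t ^ 2) ≤ r / (1 - α * r ^ 2) := by
      rw [div_le_div_iff₀ hdt hdr]
      nlinarith [mul_nonneg (sub_nonneg.2 htr) (mul_nonneg (mul_nonneg hα0 hr0) ht0),
        mul_nonneg hα0 (mul_nonneg hr0 ht0)]
    have hre : -‖q‖ ≤ q.re := by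
      have := abs_le.1 (Complex.abs_re_le_norm q)
      linarith [this.1]
    have hrw : (1 + z * deriv (deriv f) z / deriv f z).re = 1 + q.re := by
      rw [heq z hz]
      simp [hq, hwdef]
    rw [hrw]
    have heq1 : (1 - r - α * r ^ 2) / (1 - α * r ^ 2) = 1 - r / (1 - α * r ^ 2) := by
      rw [eq_sub_iff_add_eq, ← add_div, div_eq_one_iff_eq hdr.ne']
      ring
    rw [heq1]
    have : ‖q‖ ≤ r / (1 - α * r ^ 2) := le_trans hqabs hmono
    linarith
  refine ⟨key, ?_, ?_⟩
  · intro hαpos z hz hlt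
    have hzr : ‖z‖ < 1 := by simpa [Metric.mem_ball] using hz
    set r := ‖z‖ with hr
    have hr0 : 0 ≤ r := norm_nonneg z
    have hdr : 0 < 1 - α * r ^ 2 := hden_pos r hr0 hzr
    have hs : Real.sqrt (1 + 4 * α) ^ 2 = 1 + 4 * α := by
      rw [Real.sq_sqrt]; nlinarith
    have hs0 : 0 ≤ Real.sqrt (1 + 4 * α) := Real.sqrt_nonneg _
    have hnum : 0 < 1 - r - α * r ^ 2 := by
      have h2 : 2 * α * r < Real.sqrt (1 + 4 * α) - 1 := by
        have := (lt_div_iff₀ (by positivity : (0:ℝ) < 2 * α)).1 hlt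
        nlinarith
      have hp : 0 < (Real.sqrt (1 + 4 * α) - (2 * α * r + 1)) *
          (Real.sqrt (1 + 4 * α) + (2 * α * r + 1)) := by
        have h3 : 0 ≤ 2 * α * r := by positivity
        exact mul_pos (by linarith) (by linarith)
      nlinarith [hp, hs, hαpos, mul_pos hαpos hαpos]
    have := key z hz
    have hpos : 0 < (1 - r - α * r ^ 2) / (1 - α * r ^ 2) := div_pos hnum hdr
    linarith
  · intro hα z hz
    have hzr : ‖z‖ < 1 := by simpa [Metric.mem_ball] using hz
    have := key z hz
    rw [hα] at this
    simp only [zero_mul, sub_zero, div_one] at this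
    linarith
end

section
/- Let 0 ≤ α ≤ 1 and let f be in the class BK(α). Then the pre-Schwarzian norm of f satisfies ||P_f|| ≤ 1; that is, (1 − |z|²) |f''(z)/f'(z)| ≤ 1 for every z ∈ 𝔻. -/
open Metric Filter Topology

/-- For f ∈ BK(α), 0 ≤ α ≤ 1, the pre-Schwarzian norm satisfies ‖P_f‖ ≤ 1, i.e.
(1 − |z|²)|f''(z)/f'(z)| ≤ 1 for every z in the unit disk. -/
theorem stmt_16 (α : ℝ) (hα0 : 0 ≤ α) (hα1 : α ≤ 1)
    (f ω : ℂ → ℂ)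
    -- f is analytic on the unit disk with f(0) = 0, f'(0) = 1, f'(z) ≠ 0
    (hf : AnalyticOnNhd ℂ f (ball 0 1))
    (hf0 : f 0 = 0) (hf1 : deriv f 0 = 1)
    (hfz : ∀ z ∈ ball (0 : ℂ) 1, deriv f z ≠ 0)
    -- ω is a Schwarz function
    (hω : AnalyticOnNhd ℂ ω (ball 0 1))
    (hω0 : ω 0 = 0)
    (hωb : ∀ z ∈ ball (0 : ℂ) 1, ω z ∈ ball (0 : ℂ) 1)
    -- f ∈ BK(α): z f''(z)/f'(z) = ω(z)/(1 - α ω(z)²)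
    (heq : ∀ z ∈ ball (0 : ℂ) 1,
      z * deriv (deriv f) z / deriv f z = ω z / (1 - (α : ℂ) * ω z ^ 2)) :
    ∀ z ∈ ball (0 : ℂ) 1,
      (1 - ‖z‖ ^ 2) * ‖deriv (deriv f) z / deriv f z‖ ≤ 1 := by
  -- Schwarz lemma: |ω w| ≤ |w|
  have hsch : ∀ w ∈ ball (0 : ℂ) 1, ‖ω w‖ ≤ ‖w‖ := by
    intro w hw
    exact Complex.norm_le_norm_of_mapsTo_ball hω.differentiableOn (fun z hz => ball_subset_closedBall (hωb z hz)) hω0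
      (by simpa [mem_ball, dist_zero_right] using hw)
  -- key bound for w ≠ 0
  have hb : ∀ w ∈ ball (0 : ℂ) 1, w ≠ 0 →
      (1 - ‖w‖ ^ 2) * ‖deriv (deriv f) w / deriv f w‖ ≤ 1 := by
    intro w hw hw0
    have hwlt : ‖w‖ < 1 := by simpa [mem_ball, dist_zero_right] using hw
    have hwpos : 0 < ‖w‖ := norm_pos_iff.mpr hw0
    have hd : (0 : ℝ) < 1 - ‖w‖ ^ 2 := by nlinarith
    have hωw : ‖ω w‖ ≤ ‖w‖ := hsch w hw
    -- denominator lower bound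
    have hden : 1 - ‖w‖ ^ 2 ≤ ‖1 - (α : ℂ) * ω w ^ 2‖ := by
      have h1 : ‖(α : ℂ) * ω w ^ 2‖ = α * ‖ω w‖ ^ 2 := by
        simp [norm_mul, norm_pow, Complex.norm_real, abs_of_nonneg hα0]
      have h2 : ‖(1 : ℂ)‖ - ‖(α : ℂ) * ω w ^ 2‖ ≤ ‖(1 : ℂ) - (α : ℂ) * ω w ^ 2‖ :=
        norm_sub_norm_le _ _
      have h3 : α * ‖ω w‖ ^ 2 ≤ ‖w‖ ^ 2 := by
        have := sq_le_sq' (by linarith [norm_nonneg (ω w)] : -(‖w‖) ≤ ‖ω w‖) hωw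
        nlinarith [norm_nonneg (ω w), sq_nonneg (‖ω w‖)]
      simp only [norm_one] at h2
      rw [h1] at h2
      linarith
    have key : ‖w‖ * ‖deriv (deriv f) w / deriv f w‖
        ≤ ‖w‖ / (1 - ‖w‖ ^ 2) := by
      have : ‖w‖ * ‖deriv (deriv f) w / deriv f w‖
          = ‖ω w‖ / ‖1 - (α : ℂ) * ω w ^ 2‖ := by
        rw [← norm_mul, ← norm_div, mul_div_assoc' w _ _, heq w hw, norm_div]
      rw [this]
      exact div_le_div₀ (norm_nonneg w) hωw hd hden
    have key2 : ‖w‖ * ‖deriv (deriv f) w / deriv f w‖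
        * (1 - ‖w‖ ^ 2) ≤ ‖w‖ := (le_div_iff₀ hd).mp key
    nlinarith [norm_nonneg (deriv (deriv f) w / deriv f w)]
  intro z hz
  rcases eq_or_ne z 0 with rfl | hz0
  · -- continuity at 0
    have hball : ball (0 : ℂ) 1 ∈ 𝓝 (0 : ℂ) := ball_mem_nhds _ one_pos
    have hg : ContinuousAt (fun w => deriv (deriv f) w / deriv f w) 0 := by
      have h1 : ContinuousAt (deriv (deriv f)) 0 :=
        ((hf.deriv.deriv) 0 (by simp)).continuousAt
      have h2 : ContinuousAt (deriv f) 0 := ((hf.deriv) 0 (by simp)).continuousAt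
      exact h1.div h2 (by rw [hf1]; exact one_ne_zero)
    have hF : ContinuousAt (fun w : ℂ =>
        (1 - ‖w‖ ^ 2) * ‖deriv (deriv f) w / deriv f w‖) 0 := by
      exact ((continuous_const.sub (continuous_norm.pow 2)).continuousAt).mul
        (continuous_norm.continuousAt.comp hg)
    have tlim : Tendsto (fun w : ℂ =>
        (1 - ‖w‖ ^ 2) * ‖deriv (deriv f) w / deriv f w‖)
        (𝓝[≠] (0 : ℂ))
        (𝓝 ((1 - ‖(0 : ℂ)‖ ^ 2)
          * ‖deriv (deriv f) 0 / deriv f 0‖)) :=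
      hF.tendsto.mono_left nhdsWithin_le_nhds
    have hev : ∀ᶠ w in 𝓝[≠] (0 : ℂ),
        (1 - ‖w‖ ^ 2) * ‖deriv (deriv f) w / deriv f w‖ ≤ 1 := by
      have hmem : ∀ᶠ w in 𝓝[≠] (0 : ℂ), w ∈ ball (0 : ℂ) 1 :=
        eventually_nhdsWithin_of_eventually_nhds (eventually_of_mem hball fun _ h => h)
      filter_upwards [hmem, self_mem_nhdsWithin] with w hw hw0
      exact hb w hw hw0
    exact le_of_tendsto tlim hev
  · exact hb z hz hz0
end

section
/- Let 0 ≤ α ≤ 1 and let g be an analytic function on 𝔻 with g'(z) ≠ 0 for all z ∈ 𝔻 satisfying z g''(z)/g'(z) = z/(1 − αz²) for all z ∈ 𝔻 (so g ∈ BK(α)). Then the pre-Schwarzian norm of g equals 1: sup_{z ∈ 𝔻} (1 − |z|²) |g''(z)/g'(z)| = sup_{z ∈ 𝔻} (1 − |z|²)/|1 − αz²| = 1. Hence the bound ||P_f|| ≤ 1 on BK(α) is sharp. -/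
open Metric

/-- Key estimate: `1 - |z|² ≤ |1 - αz²|` and the latter is positive on the disc. -/
lemma aux_abs (α : ℝ) (hα0 : 0 ≤ α) (hα1 : α ≤ 1) (z : ℂ) (hz : ‖z‖ < 1) :
    1 - ‖z‖ ^ 2 ≤ ‖1 - (α : ℂ) * z ^ 2‖ ∧
      (0 : ℝ) < ‖1 - (α : ℂ) * z ^ 2‖ := by
  have hz2 : ‖z‖ ^ 2 < 1 := by
    have := norm_nonneg z
    nlinarith
  have h1 : ‖(α : ℂ) * z ^ 2‖ = α * ‖z‖ ^ 2 := by
    simp [norm_mul, norm_pow, Complex.norm_real, Real.norm_eq_abs, abs_of_nonneg hα0]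
  have h2 : ‖(α : ℂ) * z ^ 2‖ ≤ ‖z‖ ^ 2 := by
    rw [h1]
    nlinarith [sq_nonneg (‖z‖)]
  have h3 : 1 - ‖(α : ℂ) * z ^ 2‖ ≤ ‖1 - (α : ℂ) * z ^ 2‖ := by
    have := norm_sub_norm_le (1 : ℂ) ((α : ℂ) * z ^ 2)
    simpa using this
  constructor
  · linarith
  · linarith

/-- For g analytic on 𝔻 with g' ≠ 0 and z g''(z)/g'(z) = z/(1 − αz²) (the extremal
function of BK(α)), the pre-Schwarzian norm equals 1:
sup_{z ∈ 𝔻} (1 − |z|²)|g''(z)/g'(z)| = sup_{z ∈ 𝔻} (1 − |z|²)/|1 − αz²| = 1. -/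
theorem stmt_17 (α : ℝ) (hα0 : 0 ≤ α) (hα1 : α ≤ 1)
    (g : ℂ → ℂ)
    (hg : AnalyticOnNhd ℂ g (ball 0 1))
    (hgz : ∀ z ∈ ball (0 : ℂ) 1, deriv g z ≠ 0)
    (heq : ∀ z ∈ ball (0 : ℂ) 1,
      z * deriv (deriv g) z / deriv g z = z / (1 - (α : ℂ) * z ^ 2)) :
    IsLUB {x : ℝ | ∃ z ∈ ball (0 : ℂ) 1,
        x = (1 - ‖z‖ ^ 2) * ‖deriv (deriv g) z / deriv g z‖} 1
    ∧ IsLUB {x : ℝ | ∃ z ∈ ball (0 : ℂ) 1,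
        x = (1 - ‖z‖ ^ 2) / ‖1 - (α : ℂ) * z ^ 2‖} 1 := by
  have hball : ∀ z : ℂ, z ∈ ball (0 : ℂ) 1 ↔ ‖z‖ < 1 := by
    intro z; simp [mem_ball, dist_zero_right]
  have hden : ∀ z ∈ ball (0 : ℂ) 1, (1 - (α : ℂ) * z ^ 2) ≠ 0 := by
    intro z hz
    have := (aux_abs α hα0 hα1 z ((hball z).1 hz)).2
    intro h; rw [h] at this; simp at this
  -- value on the punctured disc
  have key' : ∀ z ∈ ball (0 : ℂ) 1, z ≠ 0 →
      deriv (deriv g) z / deriv g z = 1 / (1 - (α : ℂ) * z ^ 2) := by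
    intro z hz hz0
    have h := heq z hz
    rw [div_eq_div_iff (hgz z hz) (hden z hz)] at h
    rw [div_eq_div_iff (hgz z hz) (hden z hz)]
    have : z * (deriv (deriv g) z * (1 - (α : ℂ) * z ^ 2)) = z * (1 * deriv g z) := by
      ring_nf
      ring_nf at h
      linear_combination h
    exact mul_left_cancel₀ hz0 this
  have h0 : (0 : ℂ) ∈ ball (0 : ℂ) 1 := by simp
  -- continuity at 0 gives the value at 0
  have key0 : deriv (deriv g) 0 / deriv g 0 = 1 / (1 - (α : ℂ) * 0 ^ 2) := by
    have hg' : AnalyticOnNhd ℂ (deriv g) (ball (0 : ℂ) 1) := hg.deriv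
    have hg'' : AnalyticOnNhd ℂ (deriv (deriv g)) (ball (0 : ℂ) 1) := hg'.deriv
    have hF : ContinuousAt (fun z => deriv (deriv g) z / deriv g z) 0 :=
      ((hg'' 0 h0).continuousAt).div ((hg' 0 h0).continuousAt) (hgz 0 h0)
    have hG : ContinuousAt (fun z : ℂ => 1 / (1 - (α : ℂ) * z ^ 2)) 0 := by
      apply ContinuousAt.div continuousAt_const
      · fun_prop
      · exact hden 0 h0
    have hEq : (fun z => deriv (deriv g) z / deriv g z)
        =ᶠ[nhdsWithin (0 : ℂ) {(0:ℂ)}ᶜ] (fun z : ℂ => 1 / (1 - (α : ℂ) * z ^ 2)) := by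
      filter_upwards [mem_nhdsWithin_of_mem_nhds (isOpen_ball.mem_nhds h0),
        self_mem_nhdsWithin] with z hz hz0
      exact key' z hz hz0
    have hta : Filter.Tendsto (fun z => deriv (deriv g) z / deriv g z)
        (nhdsWithin (0 : ℂ) {(0:ℂ)}ᶜ) (nhds (deriv (deriv g) 0 / deriv g 0)) :=
      hF.tendsto.mono_left nhdsWithin_le_nhds
    have htb : Filter.Tendsto (fun z => deriv (deriv g) z / deriv g z)
        (nhdsWithin (0 : ℂ) {(0:ℂ)}ᶜ) (nhds (1 / (1 - (α : ℂ) * 0 ^ 2))) :=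
      (hG.tendsto.mono_left nhdsWithin_le_nhds).congr' hEq.symm
    exact tendsto_nhds_unique hta htb
  have key : ∀ z ∈ ball (0 : ℂ) 1,
      deriv (deriv g) z / deriv g z = 1 / (1 - (α : ℂ) * z ^ 2) := by
    intro z hz
    by_cases hz0 : z = 0
    · subst hz0; exact key0
    · exact key' z hz hz0
  -- the common value function
  have hval : ∀ z ∈ ball (0 : ℂ) 1,
      (1 - ‖z‖ ^ 2) * ‖deriv (deriv g) z / deriv g z‖
        = (1 - ‖z‖ ^ 2) / ‖1 - (α : ℂ) * z ^ 2‖ := by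
    intro z hz
    rw [key z hz, norm_div, norm_one, mul_one_div]
  have hub : ∀ z ∈ ball (0 : ℂ) 1,
      (1 - ‖z‖ ^ 2) / ‖1 - (α : ℂ) * z ^ 2‖ ≤ 1 := by
    intro z hz
    obtain ⟨h1, h2⟩ := aux_abs α hα0 hα1 z ((hball z).1 hz)
    exact div_le_one_of_le₀ h1 h2.le
  have h0val : (1 - ‖(0:ℂ)‖ ^ 2) / ‖1 - (α : ℂ) * 0 ^ 2‖ = 1 := by
    simp
  constructor
  · constructor
    · rintro x ⟨z, hz, rfl⟩
      rw [hval z hz]; exact hub z hz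
    · intro b hb
      have : (1:ℝ) ∈ {x : ℝ | ∃ z ∈ ball (0 : ℂ) 1,
          x = (1 - ‖z‖ ^ 2) * ‖deriv (deriv g) z / deriv g z‖} := by
        exact ⟨0, h0, by rw [hval 0 h0, h0val]⟩
      exact hb this
  · constructor
    · rintro x ⟨z, hz, rfl⟩
      exact hub z hz
    · intro b hb
      exact hb ⟨0, h0, h0val.symm⟩
end

section
/- Let 0 < α ≤ 1. Then sup_{z ∈ 𝔻} (1 − |z|²) |2 + z| / |(1 + z − αz²)(1 − αz²)| = ∞. Consequently, the function f₁ in BS(α) defined by z f₁'(z)/f₁(z) − 1 = z/(1 − αz²), whose pre-Schwarzian derivative is f₁''(z)/f₁'(z) = (2 + z)/((1 + z − αz²)(1 − αz²)), has infinite pre-Schwarzian norm ||P_{f₁}|| = ∞. -/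
open Metric Filter Topology

/-- For 0 < α ≤ 1, the family (1 − |z|²)|2 + z|/|(1 + z − αz²)(1 − αz²)|, z ∈ 𝔻 with
nonvanishing denominator, is unbounded above; consequently the function f₁ ∈ BS(α) with
pre-Schwarzian derivative f₁''/f₁' = (2 + z)/((1 + z − αz²)(1 − αz²)) has infinite
pre-Schwarzian norm ‖P_{f₁}‖ = ∞. -/
theorem stmt_18 (α : ℝ) (hα0 : 0 < α) (hα1 : α ≤ 1)
    (f : ℂ → ℂ)
    -- f₁ has pre-Schwarzian derivative (2 + z)/((1 + z − αz²)(1 − αz²))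
    (hf : ∀ z ∈ ball (0 : ℂ) 1,
      deriv (deriv f) z / deriv f z
        = (2 + z) / ((1 + z - (α : ℂ) * z ^ 2) * (1 - (α : ℂ) * z ^ 2))) :
    ¬ BddAbove {x : ℝ | ∃ z ∈ ball (0 : ℂ) 1,
        (1 + z - (α : ℂ) * z ^ 2) * (1 - (α : ℂ) * z ^ 2) ≠ 0 ∧
        x = (1 - ‖z‖ ^ 2) * ‖2 + z‖
          / ‖(1 + z - (α : ℂ) * z ^ 2) * (1 - (α : ℂ) * z ^ 2)‖}
    ∧ ¬ BddAbove {x : ℝ | ∃ z ∈ ball (0 : ℂ) 1,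
        x = (1 - ‖z‖ ^ 2) * ‖deriv (deriv f) z / deriv f z‖} := by
  -- Setup: the root z₀ of 1 + z − αz² in (−1, 0)
  set s := Real.sqrt (1 + 4*α) with hs
  have hs2 : s^2 = 1 + 4*α := Real.sq_sqrt (by linarith)
  have hs0 : 0 ≤ s := Real.sqrt_nonneg _
  have hs1 : 1 < s := by nlinarith
  set z₀ := (1 - s)/(2*α) with hz₀
  have hz₀neg : z₀ < 0 := div_neg_of_neg_of_pos (by linarith) (by linarith)
  have h2az : 2*α*z₀ = 1 - s := by rw [hz₀]; field_simp
  have hz₀gt : -1 < z₀ := by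
    rw [hz₀, lt_div_iff₀ (by linarith : (0:ℝ) < 2*α)]
    nlinarith
  have key : α * z₀^2 = 1 + z₀ := by nlinarith [h2az, hs2]
  -- d t is the real denominator at z = z₀ + t; e is its cofactor after extracting t
  set d : ℝ → ℝ := fun t => (1 + (z₀+t) - α*(z₀+t)^2) * (1 - α*(z₀+t)^2) with hdd
  set e : ℝ → ℝ := fun t => (s - α*t) * (1 - α*(z₀+t)^2) with hee
  have hd : ∀ t, d t = t * e t := by
    intro t
    simp only [hdd, hee]
    have h1 : 1 + z₀ - α*z₀^2 = 0 := by linarith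
    have h2 : (1:ℝ) - 2*α*z₀ = s := by linarith
    linear_combination (1 - α*(z₀+t)^2) * h1 + t*(1 - α*(z₀+t)^2) * h2
  have hd0 : d 0 = 0 := by rw [hd]; ring
  have he0 : 0 < e 0 := by
    have h : e 0 = s * (-z₀) := by simp only [hee]; linear_combination (-s) * key
    rw [h]
    exact mul_pos (by linarith) (by linarith)
  -- numerator
  set N : ℝ → ℝ := fun t => (1 - (z₀+t)^2) * |2 + (z₀+t)| with hNN
  have hc : 0 < N 0 := by
    have h1 : 0 < 1 - z₀^2 := by nlinarith
    have h2 : 0 < 2 + z₀ := by linarith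
    simp only [hNN, add_zero]
    have := abs_of_pos h2
    nlinarith [abs_of_pos h2]
  -- continuity
  have hdc : Continuous d := by simp only [hdd]; fun_prop
  have hec : Continuous e := by simp only [hee]; fun_prop
  have hNc : Continuous N := by
    simp only [hNN]
    exact (continuous_const.sub ((continuous_const.add continuous_id).pow 2)).mul
      ((continuous_const.add (continuous_const.add continuous_id)).abs)
  -- eventually facts on 𝓝[>] 0
  have hev_e : ∀ᶠ t in 𝓝[>] (0:ℝ), 0 < e t :=
    ((hec.tendsto 0).eventually (eventually_gt_nhds he0)).filter_mono nhdsWithin_le_nhds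
  have hev_t : ∀ᶠ t in 𝓝[>] (0:ℝ), 0 < t := self_mem_nhdsWithin
  have hev_d : ∀ᶠ t in 𝓝[>] (0:ℝ), 0 < d t := by
    filter_upwards [hev_e, hev_t] with t h1 h2
    rw [hd]; positivity
  -- |d| tends to 0 within (0, ∞)
  have hDt : Tendsto (fun t => |d t|) (𝓝[>] (0:ℝ)) (𝓝[>] (0:ℝ)) := by
    rw [tendsto_nhdsWithin_iff]
    constructor
    · have := (hdc.abs.tendsto 0).mono_left (nhdsWithin_le_nhds (s := Set.Ioi (0:ℝ)))
      simpa [hd0] using this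
    · filter_upwards [hev_d] with t h
      exact Set.mem_Ioi.mpr (abs_pos.mpr (ne_of_gt h))
  have hinv : Tendsto (fun t => (|d t|)⁻¹) (𝓝[>] (0:ℝ)) atTop :=
    tendsto_inv_nhdsGT_zero.comp hDt
  have hN : Tendsto N (𝓝[>] (0:ℝ)) (𝓝 (N 0)) :=
    (hNc.tendsto 0).mono_left nhdsWithin_le_nhds
  have hg : Tendsto (fun t => N t / |d t|) (𝓝[>] (0:ℝ)) atTop := by
    simp only [div_eq_mul_inv]
    exact hN.pos_mul_atTop hc hinv
  -- the first set is unbounded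
  have h1 : ¬ BddAbove {x : ℝ | ∃ z ∈ ball (0 : ℂ) 1,
      (1 + z - (α : ℂ) * z ^ 2) * (1 - (α : ℂ) * z ^ 2) ≠ 0 ∧
      x = (1 - ‖z‖ ^ 2) * ‖2 + z‖
        / ‖(1 + z - (α : ℂ) * z ^ 2) * (1 - (α : ℂ) * z ^ 2)‖} := by
    rw [not_bddAbove_iff]
    intro M
    have hev_small : ∀ᶠ t in 𝓝[>] (0:ℝ), t < 1 :=
      (eventually_lt_nhds one_pos).filter_mono nhdsWithin_le_nhds
    have := (hg.eventually (eventually_gt_atTop M)).and (hev_d.and (hev_t.and hev_small))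
    obtain ⟨t, hgt, hdt, ht0, ht1⟩ := this.exists
    have hx1 : -1 < z₀ + t := by linarith
    have hx2 : z₀ + t < 1 := by linarith
    have hcast : (1 + ((z₀+t : ℝ):ℂ) - (α : ℂ) * ((z₀+t : ℝ):ℂ) ^ 2)
        * (1 - (α : ℂ) * ((z₀+t : ℝ):ℂ) ^ 2) = ((d t : ℝ) : ℂ) := by
      simp only [hdd]; push_cast; ring
    refine ⟨N t / |d t|, ⟨((z₀+t : ℝ) : ℂ), ?_, ?_, ?_⟩, hgt⟩
    · simp only [mem_ball, dist_zero_right, Complex.norm_real, Real.norm_eq_abs]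
      exact abs_lt.mpr ⟨hx1, hx2⟩
    · rw [hcast]
      exact_mod_cast ne_of_gt hdt
    · rw [hcast]
      have e1 : ‖((d t : ℝ) : ℂ)‖ = |d t| := by rw [Complex.norm_real, Real.norm_eq_abs]
      have e2 : ‖(2:ℂ) + ((z₀+t : ℝ):ℂ)‖ = |2+(z₀+t)| := by
        rw [show (2:ℂ) + ((z₀+t : ℝ):ℂ) = ((2+(z₀+t) : ℝ):ℂ) by push_cast; ring,
          Complex.norm_real, Real.norm_eq_abs]
      have e3 : ‖((z₀+t : ℝ):ℂ)‖ ^ 2 = (z₀+t)^2 := by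
        rw [Complex.sq_norm, Complex.normSq_ofReal, sq]
      rw [e1, e2, e3]
  refine ⟨h1, fun hb => h1 (hb.mono ?_)⟩
  rintro x ⟨z, hz, hden, rfl⟩
  refine ⟨z, hz, ?_⟩
  rw [hf z hz, norm_div, mul_div_assoc]
end

section
/- Let 0 ≤ α ≤ 1 and let n be a positive integer. For α > 0, the function f_n(z) = z((1 + √α z^n)/(1 − √α z^n))^{1/(2n√α)} (with the analytic branch equal to z + higher-order terms, i.e., f_n(z) = z·exp((1/(2n√α))·log((1 + √α z^n)/(1 − √α z^n))) using the principal logarithm) is analytic on 𝔻 and satisfies z f_n'(z)/f_n(z) − 1 = z^n/(1 − α z^{2n}) for all z ∈ 𝔻; consequently f_n belongs to the class BS(α), with Schwarz function ω(z) = z^n. -/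
open Metric

lemma aux_slit19 {w : ℂ} (hw : ‖w‖ < 1) : (1 + w) / (1 - w) ∈ Complex.slitPlane := by
  have h1 : (1 : ℂ) - w ≠ 0 := by
    intro h
    have hw1 : w = 1 := by linear_combination -h
    rw [hw1] at hw; norm_num at hw
  have hN : 0 < Complex.normSq (1 - w) := Complex.normSq_pos.mpr h1
  have hsq : Complex.normSq w < 1 := by
    have h2 : Complex.normSq w = ‖w‖ ^ 2 := by
      rw [Complex.normSq_eq_norm_sq]
    nlinarith [norm_nonneg w]
  rw [Complex.mem_slitPlane_iff]
  left
  rw [Complex.div_re]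
  have h2 : (1 - w).re = 1 - w.re := by simp
  have h3 : (1 - w).im = -w.im := by simp
  have h4 : (1 + w).re = 1 + w.re := by simp
  have h5 : (1 + w).im = w.im := by simp
  rw [h2, h3, h4, h5, ← add_div]
  apply div_pos _ hN
  have h6 : Complex.normSq w = w.re ^ 2 + w.im ^ 2 := by
    rw [Complex.normSq_apply]; ring
  nlinarith

/-- For 0 < α ≤ 1 and n ≥ 1, the function
f_n(z) = z((1 + √α zⁿ)/(1 − √α zⁿ))^{1/(2n√α)}
(with the principal branch) is analytic on 𝔻, satisfies f_n(0) = 0, f_n'(0) = 1,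
f_n(z) ≠ 0 for 0 ≠ z ∈ 𝔻, and z f_n'(z)/f_n(z) − 1 = zⁿ/(1 − αz^{2n}) on 𝔻;
consequently f_n ∈ BS(α) with Schwarz function ω(z) = zⁿ. -/
theorem stmt_19 (α : ℝ) (hα0 : 0 < α) (hα1 : α ≤ 1) (n : ℕ) (hn : 1 ≤ n)
    (f : ℂ → ℂ)
    (hf : ∀ z : ℂ, f z = z * Complex.exp ((1 / (2 * n * (Real.sqrt α : ℂ))) *
      Complex.log ((1 + (Real.sqrt α : ℂ) * z ^ n) / (1 - (Real.sqrt α : ℂ) * z ^ n)))) :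
    AnalyticOnNhd ℂ f (ball 0 1)
    ∧ f 0 = 0
    ∧ deriv f 0 = 1
    ∧ (∀ z ∈ ball (0 : ℂ) 1, z ≠ 0 → f z ≠ 0)
    ∧ (∀ z ∈ ball (0 : ℂ) 1, z ≠ 0 →
        z * deriv f z / f z - 1 = z ^ n / (1 - (α : ℂ) * z ^ (2 * n))) := by
  have hfeq : f = fun z : ℂ => z * Complex.exp ((1 / (2 * n * (Real.sqrt α : ℂ))) *
      Complex.log ((1 + (Real.sqrt α : ℂ) * z ^ n) / (1 - (Real.sqrt α : ℂ) * z ^ n))) :=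
    funext hf
  subst hfeq
  set s : ℂ := (Real.sqrt α : ℂ) with hs_def
  set c : ℂ := 1 / (2 * n * s) with hc_def
  have hsr : (0:ℝ) < Real.sqrt α := Real.sqrt_pos.mpr hα0
  have hsne : s ≠ 0 := by
    rw [hs_def]; exact_mod_cast ne_of_gt hsr
  have hs2 : s ^ 2 = (α : ℂ) := by
    rw [hs_def]; norm_cast; exact Real.sq_sqrt hα0.le
  have hnne : (n : ℂ) ≠ 0 := Nat.cast_ne_zero.mpr (by omega)
  -- norm bound
  have hwlt : ∀ z ∈ ball (0:ℂ) 1, ‖s * z ^ n‖ < 1 := by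
    intro z hz
    rw [mem_ball_zero_iff] at hz
    have h1 : ‖s‖ ≤ 1 := by
      rw [hs_def, Complex.norm_real, Real.norm_eq_abs, abs_of_nonneg hsr.le]
      exact Real.sqrt_le_one.mpr hα1
    calc ‖s * z ^ n‖ = ‖s‖ * ‖z‖ ^ n := by rw [norm_mul, norm_pow]
      _ ≤ 1 * ‖z‖ ^ n := by
          apply mul_le_mul_of_nonneg_right h1 (by positivity)
      _ < 1 := by
          rw [one_mul]; exact pow_lt_one₀ (norm_nonneg z) hz (by omega)
  have hune : ∀ z ∈ ball (0:ℂ) 1, 1 + s * z ^ n ≠ 0 := by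
    intro z hz h
    have h1 : s * z ^ n = -1 := by linear_combination h
    have h2 := hwlt z hz
    rw [h1] at h2
    simp at h2
  have hvne : ∀ z ∈ ball (0:ℂ) 1, 1 - s * z ^ n ≠ 0 := by
    intro z hz h
    have h1 : s * z ^ n = 1 := by linear_combination -h
    have := hwlt z hz; rw [h1] at this
    simp at this
  have hslit : ∀ z ∈ ball (0:ℂ) 1,
      (1 + s * z ^ n) / (1 - s * z ^ n) ∈ Complex.slitPlane := fun z hz =>
    aux_slit19 (hwlt z hz)
  -- analyticity of inner pieces
  have haw : ∀ z : ℂ, AnalyticAt ℂ (fun z : ℂ => s * z ^ n) z := by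
    intro z
    exact analyticAt_const.mul ((analyticAt_id).pow n)
  have hq : ∀ z ∈ ball (0:ℂ) 1,
      AnalyticAt ℂ (fun z : ℂ => (1 + s * z ^ n) / (1 - s * z ^ n)) z := by
    intro z hz
    exact (analyticAt_const.add (haw z)).div (analyticAt_const.sub (haw z)) (hvne z hz)
  have hA : AnalyticOnNhd ℂ (fun z : ℂ => z * Complex.exp (c *
      Complex.log ((1 + s * z ^ n) / (1 - s * z ^ n)))) (ball 0 1) := by
    intro z hz
    exact analyticAt_id.mul
      ((analyticAt_const.mul ((hq z hz).clog (hslit z hz))).cexp)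
  -- derivative
  have hD : ∀ z ∈ ball (0:ℂ) 1, HasDerivAt
      (fun z : ℂ => z * Complex.exp (c *
        Complex.log ((1 + s * z ^ n) / (1 - s * z ^ n))))
      (Complex.exp (c * Complex.log ((1 + s * z ^ n) / (1 - s * z ^ n))) *
        (1 + z * (c * (((1 + s * z ^ n) / (1 - s * z ^ n))⁻¹ *
          ((s * (↑n * z ^ (n - 1)) * (1 - s * z ^ n) -
            (1 + s * z ^ n) * -(s * (↑n * z ^ (n - 1)))) / (1 - s * z ^ n) ^ 2)))))
      z := by
    intro z hz
    have hw : HasDerivAt (fun z : ℂ => s * z ^ n) (s * (↑n * z ^ (n - 1))) z :=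
      (hasDerivAt_pow n z).const_mul s
    have hu : HasDerivAt (fun z : ℂ => 1 + s * z ^ n) (s * (↑n * z ^ (n - 1))) z := by
      simpa using hw.const_add 1
    have hv : HasDerivAt (fun z : ℂ => 1 - s * z ^ n) (-(s * (↑n * z ^ (n - 1)))) z :=
      hw.const_sub 1
    have hqd := hu.div hv (hvne z hz)
    have hL := (Complex.hasDerivAt_log (hslit z hz)).comp z hqd
    have hE := ((hL.const_mul c).cexp)
    have := (hasDerivAt_id z).mul hE
    refine HasDerivAt.congr_deriv this ?_
    simp only [Function.comp, id_eq, Pi.div_apply]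
    ring
  refine ⟨hA, by simp, ?_, ?_, ?_⟩
  · -- deriv at 0
    have h0 : (0:ℂ) ∈ ball (0:ℂ) 1 := by simp
    have := (hD 0 h0).deriv
    rw [this]
    have hz0 : (0:ℂ) ^ n = 0 := zero_pow (by omega)
    simp [hz0]
  · intro z hz hz0
    exact mul_ne_zero hz0 (Complex.exp_ne_zero _)
  · intro z hz hz0
    rw [(hD z hz).deriv]
    set u : ℂ := 1 + s * z ^ n with hu_def
    set v : ℂ := 1 - s * z ^ n with hv_def
    set E : ℂ := Complex.exp (c * Complex.log (u / v)) with hE_def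
    set T : ℂ := c * ((u / v)⁻¹ *
      ((s * (↑n * z ^ (n - 1)) * v - u * -(s * (↑n * z ^ (n - 1)))) / v ^ 2)) with hT_def
    have hu : u ≠ 0 := hune z hz
    have hv : v ≠ 0 := hvne z hz
    have hEne : E ≠ 0 := Complex.exp_ne_zero _
    have huv : u * v = 1 - (α : ℂ) * z ^ (2 * n) := by
      rw [hu_def, hv_def, ← hs2, pow_mul]; ring
    have hzn : z * z ^ (n - 1) = z ^ n := by
      rw [← pow_succ']; congr 1; omega
    have h1 : z * (E * (1 + z * T)) / (z * E) = 1 + z * T := by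
      rw [show z * (E * (1 + z * T)) = z * E * (1 + z * T) by ring,
        mul_div_cancel_left₀ _ (mul_ne_zero hz0 hEne)]
    show z * (E * (1 + z * T)) / (z * E) - 1 = z ^ n / (1 - (α : ℂ) * z ^ (2 * n))
    rw [h1]
    have hgoal : z * T = z ^ n / (1 - (α : ℂ) * z ^ (2 * n)) := by
      rw [hT_def, hc_def, ← huv, ← hzn]
      field_simp
      ring
    rw [hgoal]
    ring
end
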